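/- arXiv:2308.11571 — 7 statements merged into one kernel-verified Lean document; each statement's English description precedes it below -/
import Mathlib

section
/- Let d, m ≥ 1 and let T_i ∈ Lie^i(ℂ^d) for 1 ≤ i ≤ m. Define a function c on words over the alphabet {1,…,d} by c(empty word) = 1 and, for a word w of length k ≥ 1, c(w) = the coordinate of the basis tensor e_{w₁}⊗⋯⊗e_{w_k} in φ_k(T₁,…,T_k) (where T_i := 0 for i > m). Then c satisfies the shuffle identity: for all words u and v, c(u)·c(v) = Σ_{w ∈ u⧢v} c(w), the sum taken with multiplicities over the multiset of shuffles of u and v. -/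
/-- Words over the alphabet `{1,…,d}`. -/
abbrev Word (d : ℕ) := List (Fin d)

/-- A tensor series over `ℂ^d` written in coordinates: the value at a word `w`
is the coefficient of the basis tensor `e_{w₁} ⊗ ⋯ ⊗ e_{w_k}`. -/
abbrev TSeries (d : ℕ) := Word d → ℂ

/-- Multiplication (tensor/concatenation product) of tensor series in
coordinates: `(S ⊗ T)(w) = Σ_{w = u·v} S(u)·T(v)`. -/
noncomputable def mulT {d : ℕ} (S T : TSeries d) : TSeries d :=
  fun w => ∑ i ∈ Finset.range (w.length + 1), S (w.take i) * T (w.drop i)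

/-- The unit tensor series `1`. -/
noncomputable def oneT {d : ℕ} : TSeries d := fun w => if w = [] then 1 else 0

/-- The product of a list of tensor series. -/
noncomputable def prodT {d : ℕ} : List (TSeries d) → TSeries d
  | [] => oneT
  | x :: L => mulT x (prodT L)

/-- The vector `v ∈ ℂ^d`, viewed as a tensor series concentrated on words of
length one. -/
noncomputable def singleT {d : ℕ} (v : Fin d → ℂ) : TSeries d := fun w =>
  match w with
  | [j] => v j
  | _ => 0

/-- `IsLieElem d i x` says that the series `x` is an iterated commutator of `i`
vectors of `ℂ^d`, where `[a,b] = a⊗b − b⊗a`. -/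
inductive IsLieElem (d : ℕ) : ℕ → TSeries d → Prop
  | base (v : Fin d → ℂ) : IsLieElem d 1 (singleT v)
  | bracket {a b : ℕ} {x y : TSeries d} :
      IsLieElem d a x → IsLieElem d b y → IsLieElem d (a + b) (mulT x y - mulT y x)

/-- `Lie^i(ℂ^d)`: the linear span of all iterated commutators of `i` vectors. -/
noncomputable def lieGradeC (d i : ℕ) : Submodule ℂ (TSeries d) :=
  Submodule.span ℂ {x | IsLieElem d i x}

/-- `φ_k(T₁,…,T_k) = Σ_α (1/ℓ!)·T_{α₁} ⊗ ⋯ ⊗ T_{α_ℓ}`, summing over all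
compositions `α = (α₁,…,α_ℓ)` of `k`: the degree-`k` component of
`exp(T₁ + T₂ + ⋯)`. -/
noncomputable def phiC (d k : ℕ) (T : ℕ → TSeries d) : TSeries d :=
  ∑ c : Composition k, ((c.length).factorial : ℂ)⁻¹ • prodT (c.blocks.map T)

/-- The multiset of shuffles (interleavings) of two words. -/
def shuffles {α : Type*} : List α → List α → Multiset (List α)
  | [], v => {v}
  | u, [] => {u}
  | a :: u, b :: v =>
      ((shuffles u (b :: v)).map (a :: ·)) + ((shuffles (a :: u) v).map (b :: ·))
termination_by u v => u.length + v.length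

lemma shuffles_nil_left {α} (v : List α) : shuffles [] v = {v} := by rw [shuffles]
lemma shuffles_nil_right {α} (u : List α) : shuffles u [] = {u} := by
  cases u
  · rw [shuffles]
  · rw [shuffles]
    simp
lemma shuffles_cons_cons {α} (a b : α) (u v : List α) :
    shuffles (a :: u) (b :: v) =
    ((shuffles u (b :: v)).map (a :: ·)) + ((shuffles (a :: u) v).map (b :: ·)) := by
  rw [shuffles]

lemma length_of_mem_shuffles {α} : ∀ (u v w : List α), w ∈ shuffles u v →
    w.length = u.length + v.length
  | [], v, w, h => by rw [shuffles_nil_left] at h; simp at h; simp [h]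
  | a :: u, [], w, h => by rw [shuffles_nil_right] at h; simp at h; simp [h]
  | a :: u, b :: v, w, h => by
      rw [shuffles_cons_cons] at h
      simp only [Multiset.mem_add, Multiset.mem_map] at h
      rcases h with ⟨w', hw', rfl⟩ | ⟨w', hw', rfl⟩
      · have := length_of_mem_shuffles u (b :: v) w' hw'
        simp [this]; omega
      · have := length_of_mem_shuffles (a :: u) v w' hw'
        simp [this]; omega
termination_by u v => u.length + v.length

noncomputable def Dser {d : ℕ} (S : TSeries d) (u v : Word d) : ℂ :=
  ((shuffles u v).map S).sum

section DserBasic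
variable {d : ℕ}

lemma Dser_nil_left (S : TSeries d) (v : Word d) : Dser S [] v = S v := by
  simp [Dser, shuffles_nil_left]

lemma Dser_nil_right (S : TSeries d) (u : Word d) : Dser S u [] = S u := by
  simp [Dser, shuffles_nil_right]

lemma Dser_cons_cons (S : TSeries d) (a b : Fin d) (u v : Word d) :
    Dser S (a :: u) (b :: v) =
      Dser (fun w => S (a :: w)) u (b :: v) + Dser (fun w => S (b :: w)) (a :: u) v := by
  simp [Dser, shuffles_cons_cons, Multiset.map_map, Function.comp]

lemma Dser_add (X Y : TSeries d) (u v : Word d) :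
    Dser (fun w => X w + Y w) u v = Dser X u v + Dser Y u v := by
  simp [Dser, Multiset.sum_map_add]

lemma Dser_mul_left (c : ℂ) (X : TSeries d) (u v : Word d) :
    Dser (fun w => c * X w) u v = c * Dser X u v := by
  simp [Dser, Multiset.sum_map_mul_left]

lemma Dser_sub (X Y : TSeries d) (u v : Word d) :
    Dser (X - Y) u v = Dser X u v - Dser Y u v := by
  simp [Dser, Pi.sub_apply, Multiset.sum_map_sub]

lemma Dser_zero (u v : Word d) : Dser (0 : TSeries d) u v = 0 := by
  simp [Dser]

lemma Dser_congr {X Y : TSeries d} (u v : Word d)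
    (h : ∀ w : Word d, w.length = u.length + v.length → X w = Y w) :
    Dser X u v = Dser Y u v := by
  unfold Dser
  congr 1
  exact Multiset.map_congr rfl (fun w hw => h w (length_of_mem_shuffles u v w hw))

lemma mulT_nil (S T : TSeries d) : mulT S T [] = S [] * T [] := by
  simp [mulT]

lemma mulT_cons (S T : TSeries d) (a : Fin d) (w : Word d) :
    mulT S T (a :: w) = S [] * T (a :: w) + mulT (fun x => S (a :: x)) T w := by
  simp only [mulT, List.length_cons]
  rw [Finset.sum_range_succ']
  simp [add_comm]

end DserBasic

open Finset in
lemma peel2 (G : ℕ → ℕ → ℂ) (N M : ℕ) :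
    (∑ i ∈ range (N+1), ∑ j ∈ range (M+1), G i j)
    = (∑ i ∈ range N, ∑ j ∈ range M, G (i+1) (j+1))
      + (∑ i ∈ range N, G (i+1) 0) + (∑ j ∈ range M, G 0 (j+1)) + G 0 0 := by
  simp only [Finset.sum_range_succ', Finset.sum_add_distrib]
  ring

open Finset in
lemma Dser_mulT_aux {d : ℕ} : ∀ (n : ℕ) (u v : Word d), u.length + v.length ≤ n →
    ∀ S T : TSeries d,
    Dser (mulT S T) u v = ∑ i ∈ range (u.length+1), ∑ j ∈ range (v.length+1),
      Dser S (u.take i) (v.take j) * Dser T (u.drop i) (v.drop j) := by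
  intro n
  induction n with
  | zero =>
    intro u v h S T
    have hu : u = [] := by simpa using (by omega : u.length = 0)
    have hv : v = [] := by simpa using (by omega : v.length = 0)
    subst hu; subst hv
    simp [Dser_nil_left, mulT_nil]
  | succ n ih =>
    intro u v h S T
    match u, v with
    | [], v =>
      simp only [List.length_nil, List.take_nil, List.drop_nil, zero_add,
        Finset.range_one, Finset.sum_singleton]
      simp [Dser_nil_left, mulT]
    | a :: u', [] =>
      simp only [List.length_nil, Finset.range_one, Finset.sum_singleton,
        List.take_nil, List.drop_nil]
      simp [Dser_nil_right, mulT]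
    | a :: u', b :: v' =>
      have hu' : u'.length + (b :: v').length ≤ n := by simp at h ⊢; omega
      have hv' : (a :: u').length + v'.length ≤ n := by simp at h ⊢; omega
      set n1 := u'.length with hn1
      set n2 := v'.length with hn2
      set Sa : TSeries d := fun w => S (a :: w) with hSa
      set Sb : TSeries d := fun w => S (b :: w) with hSb
      set A := ∑ i ∈ range (n1+1), ∑ j ∈ range (n2+1),
        Dser Sa (u'.take i) (b :: v'.take j) * Dser T (u'.drop i) (v'.drop j) with hA
      set B := ∑ i ∈ range (n1+1), ∑ j ∈ range (n2+1),
        Dser Sb (a :: u'.take i) (v'.take j) * Dser T (u'.drop i) (v'.drop j) with hB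
      set C1 := ∑ i ∈ range (n1+1), Sa (u'.take i) * Dser T (u'.drop i) (b :: v') with hC1
      set C2 := ∑ j ∈ range (n2+1), Sb (v'.take j) * Dser T (a :: u') (v'.drop j) with hC2
      set E := S [] * Dser T (a :: u') (b :: v') with hE
      -- (α)
      have alpha : Dser (mulT Sa T) u' (b :: v') = A + C1 := by
        rw [ih u' (b :: v') hu' Sa T]
        have : ∀ i ∈ range (n1+1), (∑ j ∈ range ((b :: v').length + 1),
            Dser Sa (u'.take i) ((b :: v').take j) * Dser T (u'.drop i) ((b :: v').drop j))
            = (∑ j ∈ range (n2+1),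
                Dser Sa (u'.take i) (b :: v'.take j) * Dser T (u'.drop i) (v'.drop j))
              + Sa (u'.take i) * Dser T (u'.drop i) (b :: v') := by
          intro i _
          rw [show (b :: v').length + 1 = (n2+1) + 1 by simp [hn2]]
          rw [Finset.sum_range_succ']
          simp [Dser_nil_right]
        rw [Finset.sum_congr rfl this, Finset.sum_add_distrib]
      -- (β)
      have beta : Dser (mulT Sb T) (a :: u') v' = B + C2 := by
        rw [ih (a :: u') v' hv' Sb T]
        rw [show (a :: u').length + 1 = (n1+1) + 1 by simp [hn1]]
        rw [Finset.sum_range_succ']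
        have p1 : (∑ i ∈ range (n1+1), ∑ j ∈ range (v'.length+1),
            Dser Sb ((a :: u').take (i+1)) (v'.take j) * Dser T ((a :: u').drop (i+1)) (v'.drop j))
            = B := by
          rw [hB]
          apply Finset.sum_congr rfl; intro i _
          apply Finset.sum_congr rfl; intro j _
          simp
        have p2 : (∑ j ∈ range (v'.length+1),
            Dser Sb ((a :: u').take 0) (v'.take j) * Dser T ((a :: u').drop 0) (v'.drop j)) = C2 := by
          rw [hC2]
          apply Finset.sum_congr rfl; intro j _
          simp only [List.take_zero, List.drop_zero]
          rw [Dser_nil_left]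
        rw [p1, p2]
      -- LHS
      have e1 : Dser (fun w => mulT S T (a :: w)) u' (b :: v')
          = S [] * Dser (fun w => T (a :: w)) u' (b :: v') + Dser (mulT Sa T) u' (b :: v') := by
        rw [show (fun w => mulT S T (a :: w))
            = fun w => (S [] * T (a :: w)) + (mulT Sa T) w from funext (mulT_cons S T a)]
        rw [Dser_add, Dser_mul_left]
      have e2 : Dser (fun w => mulT S T (b :: w)) (a :: u') v'
          = S [] * Dser (fun w => T (b :: w)) (a :: u') v' + Dser (mulT Sb T) (a :: u') v' := by
        rw [show (fun w => mulT S T (b :: w))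
            = fun w => (S [] * T (b :: w)) + (mulT Sb T) w from funext (mulT_cons S T b)]
        rw [Dser_add, Dser_mul_left]
      have lhs : Dser (mulT S T) (a :: u') (b :: v') = E + (A + C1) + (B + C2) := by
        rw [Dser_cons_cons (mulT S T), e1, e2, alpha, beta, hE,
          Dser_cons_cons T a b u' v']
        ring
      rw [lhs]
      -- RHS
      rw [show (a :: u').length + 1 = (n1+1)+1 by simp [hn1],
          show (b :: v').length + 1 = (n2+1)+1 by simp [hn2]]
      rw [peel2 (fun i j => Dser S ((a :: u').take i) ((b :: v').take j)
            * Dser T ((a :: u').drop i) ((b :: v').drop j)) (n1+1) (n2+1)]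
      have r1 : (∑ i ∈ range (n1+1), ∑ j ∈ range (n2+1),
          Dser S ((a :: u').take (i+1)) ((b :: v').take (j+1))
            * Dser T ((a :: u').drop (i+1)) ((b :: v').drop (j+1))) = A + B := by
        rw [hA, hB, ← Finset.sum_add_distrib]
        apply Finset.sum_congr rfl
        intro i _
        rw [← Finset.sum_add_distrib]
        apply Finset.sum_congr rfl
        intro j _
        simp only [List.take_succ_cons, List.drop_succ_cons]
        rw [Dser_cons_cons S a b (u'.take i) (v'.take j), add_mul]
      have r2 : (∑ i ∈ range (n1+1),
          Dser S ((a :: u').take (i+1)) ((b :: v').take 0)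
            * Dser T ((a :: u').drop (i+1)) ((b :: v').drop 0)) = C1 := by
        apply Finset.sum_congr rfl
        intro i _
        simp [Dser_nil_right, hSa]
      have r3 : (∑ j ∈ range (n2+1),
          Dser S ((a :: u').take 0) ((b :: v').take (j+1))
            * Dser T ((a :: u').drop 0) ((b :: v').drop (j+1))) = C2 := by
        apply Finset.sum_congr rfl
        intro j _
        simp [Dser_nil_left, hSb]
      have r4 : Dser S ((a :: u').take 0) ((b :: v').take 0)
          * Dser T ((a :: u').drop 0) ((b :: v').drop 0) = E := by
        simp [Dser_nil_left, hE]
      rw [r1, r2, r3, r4]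
      ring

open Finset in
lemma Dser_mulT {d : ℕ} (S T : TSeries d) (u v : Word d) :
    Dser (mulT S T) u v = ∑ i ∈ range (u.length+1), ∑ j ∈ range (v.length+1),
      Dser S (u.take i) (v.take j) * Dser T (u.drop i) (v.drop j) :=
  Dser_mulT_aux (u.length + v.length) u v le_rfl S T

/-- Primitive series. -/
def PrimT {d : ℕ} (x : TSeries d) : Prop :=
  x [] = 0 ∧ ∀ u v : Word d, u ≠ [] → v ≠ [] → Dser x u v = 0

section Prim
variable {d : ℕ}
open Finset

lemma take_ne_nil {α} {u : List α} {i : ℕ} (hu : u ≠ []) (hi : 1 ≤ i) :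
    u.take i ≠ [] := by
  cases u with
  | nil => simp at hu
  | cons a t => cases i with
    | zero => omega
    | succ n => simp

lemma drop_ne_nil {α} {u : List α} {i : ℕ} (hi : i < u.length) : u.drop i ≠ [] := by
  have : (u.drop i).length = u.length - i := List.length_drop
  intro h
  rw [h] at this
  simp at this
  omega

lemma Dser_mulT_of_prim_prim {x y : TSeries d} (hx : PrimT x) (hy : PrimT y)
    (u v : Word d) (hu : u ≠ []) (hv : v ≠ []) :
    Dser (mulT x y) u v = x u * y v + x v * y u := by
  have hul : 1 ≤ u.length := List.length_pos_iff.mpr hu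
  have hvl : 1 ≤ v.length := List.length_pos_iff.mpr hv
  rw [Dser_mulT]
  have key : ∀ i ∈ range (u.length + 1), ∀ j ∈ range (v.length + 1),
      Dser x (u.take i) (v.take j) * Dser y (u.drop i) (v.drop j)
      = (if i = 0 then (if j = v.length then x v * y u else 0) else 0)
        + (if i = u.length then (if j = 0 then x u * y v else 0) else 0) := by
    intro i hi j hj
    simp only [mem_range] at hi hj
    by_cases hi0 : i = 0
    · subst hi0
      simp only [List.take_zero, List.drop_zero, Dser_nil_left, if_pos rfl,
        if_neg (by omega : ¬ (0 : ℕ) = u.length), add_zero]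
      by_cases hjv : j = v.length
      · subst hjv
        rw [List.take_length, List.drop_length, Dser_nil_right]
        simp
      · rw [if_neg hjv]
        by_cases hj0 : j = 0
        · subst hj0
          rw [List.take_zero, List.drop_zero, hx.1, zero_mul]
          simp
        · rw [hy.2 u (v.drop j) hu (drop_ne_nil (by omega)), mul_zero]
          simp
    · rw [if_neg hi0, zero_add]
      have h1 : u.take i ≠ [] := take_ne_nil hu (by omega)
      by_cases hj0 : j = 0
      · subst hj0
        simp only [List.take_zero, List.drop_zero, Dser_nil_right, if_pos rfl]
        by_cases hiu : i = u.length
        · subst hiu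
          rw [List.take_length, List.drop_length, Dser_nil_left]
          simp
        · rw [if_neg hiu, hy.2 (u.drop i) v (drop_ne_nil (by omega)) hv, mul_zero]
      · rw [hx.2 (u.take i) (v.take j) h1 (take_ne_nil hv (by omega)), zero_mul]
        by_cases hiu : i = u.length
        · rw [if_pos hiu, if_neg hj0]
        · rw [if_neg hiu]
  rw [Finset.sum_congr rfl (fun i hi => Finset.sum_congr rfl (fun j hj => key i hi j hj))]
  have s1 : (∑ i ∈ range (u.length+1), ∑ j ∈ range (v.length+1),
      (if i = 0 then (if j = v.length then x v * y u else 0) else 0)) = x v * y u := by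
    have inner : ∀ i ∈ range (u.length+1), (∑ j ∈ range (v.length+1),
        (if i = 0 then (if j = v.length then x v * y u else 0) else 0))
        = (if i = 0 then x v * y u else 0) := by
      intro i _
      by_cases h : i = 0
      · simp [h, Finset.sum_ite_eq']
      · simp [h]
    rw [Finset.sum_congr rfl inner]
    simp [Finset.sum_ite_eq']
  have s2 : (∑ i ∈ range (u.length+1), ∑ j ∈ range (v.length+1),
      (if i = u.length then (if j = 0 then x u * y v else 0) else 0)) = x u * y v := by
    have inner : ∀ i ∈ range (u.length+1), (∑ j ∈ range (v.length+1),
        (if i = u.length then (if j = 0 then x u * y v else 0) else 0))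
        = (if i = u.length then x u * y v else 0) := by
      intro i _
      by_cases h : i = u.length
      · simp [h, Finset.sum_ite_eq']
      · simp [h]
    rw [Finset.sum_congr rfl inner]
    simp [Finset.sum_ite_eq']
  simp only [Finset.sum_add_distrib, s1, s2]
  ring

lemma primT_zero : PrimT (0 : TSeries d) := ⟨rfl, fun u v _ _ => Dser_zero u v⟩

lemma primT_add {x y : TSeries d} (hx : PrimT x) (hy : PrimT y) : PrimT (x + y) := by
  refine ⟨by simp [Pi.add_apply, hx.1, hy.1], fun u v hu hv => ?_⟩
  have : Dser (x + y) u v = Dser x u v + Dser y u v := by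
    have : (x + y) = fun w => x w + y w := rfl
    rw [this, Dser_add]
  rw [this, hx.2 u v hu hv, hy.2 u v hu hv, add_zero]

lemma primT_smul (c : ℂ) {x : TSeries d} (hx : PrimT x) : PrimT (c • x) := by
  refine ⟨by simp [Pi.smul_apply, hx.1], fun u v hu hv => ?_⟩
  have : Dser (c • x) u v = c * Dser x u v := by
    have : (c • x) = fun w => c * x w := rfl
    rw [this, Dser_mul_left]
  rw [this, hx.2 u v hu hv, mul_zero]

lemma primT_sub {x y : TSeries d} (hx : PrimT x) (hy : PrimT y) : PrimT (x - y) := by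
  refine ⟨by simp [Pi.sub_apply, hx.1, hy.1], fun u v hu hv => ?_⟩
  rw [Dser_sub, hx.2 u v hu hv, hy.2 u v hu hv, sub_zero]

lemma singleT_eq_zero {v : Fin d → ℂ} {w : Word d} (h : w.length ≠ 1) :
    singleT v w = 0 := by
  match w with
  | [] => rfl
  | [j] => simp at h
  | a :: b :: t => rfl

lemma primT_singleT (v : Fin d → ℂ) : PrimT (singleT v) := by
  refine ⟨rfl, fun u w hu hw => ?_⟩
  unfold Dser
  rw [Multiset.sum_eq_zero]
  intro c hc
  simp only [Multiset.mem_map] at hc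
  obtain ⟨z, hz, rfl⟩ := hc
  apply singleT_eq_zero
  have := length_of_mem_shuffles u w z hz
  have hu1 : 1 ≤ u.length := by cases u; simp at hu; simp
  have hw1 : 1 ≤ w.length := by cases w; simp at hw; simp
  omega

lemma mulT_apply_nil (x y : TSeries d) : (mulT x y) [] = x [] * y [] := mulT_nil x y

lemma primT_of_isLie {i : ℕ} {x : TSeries d} (h : IsLieElem d i x) : PrimT x := by
  induction h with
  | base v => exact primT_singleT v
  | bracket hx hy ihx ihy =>
    rename_i a b x' y'
    refine ⟨?_, fun u v hu hv => ?_⟩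
    · simp [Pi.sub_apply, mulT_apply_nil, ihx.1, ihy.1]
    · rw [Dser_sub, Dser_mulT_of_prim_prim ihx ihy u v hu hv,
        Dser_mulT_of_prim_prim ihy ihx u v hu hv]
      ring

lemma primT_of_mem_lieGrade {i : ℕ} {x : TSeries d} (h : x ∈ lieGradeC d i) : PrimT x := by
  induction h using Submodule.span_induction with
  | mem x hx => exact primT_of_isLie hx
  | zero => exact primT_zero
  | add x y _ _ hx hy => exact primT_add hx hy
  | smul c x _ hx => exact primT_smul c hx

end Prim

/-- Homogeneous of degree `i`. -/
def HomT {d : ℕ} (i : ℕ) (x : TSeries d) : Prop :=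
  ∀ w : Word d, w.length ≠ i → x w = 0

section Hom
variable {d : ℕ}
open Finset

lemma homT_zero (i : ℕ) : HomT i (0 : TSeries d) := fun _ _ => rfl

lemma homT_add {i : ℕ} {x y : TSeries d} (hx : HomT i x) (hy : HomT i y) :
    HomT i (x + y) := fun w hw => by
  simp [Pi.add_apply, hx w hw, hy w hw]

lemma homT_smul {i : ℕ} (c : ℂ) {x : TSeries d} (hx : HomT i x) : HomT i (c • x) :=
  fun w hw => by simp [Pi.smul_apply, hx w hw]

lemma homT_sub {i : ℕ} {x y : TSeries d} (hx : HomT i x) (hy : HomT i y) :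
    HomT i (x - y) := fun w hw => by
  simp [Pi.sub_apply, hx w hw, hy w hw]

lemma homT_singleT (v : Fin d → ℂ) : HomT 1 (singleT v) := fun _ hw => singleT_eq_zero hw

lemma homT_mulT {a b : ℕ} {x y : TSeries d} (hx : HomT a x) (hy : HomT b y) :
    HomT (a + b) (mulT x y) := by
  intro w hw
  unfold mulT
  apply Finset.sum_eq_zero
  intro i hi
  simp only [mem_range] at hi
  by_cases h1 : (w.take i).length = a
  · by_cases h2 : (w.drop i).length = b
    · exfalso
      rw [List.length_take] at h1
      rw [List.length_drop] at h2
      omega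
    · rw [hy _ h2, mul_zero]
  · rw [hx _ h1, zero_mul]

lemma homT_of_isLie {i : ℕ} {x : TSeries d} (h : IsLieElem d i x) : HomT i x := by
  induction h with
  | base v => exact homT_singleT v
  | bracket hx hy ihx ihy =>
    exact homT_sub (homT_mulT ihx ihy) (by
      have := homT_mulT ihy ihx
      rwa [Nat.add_comm] at this)

lemma homT_of_mem_lieGrade {i : ℕ} {x : TSeries d} (h : x ∈ lieGradeC d i) : HomT i x := by
  induction h using Submodule.span_induction with
  | mem x hx => exact homT_of_isLie hx
  | zero => exact homT_zero i
  | add x y _ _ hx hy => exact homT_add hx hy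
  | smul c x _ hx => exact homT_smul c hx

end Hom

/-- Powers of a series. -/
noncomputable def powS {d : ℕ} (S : TSeries d) : ℕ → TSeries d
  | 0 => oneT
  | n+1 => mulT S (powS S n)

section Pow
variable {d : ℕ} {S : TSeries d}
open Finset

lemma powS_nil_eq_zero (hS0 : S [] = 0) : ∀ {n : ℕ}, 0 < n → powS S n [] = 0 := by
  intro n hn
  match n, hn with
  | n+1, _ =>
    show mulT S (powS S n) [] = 0
    rw [mulT_nil, hS0, zero_mul]

lemma powS_eq_zero_of_short (hS0 : S [] = 0) :
    ∀ (n : ℕ) (w : Word d), w.length < n → powS S n w = 0 := by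
  intro n
  induction n with
  | zero => intro w h; omega
  | succ n ih =>
    intro w h
    show mulT S (powS S n) w = 0
    unfold mulT
    apply Finset.sum_eq_zero
    intro i hi
    simp only [mem_range] at hi
    rcases Nat.eq_zero_or_pos i with rfl | hi1
    · rw [List.take_zero, hS0, zero_mul]
    · rw [ih (w.drop i) (by rw [List.length_drop]; omega), mul_zero]

lemma mulT_eval (S X : TSeries d) (w : Word d) :
    mulT S X w = ∑ i ∈ range (w.length + 1), S (w.take i) * X (w.drop i) := rfl

lemma powS_succ_eval (hS0 : S [] = 0) (n : ℕ) (w : Word d) :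
    powS S (n+1) w = ∑ i ∈ range w.length, S (w.take (i+1)) * powS S n (w.drop (i+1)) := by
  show mulT S (powS S n) w = _
  rw [mulT_eval, Finset.sum_range_succ']
  rw [List.take_zero, hS0, zero_mul, add_zero]

lemma Dser_mulT_prim (hS : PrimT S) (X : TSeries d) (u v : Word d) :
    Dser (mulT S X) u v
      = (∑ i ∈ range u.length, S (u.take (i+1)) * Dser X (u.drop (i+1)) v)
        + ∑ j ∈ range v.length, S (v.take (j+1)) * Dser X u (v.drop (j+1)) := by
  rw [Dser_mulT, peel2 (fun i j => Dser S (u.take i) (v.take j) * Dser X (u.drop i) (v.drop j))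
    u.length v.length]
  have z1 : (∑ i ∈ range u.length, ∑ j ∈ range v.length,
      Dser S (u.take (i+1)) (v.take (j+1)) * Dser X (u.drop (i+1)) (v.drop (j+1))) = 0 := by
    apply Finset.sum_eq_zero; intro i hi
    apply Finset.sum_eq_zero; intro j hj
    simp only [mem_range] at hi hj
    have hu : u ≠ [] := by intro h; rw [h] at hi; simp at hi
    have hv : v ≠ [] := by intro h; rw [h] at hj; simp at hj
    rw [hS.2 _ _ (take_ne_nil hu (by omega)) (take_ne_nil hv (by omega)), zero_mul]
  simp only [List.take_zero, List.drop_zero, Dser_nil_left, Dser_nil_right]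
  rw [z1, hS.1, zero_mul]
  ring

/-- `Dser` of a power of a primitive element: binomial formula. -/
lemma Dser_powS (hS : PrimT S) : ∀ (n : ℕ) (u v : Word d),
    Dser (powS S n) u v
      = ∑ p ∈ range (n+1), (n.choose p : ℂ) * (powS S p u * powS S (n-p) v) := by
  intro n
  induction n with
  | zero =>
    intro u v
    rw [show (0:ℕ)+1 = 1 from rfl, Finset.sum_range_one]
    norm_num
    show Dser oneT u v = oneT u * oneT v
    rcases eq_or_ne u [] with rfl | hu
    · rw [Dser_nil_left]
      show _ = (if ([] : Word d) = [] then (1:ℂ) else 0) * _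
      rw [if_pos rfl, one_mul]
    · rcases eq_or_ne v [] with rfl | hv
      · rw [Dser_nil_right]
        show _ = _ * (if ([] : Word d) = [] then (1:ℂ) else 0)
        rw [if_pos rfl, mul_one]
      · have h1 : oneT u = (0:ℂ) := if_neg hu
        rw [h1, zero_mul]
        unfold Dser
        apply Multiset.sum_eq_zero
        intro c hc
        simp only [Multiset.mem_map] at hc
        obtain ⟨z, hz, rfl⟩ := hc
        have hlz := length_of_mem_shuffles u v z hz
        have : z ≠ [] := by
          intro h
          rw [h, List.length_nil] at hlz
          exact hu (List.eq_nil_of_length_eq_zero (by omega))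
        exact if_neg this
  | succ n ih =>
    intro u v
    have hS0 := hS.1
    have step : Dser (powS S (n+1)) u v
        = (∑ i ∈ range u.length, S (u.take (i+1)) * Dser (powS S n) (u.drop (i+1)) v)
          + ∑ j ∈ range v.length, S (v.take (j+1)) * Dser (powS S n) u (v.drop (j+1)) :=
      Dser_mulT_prim hS (powS S n) u v
    rw [step]
    have part1 : (∑ i ∈ range u.length, S (u.take (i+1)) * Dser (powS S n) (u.drop (i+1)) v)
        = ∑ p ∈ range (n+1), (n.choose p : ℂ) * (powS S (p+1) u * powS S (n-p) v) := by
      calc (∑ i ∈ range u.length, S (u.take (i+1)) * Dser (powS S n) (u.drop (i+1)) v)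
          = ∑ i ∈ range u.length, ∑ p ∈ range (n+1),
              (n.choose p : ℂ) * (S (u.take (i+1)) * powS S p (u.drop (i+1)) * powS S (n-p) v) := by
            apply Finset.sum_congr rfl; intro i _
            rw [ih (u.drop (i+1)) v, Finset.mul_sum]
            apply Finset.sum_congr rfl; intro p _
            ring
        _ = ∑ p ∈ range (n+1), ∑ i ∈ range u.length,
              (n.choose p : ℂ) * (S (u.take (i+1)) * powS S p (u.drop (i+1)) * powS S (n-p) v) :=
            Finset.sum_comm
        _ = ∑ p ∈ range (n+1), (n.choose p : ℂ) * (powS S (p+1) u * powS S (n-p) v) := by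
            apply Finset.sum_congr rfl; intro p _
            rw [powS_succ_eval hS0 p u, Finset.sum_mul, Finset.mul_sum]
    have part2 : (∑ j ∈ range v.length, S (v.take (j+1)) * Dser (powS S n) u (v.drop (j+1)))
        = ∑ p ∈ range (n+1), (n.choose p : ℂ) * (powS S p u * powS S (n-p+1) v) := by
      calc (∑ j ∈ range v.length, S (v.take (j+1)) * Dser (powS S n) u (v.drop (j+1)))
          = ∑ j ∈ range v.length, ∑ p ∈ range (n+1),
              (n.choose p : ℂ) * (powS S p u * (S (v.take (j+1)) * powS S (n-p) (v.drop (j+1)))) := by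
            apply Finset.sum_congr rfl; intro j _
            rw [ih u (v.drop (j+1)), Finset.mul_sum]
            apply Finset.sum_congr rfl; intro p _
            ring
        _ = ∑ p ∈ range (n+1), ∑ j ∈ range v.length,
              (n.choose p : ℂ) * (powS S p u * (S (v.take (j+1)) * powS S (n-p) (v.drop (j+1)))) :=
            Finset.sum_comm
        _ = ∑ p ∈ range (n+1), (n.choose p : ℂ) * (powS S p u * powS S (n-p+1) v) := by
            apply Finset.sum_congr rfl; intro p _
            rw [powS_succ_eval hS0 (n-p) v, Finset.mul_sum, Finset.mul_sum]
    rw [part1, part2]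
    conv_rhs => rw [Finset.sum_range_succ']
    have e1 : ∀ p ∈ range (n+1),
        ((n+1).choose (p+1) : ℂ) * (powS S (p+1) u * powS S (n+1-(p+1)) v)
        = (n.choose p : ℂ) * (powS S (p+1) u * powS S (n-p) v)
          + (n.choose (p+1) : ℂ) * (powS S (p+1) u * powS S (n-p) v) := by
      intro p _
      have hnp : (n+1) - (p+1) = n - p := by omega
      rw [hnp, Nat.choose_succ_succ, Nat.cast_add, add_mul]
    rw [Finset.sum_congr rfl e1, Finset.sum_add_distrib]
    have e2 : (∑ p ∈ range (n+1), (n.choose p : ℂ) * (powS S p u * powS S (n-p+1) v))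
        = (∑ p ∈ range (n+1), (n.choose (p+1) : ℂ) * (powS S (p+1) u * powS S (n-p) v))
          + ((n+1).choose 0 : ℂ) * (powS S 0 u * powS S (n+1-0) v) := by
      rw [Finset.sum_range_succ']
      congr 1
      · conv_rhs => rw [Finset.sum_range_succ]
        rw [Nat.choose_succ_self, Nat.cast_zero, zero_mul, add_zero]
        apply Finset.sum_congr rfl; intro p hp
        simp only [mem_range] at hp
        have : n - (p+1) + 1 = n - p := by omega
        rw [this]
      · norm_num
    rw [e2]
    ring

end Pow

/-- The exponential-type series of `S` (degreewise). -/
noncomputable def Gs {d : ℕ} (S : TSeries d) : TSeries d :=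
  fun w => ∑ ℓ ∈ Finset.range (w.length + 1), ((ℓ.factorial : ℂ))⁻¹ * powS S ℓ w

section Gs
variable {d : ℕ} {S : TSeries d}
open Finset

lemma Gs_def (w : Word d) :
    Gs S w = ∑ ℓ ∈ range (w.length + 1), ((ℓ.factorial : ℂ))⁻¹ * powS S ℓ w := rfl

lemma Gs_eq_of_le (hS0 : S [] = 0) {N : ℕ} {w : Word d} (hN : w.length ≤ N) :
    Gs S w = ∑ ℓ ∈ range (N + 1), ((ℓ.factorial : ℂ))⁻¹ * powS S ℓ w := by
  rw [Gs_def]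
  apply Finset.sum_subset
  · intro x hx; simp only [mem_range] at hx ⊢; omega
  · intro ℓ _ hℓ
    simp only [mem_range] at hℓ
    rw [powS_eq_zero_of_short hS0 ℓ w (by omega), mul_zero]

lemma multiset_sum_map_finset_sum {α β : Type*} (M : Multiset α) (s : Finset β)
    (f : β → α → ℂ) :
    (M.map (fun w => ∑ ℓ ∈ s, f ℓ w)).sum = ∑ ℓ ∈ s, (M.map (f ℓ)).sum := by
  induction M using Multiset.induction with
  | empty => simp
  | cons a M ih => simp [ih, Finset.sum_add_distrib]

lemma Dser_Gs (hS : PrimT S) (u v : Word d) : Dser (Gs S) u v = Gs S u * Gs S v := by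
  set N := u.length + v.length with hN
  have h1 : Dser (Gs S) u v
      = Dser (fun w => ∑ ℓ ∈ range (N+1), ((ℓ.factorial : ℂ))⁻¹ * powS S ℓ w) u v := by
    apply Dser_congr
    intro w hw
    rw [Gs_def, hw]
  rw [h1]
  have h2 : Dser (fun w => ∑ ℓ ∈ range (N+1), ((ℓ.factorial : ℂ))⁻¹ * powS S ℓ w) u v
      = ∑ ℓ ∈ range (N+1), ((ℓ.factorial : ℂ))⁻¹ * Dser (powS S ℓ) u v := by
    unfold Dser
    rw [multiset_sum_map_finset_sum (shuffles u v) (range (N+1))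
      (fun ℓ w => ((ℓ.factorial : ℂ))⁻¹ * powS S ℓ w)]
    apply Finset.sum_congr rfl; intro ℓ _
    rw [Multiset.sum_map_mul_left]
  rw [h2]
  have h3 : ∀ ℓ ∈ range (N+1), ((ℓ.factorial : ℂ))⁻¹ * Dser (powS S ℓ) u v
      = ∑ p ∈ range (ℓ+1), (((p.factorial : ℂ))⁻¹ * powS S p u)
          * ((((ℓ-p).factorial : ℂ))⁻¹ * powS S (ℓ-p) v) := by
    intro ℓ _
    rw [Dser_powS hS ℓ u v, Finset.mul_sum]
    apply Finset.sum_congr rfl; intro p hp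
    simp only [mem_range] at hp
    have hpl : p ≤ ℓ := by omega
    have hcf := Nat.choose_mul_factorial_mul_factorial hpl
    have hcfC : ((ℓ.choose p : ℕ) : ℂ) * (p.factorial : ℂ) * ((ℓ-p).factorial : ℂ)
        = (ℓ.factorial : ℂ) := by exact_mod_cast congrArg (Nat.cast (R := ℂ)) hcf
    have hp0 : (p.factorial : ℂ) ≠ 0 := Nat.cast_ne_zero.2 (Nat.factorial_ne_zero p)
    have hq0 : ((ℓ-p).factorial : ℂ) ≠ 0 := Nat.cast_ne_zero.2 (Nat.factorial_ne_zero (ℓ-p))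
    have hl0 : (ℓ.factorial : ℂ) ≠ 0 := Nat.cast_ne_zero.2 (Nat.factorial_ne_zero ℓ)
    field_simp
    rw [← hcfC]
    ring
  rw [Finset.sum_congr rfl h3]
  rw [Finset.sum_range_diag_flip (N+1)
    (fun p q => (((p.factorial : ℂ))⁻¹ * powS S p u) * (((q.factorial : ℂ))⁻¹ * powS S q v))]
  have h4 : ∀ p ∈ range (N+1),
      (∑ q ∈ range (N+1-p), (((p.factorial : ℂ))⁻¹ * powS S p u)
        * (((q.factorial : ℂ))⁻¹ * powS S q v))
      = ∑ q ∈ range (N+1), (((p.factorial : ℂ))⁻¹ * powS S p u)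
        * (((q.factorial : ℂ))⁻¹ * powS S q v) := by
    intro p hp
    simp only [mem_range] at hp
    apply Finset.sum_subset
    · intro x hx; simp only [mem_range] at hx ⊢; omega
    · intro q hq hq'
      simp only [mem_range] at hq hq'
      -- p + q > N, so p > u.length or q > v.length
      rcases Nat.lt_or_ge u.length p with h | h
      · rw [powS_eq_zero_of_short hS.1 p u h, mul_zero, zero_mul]
      · rw [powS_eq_zero_of_short hS.1 q v (by omega), mul_zero, mul_zero]
  rw [Finset.sum_congr rfl h4]
  rw [← Finset.sum_mul_sum]
  rw [Gs_eq_of_le hS.1 (by omega : u.length ≤ N), Gs_eq_of_le hS.1 (by omega : v.length ≤ N)]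

end Gs

/-- The finset of blocks of compositions of `k`. -/
noncomputable def Fc (k : ℕ) : Finset (List ℕ) :=
  (Finset.univ : Finset (Composition k)).image Composition.blocks

section Comp
open Finset

lemma mem_Fc {k : ℕ} {L : List ℕ} : L ∈ Fc k ↔ (∀ i ∈ L, 0 < i) ∧ L.sum = k := by
  constructor
  · intro h
    simp only [Fc, Finset.mem_image, Finset.mem_univ, true_and] at h
    obtain ⟨c, rfl⟩ := h
    exact ⟨fun i hi => c.blocks_pos hi, c.blocks_sum⟩
  · rintro ⟨h1, h2⟩
    simp only [Fc, Finset.mem_image, Finset.mem_univ, true_and]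
    exact ⟨⟨L, fun {i} hi => h1 i hi, h2⟩, rfl⟩

lemma Fc_zero : Fc 0 = {[]} := by
  ext L
  simp only [mem_Fc, Finset.mem_singleton]
  constructor
  · rintro ⟨h1, h2⟩
    cases L with
    | nil => rfl
    | cons a t =>
      exfalso
      have ha := h1 a (by simp)
      simp only [List.sum_cons] at h2
      have : t.sum = 0 ∧ a = 0 := by omega
      omega
  · rintro rfl
    exact ⟨by simp, rfl⟩

lemma Fc_pos (k : ℕ) (hk : 0 < k) :
    Fc k = (Finset.Icc 1 k).biUnion (fun i => (Fc (k-i)).image (i :: ·)) := by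
  ext L
  simp only [Finset.mem_biUnion, Finset.mem_Icc, Finset.mem_image, mem_Fc]
  constructor
  · rintro ⟨h1, h2⟩
    match L with
    | [] => simp at h2; omega
    | a :: L' =>
      have ha := h1 a (by simp)
      simp only [List.sum_cons] at h2
      refine ⟨a, ⟨ha, by omega⟩, L', ⟨fun i hi => h1 i (by simp [hi]), by omega⟩, rfl⟩
  · rintro ⟨i, ⟨hi1, hi2⟩, L', ⟨h1, h2⟩, rfl⟩
    refine ⟨?_, by simp [h2]; omega⟩
    intro x hx
    rcases List.mem_cons.1 hx with rfl | hx
    · exact hi1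
    · exact h1 x hx

lemma comp_sum_eq (k : ℕ) (f : List ℕ → ℂ) :
    (∑ c : Composition k, f c.blocks) = ∑ L ∈ Fc k, f L := by
  rw [Fc, Finset.sum_image]
  intro x _ y _ h
  cases x; cases y; simpa using h

lemma sum_filter_Fc_pos (k : ℕ) (hk : 0 < k) (ℓ : ℕ) (f : List ℕ → ℂ) :
    ∑ L ∈ (Fc k).filter (fun L => L.length = ℓ + 1), f L
      = ∑ i ∈ Finset.Icc 1 k, ∑ L ∈ (Fc (k-i)).filter (fun L => L.length = ℓ), f (i :: L) := by
  have hdisj : Set.PairwiseDisjoint (↑(Finset.Icc 1 k))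
      (fun i => ((Fc (k-i)).image (i :: ·)).filter (fun L => L.length = ℓ + 1)) := by
    intro a _ b _ hab
    apply Finset.disjoint_filter_filter
    rw [Finset.disjoint_left]
    rintro L hL1 hL2
    simp only [Finset.mem_image] at hL1 hL2
    obtain ⟨x, _, rfl⟩ := hL1
    obtain ⟨y, -, heq⟩ := hL2
    injection heq with h1 _
    exact hab h1.symm
  rw [Fc_pos k hk, Finset.filter_biUnion, Finset.sum_biUnion hdisj]
  apply Finset.sum_congr rfl
  intro i _
  rw [Finset.filter_image]
  rw [Finset.sum_image (by intro x _ y _ h; injection h)]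
  apply Finset.sum_congr
  · apply Finset.filter_congr
    intro L _
    simp
  · intro L _
    rfl

end Comp

section Main
variable {d : ℕ}
open Finset

lemma mulT_sum_left {s : Finset ℕ} {f : ℕ → TSeries d} (X : TSeries d) (w : Word d) :
    mulT (∑ i ∈ s, f i) X w = ∑ i ∈ s, mulT (f i) X w := by
  calc mulT (∑ i ∈ s, f i) X w
      = ∑ j ∈ range (w.length+1), ∑ i ∈ s, f i (w.take j) * X (w.drop j) := by
        apply Finset.sum_congr rfl; intro j _
        rw [Finset.sum_apply, Finset.sum_mul]
    _ = ∑ i ∈ s, ∑ j ∈ range (w.length+1), f i (w.take j) * X (w.drop j) := Finset.sum_comm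

lemma mulT_hom_eval {a : ℕ} {x X : TSeries d} (hx : HomT a x) (w : Word d) :
    mulT x X w = if a ≤ w.length then x (w.take a) * X (w.drop a) else 0 := by
  by_cases h : a ≤ w.length
  · rw [if_pos h]
    apply Finset.sum_eq_single_of_mem a (by simp only [mem_range]; omega)
    intro j hj hja
    simp only [mem_range] at hj
    rw [hx _ (by rw [List.length_take]; omega), zero_mul]
  · rw [if_neg h]
    apply Finset.sum_eq_zero
    intro j hj
    simp only [mem_range] at hj
    rw [hx _ (by rw [List.length_take]; omega), zero_mul]

variable {m : ℕ} {T : ℕ → TSeries d}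

lemma Ssum_nil (hT1 : ∀ i, 1 ≤ i → HomT i (T i)) :
    (∑ i ∈ Finset.Icc 1 m, T i) [] = 0 := by
  rw [Finset.sum_apply]
  apply Finset.sum_eq_zero
  intro i hi
  simp only [Finset.mem_Icc] at hi
  exact hT1 i hi.1 [] (by simp; omega)

lemma powS_eq_sum_Fc (hT1 : ∀ i, 1 ≤ i → HomT i (T i)) (hT0 : ∀ i, m < i → T i = 0) :
    ∀ (ℓ : ℕ) (w : Word d),
    powS (∑ i ∈ Finset.Icc 1 m, T i) ℓ w
      = ∑ L ∈ (Fc w.length).filter (fun L => L.length = ℓ), prodT (L.map T) w := by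
  intro ℓ
  induction ℓ with
  | zero =>
    intro w
    show oneT w = _
    rcases eq_or_ne w [] with rfl | hw
    · simp only [List.length_nil, Fc_zero]
      rw [show ({[]} : Finset (List ℕ)).filter (fun L => L.length = 0) = {[]} by
        apply Finset.filter_true_of_mem
        intro x hx
        simp only [Finset.mem_singleton] at hx
        subst hx
        rfl]
      rw [Finset.sum_singleton]
      rfl
    · have hw0 : w.length ≠ 0 := by simpa [List.length_eq_zero_iff] using hw
      rw [show oneT w = 0 from if_neg hw]
      symm
      apply Finset.sum_eq_zero
      intro L hL
      exfalso
      simp only [Finset.mem_filter, mem_Fc] at hL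
      obtain ⟨⟨h1, h2⟩, h3⟩ := hL
      rw [List.length_eq_zero_iff] at h3
      subst h3
      simp at h2
      omega
  | succ ℓ ih =>
    intro w
    show mulT (∑ i ∈ Finset.Icc 1 m, T i) (powS (∑ i ∈ Finset.Icc 1 m, T i) ℓ) w = _
    rcases eq_or_ne w [] with rfl | hw
    · rw [mulT_nil, Ssum_nil hT1, zero_mul]
      symm
      apply Finset.sum_eq_zero
      intro L hL
      exfalso
      simp only [List.length_nil, Fc_zero, Finset.mem_filter, Finset.mem_singleton] at hL
      obtain ⟨rfl, h3⟩ := hL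
      simp at h3
    · have hk : 1 ≤ w.length := List.length_pos_iff.2 hw
      rw [mulT_sum_left]
      have lhs1 : ∀ i ∈ Finset.Icc 1 m,
          mulT (T i) (powS (∑ i ∈ Finset.Icc 1 m, T i) ℓ) w
          = if i ≤ w.length then T i (w.take i) * powS (∑ i ∈ Finset.Icc 1 m, T i) ℓ (w.drop i)
            else 0 := by
        intro i hi
        simp only [Finset.mem_Icc] at hi
        exact mulT_hom_eval (hT1 i hi.1) w
      rw [Finset.sum_congr rfl lhs1]
      have lhs2 : (∑ i ∈ Finset.Icc 1 m,
          (if i ≤ w.length then T i (w.take i) * powS (∑ i ∈ Finset.Icc 1 m, T i) ℓ (w.drop i)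
            else 0))
          = ∑ i ∈ Finset.Icc 1 w.length,
            T i (w.take i) * powS (∑ i ∈ Finset.Icc 1 m, T i) ℓ (w.drop i) := by
        set K := max m w.length with hK
        have e1 : (∑ i ∈ Finset.Icc 1 m,
            (if i ≤ w.length then T i (w.take i) * powS (∑ i ∈ Finset.Icc 1 m, T i) ℓ (w.drop i)
              else 0))
            = ∑ i ∈ Finset.Icc 1 K,
              (if i ≤ w.length then T i (w.take i) * powS (∑ i ∈ Finset.Icc 1 m, T i) ℓ (w.drop i)
                else 0) := by
          apply Finset.sum_subset (Finset.Icc_subset_Icc le_rfl (le_max_left _ _))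
          intro i hi hni
          simp only [Finset.mem_Icc] at hi hni
          rw [hT0 i (by omega)]
          simp
        have e2 : (∑ i ∈ Finset.Icc 1 w.length,
            T i (w.take i) * powS (∑ i ∈ Finset.Icc 1 m, T i) ℓ (w.drop i))
            = ∑ i ∈ Finset.Icc 1 K,
              (if i ≤ w.length then T i (w.take i) * powS (∑ i ∈ Finset.Icc 1 m, T i) ℓ (w.drop i)
                else 0) := by
          rw [← Finset.sum_subset (Finset.Icc_subset_Icc le_rfl (le_max_right m w.length))
            (fun i hi hni => ?_)]
          · apply Finset.sum_congr rfl
            intro i hi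
            simp only [Finset.mem_Icc] at hi
            rw [if_pos hi.2]
          · simp only [Finset.mem_Icc] at hi hni
            rw [if_neg (by omega)]
        rw [e1, e2]
      rw [lhs2]
      rw [sum_filter_Fc_pos w.length (by omega) ℓ (fun L => prodT (L.map T) w)]
      apply Finset.sum_congr rfl
      intro i hi
      simp only [Finset.mem_Icc] at hi
      have rhs1 : ∀ L ∈ (Fc (w.length - i)).filter (fun L => L.length = ℓ),
          prodT ((i :: L).map T) w = T i (w.take i) * prodT (L.map T) (w.drop i) := by
        intro L _
        show mulT (T i) (prodT (L.map T)) w = _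
        rw [mulT_hom_eval (hT1 i hi.1) w, if_pos hi.2]
      rw [Finset.sum_congr rfl rhs1, ← Finset.mul_sum]
      congr 1
      rw [ih (w.drop i)]
      rw [List.length_drop]

end Main

section Final
variable {d : ℕ}
open Finset

lemma length_le_sum (L : List ℕ) (h : ∀ i ∈ L, 0 < i) : L.length ≤ L.sum := by
  induction L with
  | nil => simp
  | cons a t ih =>
    simp only [List.length_cons, List.sum_cons]
    have ha := h a (by simp)
    have := ih (fun i hi => h i (by simp [hi]))
    omega

variable {m : ℕ} {T : ℕ → TSeries d}

lemma phiC_eq_Gs (hT1 : ∀ i, 1 ≤ i → HomT i (T i)) (hT0 : ∀ i, m < i → T i = 0)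
    (w : Word d) :
    phiC d w.length T w = Gs (∑ i ∈ Finset.Icc 1 m, T i) w := by
  have h0 : phiC d w.length T w = ∑ c : Composition w.length,
      ((c.blocks.length).factorial : ℂ)⁻¹ * prodT (c.blocks.map T) w := by
    rw [phiC, Finset.sum_apply]
    apply Finset.sum_congr rfl; intro c _
    rw [Pi.smul_apply, smul_eq_mul]
  rw [h0, comp_sum_eq w.length (fun L => ((L.length).factorial : ℂ)⁻¹ * prodT (L.map T) w)]
  have hmap : ∀ L ∈ Fc w.length, L.length ∈ range (w.length + 1) := by
    intro L hL
    rw [mem_Fc] at hL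
    simp only [mem_range]
    have := length_le_sum L hL.1
    omega
  rw [← Finset.sum_fiberwise_of_maps_to hmap
    (fun L => ((L.length).factorial : ℂ)⁻¹ * prodT (L.map T) w)]
  rw [Gs_def]
  apply Finset.sum_congr rfl
  intro ℓ _
  rw [powS_eq_sum_Fc hT1 hT0 ℓ w, Finset.mul_sum]
  apply Finset.sum_congr rfl
  intro L hL
  simp only [Finset.mem_filter] at hL
  rw [hL.2]

end Final

/-- Let `T_i ∈ Lie^i(ℂ^d)` for `1 ≤ i ≤ m` and `T_i = 0` for
`i > m`.  Define `c` on words by `c(∅) = 1` and, for a word `w` of length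
`k ≥ 1`, `c(w) = `the `e_w`-coordinate of `φ_k(T₁,…,T_k)`.  Then `c` satisfies
the shuffle identity `c(u)·c(v) = Σ_{w ∈ u⧢v} c(w)` (with multiplicities). -/
theorem signature_satisfies_shuffle_identity (d m : ℕ) (hd : 1 ≤ d) (hm : 1 ≤ m)
    (T : ℕ → TSeries d)
    (hT : ∀ i, 1 ≤ i → i ≤ m → T i ∈ lieGradeC d i)
    (hT0 : ∀ i, m < i → T i = 0)
    (c : Word d → ℂ)
    (hc0 : c [] = 1)
    (hc : ∀ w : Word d, 1 ≤ w.length → c w = phiC d w.length T w) :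
    ∀ u v : Word d, c u * c v = ((shuffles u v).map c).sum := by
  have hT1 : ∀ i, 1 ≤ i → HomT i (T i) := by
    intro i hi
    by_cases him : i ≤ m
    · exact homT_of_mem_lieGrade (hT i hi him)
    · rw [hT0 i (by omega)]
      exact homT_zero i
  have hprim : PrimT (∑ i ∈ Finset.Icc 1 m, T i) := by
    apply Finset.sum_induction T PrimT (fun a b ha hb => primT_add ha hb) primT_zero
    intro i hi
    simp only [Finset.mem_Icc] at hi
    exact primT_of_mem_lieGrade (hT i hi.1 hi.2)
  have hceq : ∀ w : Word d, c w = Gs (∑ i ∈ Finset.Icc 1 m, T i) w := by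
    intro w
    rcases eq_or_ne w [] with rfl | hw
    · rw [hc0, Gs_def]
      simp [powS, oneT]
    · rw [hc w (List.length_pos_iff.2 hw)]
      exact phiC_eq_Gs hT1 hT0 w
  intro u v
  rw [hceq u, hceq v, ← Dser_Gs hprim u v]
  unfold Dser
  congr 1
  exact (Multiset.map_congr rfl (fun w _ => hceq w)).symm
end

section
/- Let d, k ≥ 1 and let c be a grouplike function on words over the alphabet {1,…,d}. Suppose there exist vectors v₁,…,v_k ∈ ℂ^d, not all zero in tensor product (i.e., v₁⊗⋯⊗v_k ≠ 0), such that c(i₁ i₂ ⋯ i_k) = v₁(i₁)·v₂(i₂)⋯v_k(i_k) for every word i₁⋯i_k of length k. Then the level-k tensor is symmetric: for every permutation σ of {1,…,k} and every word i₁⋯i_k, c(i_{σ(1)} i_{σ(2)} ⋯ i_{σ(k)}) = c(i₁ i₂ ⋯ i_k). -/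
namespace Aux

lemma shuffles_nil_left {α : Type*} (v : List α) : shuffles [] v = {v} := by
  cases v <;> simp [shuffles]

lemma shuffles_nil_right {α : Type*} (u : List α) : shuffles u [] = {u} := by
  cases u <;> simp [shuffles]

lemma shuffles_cons_cons {α : Type*} (a b : α) (u v : List α) :
    shuffles (a :: u) (b :: v)
      = ((shuffles u (b :: v)).map (a :: ·)) + ((shuffles (a :: u) v).map (b :: ·)) := by
  rw [shuffles]

variable {d : ℕ}

noncomputable def mext : (Word d → ℂ) → List (Fin d → ℂ) → ℂ
  | F, [] => F []
  | F, x :: l => ∑ a : Fin d, x a * mext (fun w => F (a :: w)) l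

@[simp] lemma mext_nil (F : Word d → ℂ) : mext F [] = F [] := rfl

@[simp] lemma mext_cons (F : Word d → ℂ) (x : Fin d → ℂ) (l : List (Fin d → ℂ)) :
    mext F (x :: l) = ∑ a : Fin d, x a * mext (fun w => F (a :: w)) l := rfl

lemma mext_add (F G : Word d → ℂ) (l : List (Fin d → ℂ)) :
    mext (fun w => F w + G w) l = mext F l + mext G l := by
  induction l generalizing F G with
  | nil => rfl
  | cons x l ih => simp [ih, Finset.sum_add_distrib, mul_add]

lemma mext_mul_left (A : ℂ) (F : Word d → ℂ) (l : List (Fin d → ℂ)) :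
    mext (fun w => A * F w) l = A * mext F l := by
  induction l generalizing F with
  | nil => rfl
  | cons x l ih =>
    simp only [mext_cons, ih, Finset.mul_sum]
    congr 1; ext a; ring

lemma mext_sum {ι : Type*} (s : Finset ι) (G : ι → Word d → ℂ) (l : List (Fin d → ℂ)) :
    mext (fun w => ∑ i ∈ s, G i w) l = ∑ i ∈ s, mext (G i) l := by
  induction l generalizing G with
  | nil => rfl
  | cons x l ih =>
    simp only [mext_cons, ih, Finset.mul_sum]
    rw [Finset.sum_comm]

lemma sum_map_finsum {β ι : Type*} (s : Finset ι) (m : Multiset β)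
    (g : ι → β → ℂ) :
    ((m.map (fun t => ∑ i ∈ s, g i t)).sum) = ∑ i ∈ s, (m.map (g i)).sum := by
  induction m using Multiset.induction_on with
  | empty => simp
  | cons a m ih => simp [ih, Finset.sum_add_distrib]

lemma map_cons_sum (z : Fin d → ℂ) (F : Word d → ℂ) (m : Multiset (List (Fin d → ℂ))) :
    ((m.map (fun s => mext F (z :: s))).sum)
      = ∑ a : Fin d, z a * ((m.map (mext (fun w => F (a :: w)))).sum) := by
  have h : (fun s => mext F (z :: s))
      = fun s => ∑ a : Fin d, z a * mext (fun w => F (a :: w)) s := by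
    funext s; rfl
  rw [h, sum_map_finsum]
  exact Finset.sum_congr rfl (fun a _ => Multiset.sum_map_mul_left)

lemma mext_add' (A B : List (Fin d → ℂ) → ℂ) (U : List (Fin d → ℂ)) :
    True := trivial

/-- Core lemma: shuffle-sums commute with multilinear extension. -/
lemma lemL (U : List (Fin d → ℂ)) : ∀ (W : List (Fin d → ℂ)) (F : Word d → ℂ),
    ((shuffles U W).map (mext F)).sum
      = mext (fun u => mext (fun w => ((shuffles u w).map F).sum) W) U := by
  induction U with
  | nil =>
    intro W F
    simp [shuffles_nil_left]
  | cons x U ihU =>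
    intro W
    induction W with
    | nil =>
      intro F
      simp [shuffles_nil_left, shuffles_nil_right]
    | cons y W ihW =>
      intro F
      rw [shuffles_cons_cons, Multiset.map_add, Multiset.sum_add,
        Multiset.map_map, Multiset.map_map]
      have comp1 : (mext F ∘ fun s => x :: s) = fun s => mext F (x :: s) := rfl
      have comp2 : (mext F ∘ fun s => y :: s) = fun s => mext F (y :: s) := rfl
      rw [comp1, comp2, map_cons_sum x F _, map_cons_sum y F _]
      have L1 : ∀ a : Fin d, ((shuffles U (y :: W)).map (mext (fun w => F (a :: w)))).sum
          = mext (fun u => mext (fun w =>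
              ((shuffles u w).map (fun t => F (a :: t))).sum) (y :: W)) U :=
        fun a => ihU (y :: W) (fun w => F (a :: w))
      have L2 : ∀ b : Fin d, ((shuffles (x :: U) W).map (mext (fun w => F (b :: w)))).sum
          = mext (fun u => mext (fun w =>
              ((shuffles u w).map (fun t => F (b :: t))).sum) W) (x :: U) :=
        fun b => ihW (fun w => F (b :: w))
      -- abbreviations as local defs
      have expand1 : ∀ a : Fin d,
          mext (fun u => mext (fun w =>
              ((shuffles u w).map (fun t => F (a :: t))).sum) (y :: W)) U
          = ∑ b : Fin d, y b * mext (fun u => mext (fun w =>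
              ((shuffles u (b :: w)).map (fun t => F (a :: t))).sum) W) U := by
        intro a
        have h : (fun u => mext (fun w =>
              ((shuffles u w).map (fun t => F (a :: t))).sum) (y :: W))
            = fun u => ∑ b : Fin d, y b * mext (fun w =>
              ((shuffles u (b :: w)).map (fun t => F (a :: t))).sum) W := by
          funext u; rfl
        rw [h, mext_sum]
        exact Finset.sum_congr rfl (fun b _ => mext_mul_left _ _ U)
      have expand2 : ∀ b : Fin d,
          mext (fun u => mext (fun w =>
              ((shuffles u w).map (fun t => F (b :: t))).sum) W) (x :: U)
          = ∑ a : Fin d, x a * mext (fun u => mext (fun w =>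
              ((shuffles (a :: u) w).map (fun t => F (b :: t))).sum) W) U := fun b => rfl
      have expandR : ∀ a : Fin d,
          mext (fun u => mext (fun w => ((shuffles (a :: u) w).map F).sum) (y :: W)) U
          = ∑ b : Fin d, y b *
              (mext (fun u => mext (fun w =>
                ((shuffles u (b :: w)).map (fun t => F (a :: t))).sum) W) U
               + mext (fun u => mext (fun w =>
                ((shuffles (a :: u) w).map (fun t => F (b :: t))).sum) W) U) := by
        intro a
        have h : (fun u => mext (fun w => ((shuffles (a :: u) w).map F).sum) (y :: W))
            = fun u => ∑ b : Fin d, y b *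
                (mext (fun w => ((shuffles u (b :: w)).map (fun t => F (a :: t))).sum) W
                 + mext (fun w => ((shuffles (a :: u) w).map (fun t => F (b :: t))).sum) W) := by
          funext u
          rw [mext_cons]
          refine Finset.sum_congr rfl (fun b _ => ?_)
          congr 1
          have h2 : (fun w => ((shuffles (a :: u) (b :: w)).map F).sum)
              = fun w => ((shuffles u (b :: w)).map (fun t => F (a :: t))).sum
                  + ((shuffles (a :: u) w).map (fun t => F (b :: t))).sum := by
            funext w
            rw [shuffles_cons_cons, Multiset.map_add, Multiset.sum_add,
              Multiset.map_map, Multiset.map_map]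
            rfl
          rw [h2, mext_add]
        rw [h, mext_sum]
        refine Finset.sum_congr rfl (fun b _ => ?_)
        rw [show (fun u => y b *
                (mext (fun w => ((shuffles u (b :: w)).map (fun t => F (a :: t))).sum) W
                 + mext (fun w => ((shuffles (a :: u) w).map (fun t => F (b :: t))).sum) W))
            = (fun u => y b * ((fun u' => mext (fun w =>
                  ((shuffles u' (b :: w)).map (fun t => F (a :: t))).sum) W
                 + mext (fun w =>
                  ((shuffles (a :: u') w).map (fun t => F (b :: t))).sum) W) u)) from rfl,
          mext_mul_left, mext_add _ _ U]
      -- put it together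
      rw [mext_cons]
      calc (∑ a : Fin d, x a * ((shuffles U (y :: W)).map (mext (fun w => F (a :: w)))).sum)
            + (∑ b : Fin d, y b * ((shuffles (x :: U) W).map (mext (fun w => F (b :: w)))).sum)
          = (∑ a : Fin d, ∑ b : Fin d, x a * (y b * mext (fun u => mext (fun w =>
              ((shuffles u (b :: w)).map (fun t => F (a :: t))).sum) W) U))
            + (∑ b : Fin d, ∑ a : Fin d, y b * (x a * mext (fun u => mext (fun w =>
              ((shuffles (a :: u) w).map (fun t => F (b :: t))).sum) W) U)) := by
            congr 1
            · refine Finset.sum_congr rfl (fun a _ => ?_)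
              rw [L1 a, expand1 a, Finset.mul_sum]
            · refine Finset.sum_congr rfl (fun b _ => ?_)
              rw [L2 b, expand2 b, Finset.mul_sum]
        _ = ∑ a : Fin d, x a * mext (fun u =>
              mext (fun w => ((shuffles (a :: u) w).map F).sum) (y :: W)) U := by
            rw [Finset.sum_comm (f := fun b a => y b * (x a * mext (fun u => mext (fun w =>
              ((shuffles (a :: u) w).map (fun t => F (b :: t))).sum) W) U))]
            rw [← Finset.sum_add_distrib]
            refine Finset.sum_congr rfl (fun a _ => ?_)
            rw [expandR a, Finset.mul_sum, ← Finset.sum_add_distrib]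
            refine Finset.sum_congr rfl (fun b _ => ?_)
            ring

/-- Grouplike property of the multilinear extension. -/
lemma mext_grouplike (c : Word d → ℂ)
    (hcsh : ∀ u v : Word d, c u * c v = ((shuffles u v).map c).sum)
    (U W : List (Fin d → ℂ)) :
    mext c U * mext c W = ((shuffles U W).map (mext c)).sum := by
  rw [lemL U W c]
  have h : (fun u => mext (fun w => ((shuffles u w).map c).sum) W)
      = fun u => mext c W * c u := by
    funext u
    have h2 : (fun w => ((shuffles u w).map c).sum) = fun w => c u * c w := by
      funext w; rw [hcsh u w]
    rw [h2]
    have : (fun w => c u * c w) = fun w => c u * ((fun w' => c w') w) := rfl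
    rw [this, mext_mul_left]
    ring
  rw [h]
  have : (fun u => mext c W * c u) = fun u => mext c W * ((fun u' => c u') u) := rfl
  rw [this, mext_mul_left]
  ring

/-- Closed form of `mext` on `ofFn` lists. -/
lemma mext_ofFn (n : ℕ) : ∀ (F : Word d → ℂ) (x : Fin n → Fin d → ℂ),
    mext F (List.ofFn x)
      = ∑ f : Fin n → Fin d, (∏ i, x i (f i)) * F (List.ofFn f) := by
  induction n with
  | zero =>
    intro F x
    simp
  | succ n ih =>
    intro F x
    rw [List.ofFn_succ, mext_cons]
    have h : ∀ a : Fin d,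
        mext (fun w => F (a :: w)) (List.ofFn fun i => x i.succ)
          = ∑ g : Fin n → Fin d, (∏ i, x i.succ (g i)) * F (a :: List.ofFn g) :=
      fun a => ih (fun w => F (a :: w)) (fun i => x i.succ)
    calc (∑ a : Fin d, x 0 a * mext (fun w => F (a :: w)) (List.ofFn fun i => x i.succ))
        = ∑ a : Fin d, ∑ g : Fin n → Fin d,
            x 0 a * ((∏ i, x i.succ (g i)) * F (a :: List.ofFn g)) := by
          refine Finset.sum_congr rfl (fun a _ => ?_)
          rw [h a, Finset.mul_sum]
      _ = ∑ p : Fin d × (Fin n → Fin d),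
            x 0 p.1 * ((∏ i, x i.succ (p.2 i)) * F (p.1 :: List.ofFn p.2)) := by
          rw [Fintype.sum_prod_type]
      _ = ∑ f : Fin (n + 1) → Fin d, (∏ i, x i (f i)) * F (List.ofFn f) := by
          rw [← (Fin.consEquiv (fun _ : Fin (n+1) => Fin d)).sum_comp
            (fun f => (∏ i, x i (f i)) * F (List.ofFn f))]
          refine Finset.sum_congr rfl (fun p _ => ?_)
          obtain ⟨a, g⟩ := p
          have e1 : List.ofFn (Fin.consEquiv (fun _ : Fin (n+1) => Fin d) ⟨a, g⟩)
              = a :: List.ofFn g := by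
            rw [List.ofFn_succ]
            simp [Fin.consEquiv]
          have e2 : (∏ i, x i ((Fin.consEquiv (fun _ : Fin (n+1) => Fin d) ⟨a, g⟩) i))
              = x 0 a * ∏ i : Fin n, x i.succ (g i) := by
            rw [Fin.prod_univ_succ]
            simp [Fin.consEquiv]
          rw [e1, e2]
          ring

/-- Shuffles of a single letter: sum over insertions. -/
lemma single_shuffle_sum (γ : Fin d → ℂ) :
    ∀ (m : ℕ) (G : List (Fin d → ℂ) → ℂ) (β : Fin d → ℂ),
    ((shuffles [γ] (List.replicate m β)).map G).sum
      = ∑ i ∈ Finset.range (m + 1),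
          G (List.replicate i β ++ γ :: List.replicate (m - i) β) := by
  intro m
  induction m with
  | zero =>
    intro G β
    simp [shuffles_nil_right]
  | succ m ih =>
    intro G β
    rw [List.replicate_succ, shuffles_cons_cons, shuffles_nil_left]
    rw [Multiset.map_add, Multiset.sum_add, Multiset.map_map, Multiset.map_map]
    simp only [Multiset.map_singleton, Multiset.sum_singleton]
    rw [show ((shuffles [γ] (List.replicate m β)).map
        (G ∘ fun s => β :: s)).sum
      = ((shuffles [γ] (List.replicate m β)).map (fun s => G (β :: s))).sum from rfl]
    rw [ih (fun s => G (β :: s)) β]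
    rw [Finset.sum_range_succ'
      (fun i => G (List.replicate i β ++ γ :: List.replicate (m + 1 - i) β)) (m + 1)]
    rw [add_comm]
    have h1 : ∀ i ∈ Finset.range (m + 1),
        G (β :: (List.replicate i β ++ γ :: List.replicate (m - i) β))
          = G (List.replicate (i + 1) β ++ γ :: List.replicate (m + 1 - (i + 1)) β) := by
      intro i hi
      have h2 : m + 1 - (i + 1) = m - i := by omega
      simp [h2, List.replicate_succ]
    rw [Finset.sum_congr rfl h1]
    simp [List.replicate_succ]

lemma ofFn_ite : ∀ (n i : ℕ), i < n → ∀ (γ β : Fin d → ℂ),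
    List.replicate i β ++ γ :: List.replicate (n - 1 - i) β
      = List.ofFn (fun j : Fin n => if (j : ℕ) = i then γ else β) := by
  intro n
  induction n with
  | zero => intro i hi; omega
  | succ n ih =>
    intro i hi γ β
    rw [List.ofFn_succ]
    cases i with
    | zero =>
      simp only [List.replicate_zero, List.nil_append, Nat.succ_sub_one]
      have h0 : (if ((0 : Fin (n+1)) : ℕ) = 0 then γ else β) = γ := by simp
      have ht : (fun j : Fin n => if ((j.succ : Fin (n+1)) : ℕ) = 0 then γ else β)
          = fun _ : Fin n => β := by
        funext j; simp
      rw [h0, ht, List.ofFn_const]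
      simp
    | succ i =>
      have h0 : (if ((0 : Fin (n+1)) : ℕ) = i + 1 then γ else β) = β := by simp
      have ht : (fun j : Fin n => if ((j.succ : Fin (n+1)) : ℕ) = i + 1 then γ else β)
          = fun j : Fin n => if (j : ℕ) = i then γ else β := by
        funext j; simp
      rw [h0, ht, ← ih i (by omega) γ β]
      have : n + 1 - 1 - (i + 1) = n - 1 - i := by omega
      rw [this, List.replicate_succ]
      rfl

section Value

variable {k : ℕ} (c : Word d → ℂ) (v : Fin k → Fin d → ℂ)
  (hrep : ∀ i : Fin k → Fin d, c (List.ofFn i) = ∏ j : Fin k, v j (i j))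

include hrep in
lemma mext_val (x : Fin k → Fin d → ℂ) :
    mext c (List.ofFn x) = ∏ j, (∑ t, x j t * v j t) := by
  rw [mext_ofFn]
  have h : ∀ f : Fin k → Fin d,
      (∏ i, x i (f i)) * c (List.ofFn f) = ∏ j, (x j (f j) * v j (f j)) := by
    intro f
    rw [hrep f, Finset.prod_mul_distrib]
  rw [Finset.sum_congr rfl (fun f _ => h f)]
  rw [Finset.prod_univ_sum (fun _ => Finset.univ) (fun j t => x j t * v j t),
    Fintype.piFinset_univ]

include hrep in
lemma mext_val_ite {n : ℕ} (hkn : k = n + 1) (i : Fin k) (γ β : Fin d → ℂ) :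
    mext c (List.replicate (i : ℕ) β ++ γ :: List.replicate (n - (i : ℕ)) β)
      = (∑ t, γ t * v i t) * ∏ j ∈ Finset.univ.erase i, (∑ t, β t * v j t) := by
  subst hkn
  have hi : (i : ℕ) < n + 1 := i.isLt
  have hrw : n - (i : ℕ) = (n + 1) - 1 - (i : ℕ) := by omega
  rw [hrw, ofFn_ite (n + 1) (i : ℕ) hi γ β]
  rw [mext_val c v hrep]
  have h : ∀ j : Fin (n + 1),
      (∑ t, (if ((j : ℕ) = (i : ℕ)) then γ else β) t * v j t)
        = if j = i then (∑ t, γ t * v j t) else (∑ t, β t * v j t) := by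
    intro j
    by_cases hj : j = i
    · simp [hj]
    · have : ((j : ℕ) = (i : ℕ)) = False := by
        simp [Fin.ext_iff] at hj ⊢; exact hj
      simp [this, hj]
  rw [Finset.prod_congr rfl (fun j _ => h j)]
  rw [← Finset.mul_prod_erase Finset.univ _ (Finset.mem_univ i)]
  rw [if_pos rfl]
  congr 1
  refine Finset.prod_congr rfl (fun j hj => ?_)
  rw [if_neg (Finset.ne_of_mem_erase hj)]

end Value

/-- Existence of a vector pairing nonzero against finitely many nonzero vectors. -/
lemma exists_generic {k' : ℕ} (v : Fin k' → Fin d → ℂ) (hv : ∀ j, v j ≠ 0) :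
    ∃ E : Fin d → ℂ, ∀ j, (∑ t, E t * v j t) ≠ 0 := by
  suffices h : ∀ S : Finset (Fin k'), ∃ E : Fin d → ℂ, ∀ j ∈ S, (∑ t, E t * v j t) ≠ 0 by
    obtain ⟨E, hE⟩ := h Finset.univ
    exact ⟨E, fun j => hE j (Finset.mem_univ j)⟩
  intro S
  induction S using Finset.induction_on with
  | empty => exact ⟨0, by simp⟩
  | insert j₀ S hj0 ih =>
    obtain ⟨E, hE⟩ := ih
    obtain ⟨a, ha⟩ := Function.ne_iff.mp (hv j₀)
    set y : Fin d → ℂ := fun t => if t = a then 1 else 0 with hy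
    have hB : ∀ j, (∑ t, y t * v j t) = v j a := by
      intro j
      rw [Finset.sum_congr rfl (fun t _ => show y t * v j t
        = if t = a then v j t else 0 by by_cases h : t = a <;> simp [hy, h])]
      simp
    obtain ⟨τ, hτ⟩ := Infinite.exists_notMem_finset
      (Finset.image (fun j : Fin k' =>
        -(∑ t, E t * v j t) / (∑ t, y t * v j t)) Finset.univ)
    refine ⟨fun t => E t + τ * y t, ?_⟩
    have hpair : ∀ j, (∑ t, (E t + τ * y t) * v j t)
        = (∑ t, E t * v j t) + τ * (∑ t, y t * v j t) := by
      intro j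
      rw [Finset.mul_sum, ← Finset.sum_add_distrib]
      exact Finset.sum_congr rfl (fun t _ => by ring)
    intro j hj
    rw [hpair j]
    intro hcontra
    by_cases hBj : (∑ t, y t * v j t) = 0
    · rw [hBj, mul_zero, add_zero] at hcontra
      rcases Finset.mem_insert.mp hj with h | h
      · subst h
        rw [hB j] at hBj
        simp at ha
        exact ha hBj
      · exact hE j h hcontra
    · apply hτ
      rw [Finset.mem_image]
      refine ⟨j, Finset.mem_univ j, ?_⟩
      field_simp
      linear_combination -hcontra

open Polynomial in
/-- If the "derivative sum" vanishes for all `ε`, all `z j` vanish. -/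
lemma all_zero_of_deriv {k' : ℕ} (z : Fin k' → ℂ)
    (h : ∀ ε : ℂ, ∑ i, z i * ∏ j ∈ Finset.univ.erase i, (1 + ε * z j) = 0) :
    ∀ j, z j = 0 := by
  classical
  set P : Polynomial ℂ := ∏ j, (C (z j) * X + 1) with hPdef
  have hderiv : derivative P
      = ∑ j, (∏ i ∈ Finset.univ.erase j, (C (z i) * X + 1)) * C (z j) := by
    rw [hPdef]
    rw [show (∏ j, (C (z j) * X + 1))
      = (Multiset.map (fun j => C (z j) * X + 1) (Finset.univ.val : Multiset (Fin k'))).prod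
      from rfl]
    rw [Polynomial.derivative_prod]
    have : ∀ j : Fin k', derivative (C (z j) * X + 1) = C (z j) := by
      intro j; simp
    refine Finset.sum_congr rfl (fun j _ => ?_)
    rw [this j]
    rfl
  have heval : ∀ ε : ℂ, (derivative P).eval ε = 0 := by
    intro ε
    rw [hderiv]
    rw [Polynomial.eval_finset_sum]
    rw [← h ε]
    refine Finset.sum_congr rfl (fun i _ => ?_)
    rw [Polynomial.eval_mul, Polynomial.eval_prod, Polynomial.eval_C]
    rw [Finset.prod_congr rfl (fun j _ => show Polynomial.eval ε (C (z j) * X + 1)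
      = 1 + ε * z j by simp; ring)]
    ring
  have hd0 : derivative P = 0 := Polynomial.zero_of_eval_zero _ heval
  have hdeg : P.natDegree = 0 := Polynomial.natDegree_eq_zero_of_derivative_eq_zero hd0
  have hPC : P = C (P.coeff 0) := Polynomial.eq_C_of_natDegree_eq_zero hdeg
  have hP0 : P.coeff 0 = 1 := by
    rw [Polynomial.coeff_zero_eq_eval_zero, hPdef]
    rw [Polynomial.eval_prod]
    rw [Finset.prod_congr rfl (fun j _ => show Polynomial.eval 0 (C (z j) * X + 1) = 1 by simp)]
    simp
  intro j
  by_contra hzj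
  have : P.eval (-(z j)⁻¹) = 0 := by
    rw [hPdef, Polynomial.eval_prod]
    refine Finset.prod_eq_zero (Finset.mem_univ j) ?_
    simp
    field_simp
    ring
  rw [hPC, hP0] at this
  simp at this

end Aux

open Aux

/-- Let `c` be a grouplike function on words over `{1,…,d}`
(i.e. `c(∅) = 1` and `c` satisfies the shuffle identity).  If the level-`k`
part of `c` is the nonzero elementary tensor `v₁ ⊗ ⋯ ⊗ v_k`, i.e.
`c(i₁⋯i_k) = v₁(i₁)⋯v_k(i_k)` for all words of length `k`, then the level-`k`
tensor is symmetric: `c(i_{σ(1)}⋯i_{σ(k)}) = c(i₁⋯i_k)` for every permutation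
`σ` and all indices. -/
theorem grouplike_rank_one_level_is_symmetric (d k : ℕ) (hd : 1 ≤ d) (hk : 1 ≤ k)
    (c : Word d → ℂ)
    (hc0 : c [] = 1)
    (hcsh : ∀ u v : Word d, c u * c v = ((shuffles u v).map c).sum)
    (v : Fin k → (Fin d → ℂ))
    (hv : (fun i : Fin k → Fin d => ∏ j : Fin k, v j (i j)) ≠ 0)
    (hrep : ∀ i : Fin k → Fin d, c (List.ofFn i) = ∏ j : Fin k, v j (i j)) :
    ∀ (σ : Equiv.Perm (Fin k)) (i : Fin k → Fin d),
      c (List.ofFn fun m => i (σ m)) = c (List.ofFn i) := by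
  classical
  obtain ⟨n, rfl⟩ : ∃ n, k = n + 1 := ⟨k - 1, by omega⟩
  intro σ i
  -- all the v j are nonzero
  have hex : ∃ i₀ : Fin (n + 1) → Fin d, (∏ j, v j (i₀ j)) ≠ 0 := by
    by_contra hno
    push_neg at hno
    exact hv (funext fun i' => by simpa using hno i')
  obtain ⟨i₀, hi₀⟩ := hex
  have hvne : ∀ j, v j ≠ 0 := by
    intro j hj
    exact hi₀ (Finset.prod_eq_zero (Finset.mem_univ j) (by rw [hj]; rfl))
  obtain ⟨E, hE⟩ := Aux.exists_generic v hvne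
  set φ : (Fin d → ℂ) → Fin (n + 1) → ℂ := fun x j => ∑ t, x t * v j t with hφdef
  have hE' : ∀ j, φ E j ≠ 0 := hE
  have hK : (∏ j, φ E j) ≠ 0 := Finset.prod_ne_zero_iff.mpr (fun j _ => hE' j)
  set Gv : (Fin d → ℂ) → (Fin d → ℂ) → ℂ := fun γ β =>
    ∑ i' : Fin (n + 1), φ γ i' * ∏ j ∈ Finset.univ.erase i', φ β j with hGvdef
  have hG : ∀ γ β, ((shuffles [γ] (List.replicate n β)).map (Aux.mext c)).sum = Gv γ β := by
    intro γ β
    rw [Aux.single_shuffle_sum γ n (Aux.mext c) β]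
    rw [← Fin.sum_univ_eq_sum_range
      (fun i' => Aux.mext c (List.replicate i' β ++ γ :: List.replicate (n - i') β)) (n + 1)]
    exact Finset.sum_congr rfl (fun i' _ => Aux.mext_val_ite c v hrep rfl i' γ β)
  have hGmul : ∀ γ β, Gv γ β = Aux.mext c [γ] * Aux.mext c (List.replicate n β) := by
    intro γ β
    rw [← hG, Aux.mext_grouplike c hcsh]
  have hrel : ∀ γ β, Gv γ β * Gv E E = Gv γ E * Gv E β := by
    intro γ β
    rw [hGmul, hGmul, hGmul, hGmul]; ring
  have hGEE : Gv E E = (n + 1 : ℂ) * ∏ j, φ E j := by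
    simp only [hGvdef]
    rw [Finset.sum_congr rfl
      (fun i' _ => Finset.mul_prod_erase Finset.univ (φ E) (Finset.mem_univ i'))]
    rw [Finset.sum_const, Finset.card_univ, Fintype.card_fin, nsmul_eq_mul]
    push_cast
    ring
  set μ : Fin d → ℂ := fun a => (∑ j', v j' a / φ E j') / (n + 1 : ℂ) with hμdef
  have hn1 : (n + 1 : ℂ) ≠ 0 := Nat.cast_add_one_ne_zero n
  have hfact : ∀ (a : Fin d) (j : Fin (n + 1)), v j a = μ a * φ E j := by
    intro a
    set z : Fin (n + 1) → ℂ := fun j => v j a / φ E j - μ a with hzdef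
    have hsum_z : ∑ j, z j = 0 := by
      simp only [hzdef]
      rw [Finset.sum_sub_distrib, Finset.sum_const, Finset.card_univ, Fintype.card_fin,
        nsmul_eq_mul]
      simp only [hμdef]
      field_simp
      simp
    set ζ : Fin d → ℂ := fun t => (if t = a then 1 else 0) - μ a * E t with hζdef
    have hφζ : ∀ j, φ ζ j = φ E j * z j := by
      intro j
      have h1 : φ ζ j = v j a - μ a * φ E j := by
        simp only [hφdef, hζdef]
        rw [Finset.sum_congr rfl (fun t _ => show
          ((if t = a then (1 : ℂ) else 0) - μ a * E t) * v j t
            = (if t = a then v j t else 0) - μ a * (E t * v j t) by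
          by_cases h : t = a <;> simp [h] <;> ring)]
        rw [Finset.sum_sub_distrib, ← Finset.mul_sum]
        congr 1
        simp
      rw [h1, show z j = v j a / φ E j - μ a from rfl, mul_sub,
        mul_comm (φ E j) (v j a / φ E j), div_mul_cancel₀ (v j a) (hE' j),
        mul_comm (φ E j) (μ a)]
    have hGζE : Gv ζ E = 0 := by
      simp only [hGvdef]
      rw [Finset.sum_congr rfl (fun i' _ => show
          φ ζ i' * ∏ j ∈ Finset.univ.erase i', φ E j
            = z i' * ∏ j, φ E j by
        rw [hφζ i', mul_comm (φ E i') (z i'), mul_assoc,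
          Finset.mul_prod_erase Finset.univ (φ E) (Finset.mem_univ i')])]
      rw [← Finset.sum_mul, hsum_z, zero_mul]
    have hGζβ : ∀ β, Gv ζ β = 0 := by
      intro β
      have h := hrel ζ β
      rw [hGζE, zero_mul, hGEE] at h
      have hne : (n + 1 : ℂ) * ∏ j, φ E j ≠ 0 := mul_ne_zero hn1 hK
      rcases mul_eq_zero.mp h with h' | h'
      · exact h'
      · exact absurd h' hne
    have hkey : ∀ ε : ℂ, ∑ i', z i' * ∏ j ∈ Finset.univ.erase i', (1 + ε * z j) = 0 := by
      intro ε
      have hφβ : ∀ j, φ (fun t => E t + ε * ζ t) j = φ E j * (1 + ε * z j) := by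
        intro j
        have : φ (fun t => E t + ε * ζ t) j = φ E j + ε * φ ζ j := by
          simp only [hφdef]
          rw [Finset.mul_sum, ← Finset.sum_add_distrib]
          exact Finset.sum_congr rfl (fun t _ => by ring)
        rw [this, hφζ j]
        ring
      have h := hGζβ (fun t => E t + ε * ζ t)
      simp only [hGvdef] at h
      rw [Finset.sum_congr rfl (fun i' _ => show
          φ ζ i' * ∏ j ∈ Finset.univ.erase i', φ (fun t => E t + ε * ζ t) j
            = (z i' * ∏ j ∈ Finset.univ.erase i', (1 + ε * z j)) * ∏ j, φ E j by
        rw [hφζ i', Finset.prod_congr rfl (fun j _ => hφβ j), Finset.prod_mul_distrib]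
        rw [show φ E i' * z i' * ((∏ j ∈ Finset.univ.erase i', φ E j)
              * ∏ j ∈ Finset.univ.erase i', (1 + ε * z j))
            = (z i' * ∏ j ∈ Finset.univ.erase i', (1 + ε * z j))
              * (φ E i' * ∏ j ∈ Finset.univ.erase i', φ E j) by ring]
        rw [Finset.mul_prod_erase Finset.univ (φ E) (Finset.mem_univ i')])] at h
      rw [← Finset.sum_mul] at h
      rcases mul_eq_zero.mp h with h' | h'
      · exact h'
      · exact absurd h' hK
    have hz := Aux.all_zero_of_deriv z hkey
    intro j
    have hzj : v j a / φ E j - μ a = 0 := hz j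
    have h2 : v j a / φ E j = μ a := by
      linear_combination hzj
    rw [div_eq_iff (hE' j)] at h2
    exact h2
  -- conclude symmetry
  rw [hrep, hrep]
  calc ∏ j, v j (i (σ j))
      = ∏ j, (μ (i (σ j)) * φ E j) := Finset.prod_congr rfl (fun j _ => hfact (i (σ j)) j)
    _ = (∏ j, μ (i (σ j))) * ∏ j, φ E j := Finset.prod_mul_distrib
    _ = (∏ j, μ (i j)) * ∏ j, φ E j := by
        rw [Equiv.prod_comp σ (fun j => μ (i j))]
    _ = ∏ j, (μ (i j) * φ E j) := Finset.prod_mul_distrib.symm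
    _ = ∏ j, v j (i j) := Finset.prod_congr rfl (fun j _ => (hfact (i j) j).symm)
end

section
/- Let A be a skew-symmetric d×d complex matrix and let x ∈ ℂ^d. If x lies in the row space of A, then rank(A + x·xᵀ) = rank(A); if x does not lie in the row space of A, then rank(A + x·xᵀ) = rank(A) + 1. -/
open Matrix Module

private lemma toDual_basisFun_dot (d : ℕ) (y v : Fin d → ℂ) :
    (Pi.basisFun ℂ (Fin d)).toDual y v = v ⬝ᵥ y := by
  have h := (Pi.basisFun ℂ (Fin d)).sum_repr v
  conv_lhs => rw [← h]
  simp only [map_sum, _root_.map_smul, smul_eq_mul, Basis.toDual_apply_left, Pi.basisFun_repr]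
  simp [dotProduct]

private lemma vecMulVec_mulVec' (d : ℕ) (x y v : Fin d → ℂ) :
    (vecMulVec x y) *ᵥ v = (y ⬝ᵥ v) • x := by
  ext i
  simp only [Matrix.mulVec, Matrix.vecMulVec_apply, dotProduct, Pi.smul_apply, smul_eq_mul,
    Matrix.of_apply]
  rw [Finset.sum_mul]
  exact Finset.sum_congr rfl fun j _ => by ring

private lemma skew_self_dot (d : ℕ) (A : Matrix (Fin d) (Fin d) ℂ) (hA : Aᵀ = -A)
    (v : Fin d → ℂ) : v ⬝ᵥ (A *ᵥ v) = 0 := by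
  have h1 : v ⬝ᵥ (A *ᵥ v) = (v ᵥ* A) ⬝ᵥ v := dotProduct_mulVec v A v
  rw [← mulVec_transpose, hA, neg_mulVec, neg_dotProduct, dotProduct_comm] at h1
  rw [dotProduct_comm]
  linear_combination h1 / 2

/-- For a skew-symmetric complex matrix `A` and a vector `x`,
the rank of `A + x xᵀ` equals `rank A` if `x` lies in the row space of `A`,
and equals `rank A + 1` otherwise. -/
theorem rank_add_vecMulVec_of_skewSymmetric (d : ℕ) (A : Matrix (Fin d) (Fin d) ℂ)
    (hA : Aᵀ = -A) (x : Fin d → ℂ) :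
    (x ∈ Submodule.span ℂ (Set.range fun i => A i) →
      (A + Matrix.vecMulVec x x).rank = A.rank) ∧
    (x ∉ Submodule.span ℂ (Set.range fun i => A i) →
      (A + Matrix.vecMulVec x x).rank = A.rank + 1) := by
  classical
  set b : Basis (Fin d) ℂ (Fin d → ℂ) := Pi.basisFun ℂ (Fin d) with hb
  set K : Submodule ℂ (Fin d → ℂ) := LinearMap.ker A.mulVecLin with hK
  set RS : Submodule ℂ (Fin d → ℂ) := LinearMap.range A.mulVecLin with hRS
  -- the row space equals the column space (range of mulVecLin) since A is skew
  have hrow : Submodule.span ℂ (Set.range fun i => A i) = RS := by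
    have h1 : (Set.range fun i => A i) = Set.range A.row := rfl
    rw [h1, ← range_vecMulLinear, ← Matrix.mulVecLin_transpose, hA]
    have : (-A).mulVecLin = -A.mulVecLin := by ext v; simp [Matrix.neg_mulVec]
    rw [this, LinearMap.range_neg]
  -- the dual characterization subspace
  set W : Submodule ℂ (Fin d → ℂ) :=
      K.dualAnnihilator.comap (b.toDualEquiv : (Fin d → ℂ) →ₗ[ℂ] Module.Dual ℂ (Fin d → ℂ))
      with hW
  have hmemW : ∀ y, y ∈ W ↔ ∀ v ∈ K, y ⬝ᵥ v = 0 := by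
    intro y
    rw [hW, Submodule.mem_comap]
    simp only [LinearEquiv.coe_coe, Basis.toDualEquiv_apply, Submodule.mem_dualAnnihilator]
    constructor
    · intro h v hv
      have := h v hv
      rw [toDual_basisFun_dot] at this
      rwa [dotProduct_comm]
    · intro h v hv
      rw [toDual_basisFun_dot, dotProduct_comm]
      exact h v hv
  have hfind : finrank ℂ (Fin d → ℂ) = d := by simp [finrank_pi]
  -- finrank of W
  have hWfin : finrank ℂ W + finrank ℂ K = d := by
    have h1 : finrank ℂ W = finrank ℂ K.dualAnnihilator := by
      rw [hW, Submodule.comap_equiv_eq_map_symm]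
      exact LinearEquiv.finrank_map_eq _ _
    have h2 : finrank ℂ K.dualAnnihilator = finrank ℂ ((Fin d → ℂ) ⧸ K) :=
      (LinearEquiv.finrank_eq (Subspace.quotEquivAnnihilator K)).symm
    have h3 := Submodule.finrank_quotient_add_finrank K
    rw [hfind] at h3
    rw [h1, h2]
    exact h3
  -- rank-nullity for A
  have hrn : A.rank + finrank ℂ K = d := by
    have := LinearMap.finrank_range_add_finrank_ker A.mulVecLin
    rw [hfind] at this
    exact this
  -- RS ≤ W
  have hle : RS ≤ W := by
    rintro _ ⟨u, rfl⟩
    rw [hmemW]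
    intro v hv
    have hv' : A *ᵥ v = 0 := hv
    rw [Matrix.mulVecLin_apply, dotProduct_comm, dotProduct_mulVec, ← mulVec_transpose, hA,
      neg_mulVec, hv']
    simp
  -- RS = W
  have hRSW : RS = W := by
    apply Submodule.eq_of_le_of_finrank_le hle
    have hRSfin : finrank ℂ RS = A.rank := rfl
    omega
  -- membership in the row space iff orthogonal to the kernel
  have hiff : ∀ y, y ∈ Submodule.span ℂ (Set.range fun i => A i) ↔ ∀ v ∈ K, y ⬝ᵥ v = 0 := by
    intro y; rw [hrow, hRSW]; exact hmemW y
  -- the functional v ↦ x ⬝ᵥ v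
  set f : (Fin d → ℂ) →ₗ[ℂ] ℂ := b.toDual.flip x with hf
  have hfapp : ∀ v, f v = x ⬝ᵥ v := by
    intro v
    rw [hf]
    simp only [LinearMap.flip_apply]
    rw [toDual_basisFun_dot]
  -- kernel of the perturbed matrix
  have hkerL : LinearMap.ker (A + vecMulVec x x).mulVecLin = K ⊓ LinearMap.ker f := by
    ext v
    simp only [LinearMap.mem_ker, Submodule.mem_inf, Matrix.mulVecLin_apply, hK, hfapp]
    rw [Matrix.add_mulVec, vecMulVec_mulVec']
    constructor
    · intro h
      have h2 : v ⬝ᵥ (A *ᵥ v + (x ⬝ᵥ v) • x) = 0 := by rw [h]; simp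
      rw [dotProduct_add, skew_self_dot d A hA, dotProduct_smul, smul_eq_mul, zero_add] at h2
      rw [dotProduct_comm v x] at h2
      have hx0 : x ⬝ᵥ v = 0 := mul_self_eq_zero.mp h2
      refine ⟨?_, hx0⟩
      rw [hx0, zero_smul, add_zero] at h
      exact h
    · rintro ⟨h1, h2⟩
      rw [h1, h2, zero_smul, add_zero]
  -- rank-nullity for A + xxᵀ
  have hrn2 : (A + vecMulVec x x).rank + finrank ℂ ↥(K ⊓ LinearMap.ker f) = d := by
    have := LinearMap.finrank_range_add_finrank_ker (A + vecMulVec x x).mulVecLin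
    rw [hfind, hkerL] at this
    exact this
  constructor
  · -- case x in row space
    intro hx
    have hx' := (hiff x).mp hx
    have hKsub : K ⊓ LinearMap.ker f = K := by
      apply inf_eq_left.mpr
      intro v hv
      rw [LinearMap.mem_ker, hfapp]
      exact hx' v hv
    rw [hKsub] at hrn2
    omega
  · -- case x not in row space
    intro hx
    have hx' := (hiff x).not.mp hx
    push_neg at hx'
    obtain ⟨v, hvK, hvx⟩ := hx'
    -- f is a nonzero functional, so its kernel is a hyperplane
    have hfker : finrank ℂ ↥(LinearMap.ker f) + 1 = d := by
      have h1 := LinearMap.finrank_range_add_finrank_ker f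
      have h2 : LinearMap.range f = ⊤ := by
        rw [LinearMap.range_eq_top]
        intro c
        refine ⟨(c * (x ⬝ᵥ v)⁻¹) • v, ?_⟩
        rw [_root_.map_smul, hfapp, smul_eq_mul]
        field_simp
      rw [h2, finrank_top, hfind] at h1
      have h3 : finrank ℂ ℂ = 1 := Module.finrank_self ℂ
      omega
    -- the intersection is strictly smaller than K
    have hlt : finrank ℂ ↥(K ⊓ LinearMap.ker f) < finrank ℂ K := by
      apply Submodule.finrank_lt_finrank_of_lt
      refine lt_of_le_of_ne inf_le_left ?_
      intro h
      have hmem : v ∈ K ⊓ LinearMap.ker f := h.symm ▸ hvK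
      have h2 : f v = 0 := hmem.2
      rw [hfapp] at h2
      exact hvx h2
    have hsup := Submodule.finrank_sup_add_finrank_inf_eq K (LinearMap.ker f)
    have hsuple : finrank ℂ ↥(K ⊔ LinearMap.ker f) ≤ d := by
      have := Submodule.finrank_le (K ⊔ LinearMap.ker f)
      rwa [hfind] at this
    omega
end

section
/- Let V = ℂ² with standard basis e₁, e₂. Parametrize Lie¹V ⊕ Lie²V ⊕ Lie³V by coordinates (s₁, s₂, t, u₁, u₂) with respect to the bases {e₁, e₂} of Lie¹V, {[e₁,e₂]} of Lie²V, and {[e₁,[e₁,e₂]], [[e₁,e₂],e₂]} of Lie³V, where SL₂(ℂ) acts on the degree-i component via the diagonal action g^{⊗i} on V^{⊗i}. Then the ring of SL₂(ℂ)-invariant polynomial functions on Lie¹V ⊕ Lie²V ⊕ Lie³V is the polynomial ring generated by the two invariants t and s₂u₁ + s₁u₂, and these two polynomials are algebraically independent over ℂ (so the invariant ring is freely generated by them). -/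
/-- Action of a `2 × 2` matrix on vectors in `ℂ²` (the first level `Lie¹(ℂ²)`). -/
noncomputable def act1 (g : Matrix (Fin 2) (Fin 2) ℂ) (v : Fin 2 → ℂ) : Fin 2 → ℂ :=
  g.mulVec v

/-- Diagonal action `g^{⊗2}` on order-2 tensors over `ℂ²`, in coordinates. -/
noncomputable def act2 (g : Matrix (Fin 2) (Fin 2) ℂ)
    (M : Fin 2 → Fin 2 → ℂ) : Fin 2 → Fin 2 → ℂ :=
  fun i j => ∑ i' : Fin 2, ∑ j' : Fin 2, g i i' * g j j' * M i' j'

/-- Diagonal action `g^{⊗3}` on order-3 tensors over `ℂ²`, in coordinates. -/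
noncomputable def act3 (g : Matrix (Fin 2) (Fin 2) ℂ)
    (T : Fin 2 → Fin 2 → Fin 2 → ℂ) : Fin 2 → Fin 2 → Fin 2 → ℂ :=
  fun i j k => ∑ i' : Fin 2, ∑ j' : Fin 2, ∑ k' : Fin 2,
    g i i' * g j j' * g k k' * T i' j' k'

/-- The Lyndon basis tensor `[e₁,[e₁,e₂]] = e₁⊗e₁⊗e₂ − 2e₁⊗e₂⊗e₁ + e₂⊗e₁⊗e₁`
of `Lie³(ℂ²)`, in coordinates. -/
noncomputable def lyndonB1 : Fin 2 → Fin 2 → Fin 2 → ℂ := fun i j k =>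
  if i = 0 ∧ j = 0 ∧ k = 1 then 1
  else if i = 0 ∧ j = 1 ∧ k = 0 then -2
  else if i = 1 ∧ j = 0 ∧ k = 0 then 1
  else 0

/-- The Lyndon basis tensor `[[e₁,e₂],e₂] = e₁⊗e₂⊗e₂ − 2e₂⊗e₁⊗e₂ + e₂⊗e₂⊗e₁`
of `Lie³(ℂ²)`, in coordinates. -/
noncomputable def lyndonB2 : Fin 2 → Fin 2 → Fin 2 → ℂ := fun i j k =>
  if i = 0 ∧ j = 1 ∧ k = 1 then 1
  else if i = 1 ∧ j = 0 ∧ k = 1 then -2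
  else if i = 1 ∧ j = 1 ∧ k = 0 then 1
  else 0

/-- The element of `Lie¹(ℂ²) ⊕ Lie²(ℂ²) ⊕ Lie³(ℂ²)` with coordinates
`(s₁, s₂, t, u₁, u₂)` with respect to the bases `{e₁, e₂}`, `{[e₁,e₂]}` and
`{[e₁,[e₁,e₂]], [[e₁,e₂],e₂]}`, realized inside
`ℂ² × (ℂ²)^{⊗2} × (ℂ²)^{⊗3}` in coordinates. -/
noncomputable def lieElt (s₁ s₂ t u₁ u₂ : ℂ) :
    (Fin 2 → ℂ) × (Fin 2 → Fin 2 → ℂ) × (Fin 2 → Fin 2 → Fin 2 → ℂ) :=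
  (![s₁, s₂],
   fun i j => if i = 0 ∧ j = 1 then t else if i = 1 ∧ j = 0 then -t else 0,
   fun i j k => u₁ * lyndonB1 i j k + u₂ * lyndonB2 i j k)

/-- The diagonal `SL₂`-action on `Lie¹(ℂ²) ⊕ Lie²(ℂ²) ⊕ Lie³(ℂ²)`, realized on
the ambient coordinate tensor spaces. -/
noncomputable def actLie (g : Matrix (Fin 2) (Fin 2) ℂ)
    (x : (Fin 2 → ℂ) × (Fin 2 → Fin 2 → ℂ) × (Fin 2 → Fin 2 → Fin 2 → ℂ)) :
    (Fin 2 → ℂ) × (Fin 2 → Fin 2 → ℂ) × (Fin 2 → Fin 2 → Fin 2 → ℂ) :=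
  (act1 g x.1, act2 g x.2.1, act3 g x.2.2)

open MvPolynomial in
private lemma lie_key (a b c d : ℂ) (h : a * d - b * c = 1) (s₁ s₂ t u₁ u₂ : ℂ) :
    actLie !![a, b; c, d] (lieElt s₁ s₂ t u₁ u₂) =
    lieElt (a * s₁ + b * s₂) (c * s₁ + d * s₂) t
      (a * u₁ - b * u₂) (-c * u₁ + d * u₂) := by
  refine Prod.ext ?_ (Prod.ext ?_ ?_)
  · funext i
    fin_cases i <;>
      simp [actLie, act1, lieElt, Matrix.mulVec, dotProduct, Fin.sum_univ_two] <;> ring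
  · funext i j
    fin_cases i <;> fin_cases j <;>
      simp [actLie, act2, lieElt, Fin.sum_univ_two] <;>
      (first | ring1 | linear_combination t * h | linear_combination (-t) * h)
  · funext i j k
    fin_cases i <;> fin_cases j <;> fin_cases k <;>
      simp [actLie, act3, lieElt, lyndonB1, lyndonB2, Fin.sum_univ_two] <;>
      (first | ring1 | linear_combination (a * u₁ - b * u₂) * h | linear_combination (-2 * (a * u₁ - b * u₂)) * h | linear_combination (d * u₂ - c * u₁) * h | linear_combination (2 * (c * u₁ - d * u₂)) * h)

private lemma lieElt_inj {a b c d e a' b' c' d' e' : ℂ}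
    (h : lieElt a b c d e = lieElt a' b' c' d' e') :
    a = a' ∧ b = b' ∧ c = c' ∧ d = d' ∧ e = e' := by
  have h1 := congrFun (congrArg Prod.fst h) 0
  have h2 := congrFun (congrArg Prod.fst h) 1
  have h3 := congrFun (congrFun (congrArg (fun x => x.2.1) h) 0) 1
  have h4 := congrFun (congrFun (congrFun (congrArg (fun x => x.2.2) h) 0) 0) 1
  have h5 := congrFun (congrFun (congrFun (congrArg (fun x => x.2.2) h) 0) 1) 1
  simp [lieElt, lyndonB1, lyndonB2] at h1 h2 h3 h4 h5
  exact ⟨h1, h2, h3, h4, h5⟩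

open MvPolynomial

private lemma part_i (g : Matrix (Fin 2) (Fin 2) ℂ) (hg : g.det = 1)
    (s₁ s₂ t u₁ u₂ s₁' s₂' t' u₁' u₂' : ℂ)
    (h : actLie g (lieElt s₁ s₂ t u₁ u₂) = lieElt s₁' s₂' t' u₁' u₂') :
    s₁' = g 0 0 * s₁ + g 0 1 * s₂ ∧ s₂' = g 1 0 * s₁ + g 1 1 * s₂ ∧ t' = t ∧
    u₁' = g 0 0 * u₁ - g 0 1 * u₂ ∧ u₂' = -(g 1 0) * u₁ + g 1 1 * u₂ := by
  rw [Matrix.det_fin_two] at hg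
  have hk := lie_key (g 0 0) (g 0 1) (g 1 0) (g 1 1) hg s₁ s₂ t u₁ u₂
  rw [← Matrix.eta_fin_two g] at hk
  obtain ⟨e1, e2, e3, e4, e5⟩ := lieElt_inj (hk.symm.trans h)
  exact ⟨e1.symm, e2.symm, e3.symm, e4.symm, e5.symm⟩

private lemma eval_bind₁' (g : Fin 5 → MvPolynomial (Fin 5) ℂ) (F : MvPolynomial (Fin 5) ℂ)
    (x : Fin 5 → ℂ) :
    eval x (bind₁ g F) = eval (fun i => eval x (g i)) F :=
  eval₂Hom_bind₁ _ _ _ _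

private lemma eval_bind₁'' (g : Fin 5 → MvPolynomial (Fin 2) ℂ) (F : MvPolynomial (Fin 5) ℂ)
    (x : Fin 2 → ℂ) :
    eval x (bind₁ g F) = eval (fun i => eval x (g i)) F :=
  eval₂Hom_bind₁ _ _ _ _

private lemma vec5_eta (x : Fin 5 → ℂ) : x = ![x 0, x 1, x 2, x 3, x 4] := by
  funext i; fin_cases i <;> rfl

private noncomputable def P2 (F : MvPolynomial (Fin 5) ℂ) : MvPolynomial (Fin 5) ℂ :=
  bind₁ ![0, 1, X 2, X 1 * X 3 + X 0 * X 4, 0] F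

private lemma eval_P2 (F : MvPolynomial (Fin 5) ℂ) (x : Fin 5 → ℂ) :
    eval x (P2 F) = eval ![0, 1, x 2, x 1 * x 3 + x 0 * x 4, 0] F := by
  rw [P2, eval_bind₁']
  have hv : (fun i => eval x (![0, 1, X 2, X 1 * X 3 + X 0 * X 4, 0] i)) =
      ![0, 1, x 2, x 1 * x 3 + x 0 * x 4, 0] := by
    funext i; fin_cases i <;> simp
  rw [hv]
private lemma invariant_pointwise (F : MvPolynomial (Fin 5) ℂ)
    (hF : ∀ g : Matrix (Fin 2) (Fin 2) ℂ, g.det = 1 →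
      ∀ s₁ s₂ t u₁ u₂ s₁' s₂' t' u₁' u₂' : ℂ,
        actLie g (lieElt s₁ s₂ t u₁ u₂) = lieElt s₁' s₂' t' u₁' u₂' →
          MvPolynomial.eval ![s₁, s₂, t, u₁, u₂] F =
            MvPolynomial.eval ![s₁', s₂', t', u₁', u₂'] F)
    (s₁ s₂ t u₁ u₂ : ℂ) (hs : s₂ ≠ 0) (hv : s₂ * u₁ + s₁ * u₂ ≠ 0) :
    eval ![s₁, s₂, t, u₁, u₂] F = eval ![0, 1, t, s₂ * u₁ + s₁ * u₂, 0] F := by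
  set v := s₂ * u₁ + s₁ * u₂ with hvdef
  have hd1 : s₂ * s₂⁻¹ - (-s₁) * 0 = 1 := by field_simp; ring
  have hk1 := lie_key s₂ (-s₁) 0 s₂⁻¹ hd1 s₁ s₂ t u₁ u₂
  rw [show s₂ * s₁ + -s₁ * s₂ = 0 by ring, show (0:ℂ) * s₁ + s₂⁻¹ * s₂ = 1 by field_simp; ring,
    show s₂ * u₁ - -s₁ * u₂ = v by rw [hvdef]; ring,
    show -(0:ℂ) * u₁ + s₂⁻¹ * u₂ = s₂⁻¹ * u₂ by ring] at hk1
  have hdet1 : (!![s₂, -s₁; 0, s₂⁻¹]).det = 1 := by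
    rw [Matrix.det_fin_two_of]; field_simp; ring
  have e1 := hF _ hdet1 s₁ s₂ t u₁ u₂ 0 1 t v (s₂⁻¹ * u₂) hk1
  have hd2 : (1:ℂ) * 1 - 0 * (s₂⁻¹ * u₂ * v⁻¹) = 1 := by ring
  have hk2 := lie_key 1 0 (s₂⁻¹ * u₂ * v⁻¹) 1 hd2 0 1 t v (s₂⁻¹ * u₂)
  rw [show (1:ℂ) * 0 + 0 * 1 = 0 by ring, show (s₂⁻¹ * u₂ * v⁻¹) * 0 + 1 * 1 = 1 by ring,
    show (1:ℂ) * v - 0 * (s₂⁻¹ * u₂) = v by ring,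
    show -(s₂⁻¹ * u₂ * v⁻¹) * v + 1 * (s₂⁻¹ * u₂) = 0 by field_simp; ring] at hk2
  have hdet2 : (!![(1:ℂ), 0; s₂⁻¹ * u₂ * v⁻¹, 1]).det = 1 := by
    rw [Matrix.det_fin_two_of]; ring
  have e2 := hF _ hdet2 0 1 t v (s₂⁻¹ * u₂) 0 1 t v 0 hk2
  exact e1.trans e2

private lemma F_eq_P2 (F : MvPolynomial (Fin 5) ℂ)
    (hF : ∀ g : Matrix (Fin 2) (Fin 2) ℂ, g.det = 1 →
      ∀ s₁ s₂ t u₁ u₂ s₁' s₂' t' u₁' u₂' : ℂ,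
        actLie g (lieElt s₁ s₂ t u₁ u₂) = lieElt s₁' s₂' t' u₁' u₂' →
          MvPolynomial.eval ![s₁, s₂, t, u₁, u₂] F =
            MvPolynomial.eval ![s₁', s₂', t', u₁', u₂'] F) :
    F = P2 F := by
  have hz : (X 1 * (X 1 * X 3 + X 0 * X 4) : MvPolynomial (Fin 5) ℂ) * (F - P2 F) = 0 := by
    apply MvPolynomial.funext
    intro x
    simp only [map_mul, map_add, map_sub, eval_X, map_zero]
    by_cases h1 : x 1 = 0
    · rw [h1]; ring
    by_cases h2 : x 1 * x 3 + x 0 * x 4 = 0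
    · rw [h2]; ring
    · have hpt := invariant_pointwise F hF (x 0) (x 1) (x 2) (x 3) (x 4) h1 h2
      have hxF : eval x F = eval x (P2 F) := by
        rw [eval_P2]
        calc eval x F = eval ![x 0, x 1, x 2, x 3, x 4] F := by rw [← vec5_eta]
          _ = eval ![0, 1, x 2, x 1 * x 3 + x 0 * x 4, 0] F := hpt
      rw [hxF]; ring
  have hQ : (X 1 * (X 1 * X 3 + X 0 * X 4) : MvPolynomial (Fin 5) ℂ) ≠ 0 := by
    intro h
    have := congrArg (eval (fun _ => 1)) h
    simp at this
  exact sub_eq_zero.mp ((mul_eq_zero.mp hz).resolve_left hQ)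

/-- In coordinates `(s₁, s₂, t, u₁, u₂)` on
`Lie¹(ℂ²) ⊕ Lie²(ℂ²) ⊕ Lie³(ℂ²)`:
(i) the polynomials `t` and `s₂u₁ + s₁u₂` are `SL₂(ℂ)`-invariant;
(ii) every `SL₂(ℂ)`-invariant polynomial function is a polynomial in `t` and
`s₂u₁ + s₁u₂`; and
(iii) `t` and `s₂u₁ + s₁u₂` are algebraically independent over `ℂ`,
so the invariant ring is freely generated by these two invariants. -/
theorem invariants_Lie_le_three_C2 :
    (∀ g : Matrix (Fin 2) (Fin 2) ℂ, g.det = 1 →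
      ∀ s₁ s₂ t u₁ u₂ s₁' s₂' t' u₁' u₂' : ℂ,
        actLie g (lieElt s₁ s₂ t u₁ u₂) = lieElt s₁' s₂' t' u₁' u₂' →
          t' = t ∧ s₂' * u₁' + s₁' * u₂' = s₂ * u₁ + s₁ * u₂) ∧
    (∀ F : MvPolynomial (Fin 5) ℂ,
      (∀ g : Matrix (Fin 2) (Fin 2) ℂ, g.det = 1 →
        ∀ s₁ s₂ t u₁ u₂ s₁' s₂' t' u₁' u₂' : ℂ,
          actLie g (lieElt s₁ s₂ t u₁ u₂) = lieElt s₁' s₂' t' u₁' u₂' →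
            MvPolynomial.eval ![s₁, s₂, t, u₁, u₂] F =
              MvPolynomial.eval ![s₁', s₂', t', u₁', u₂'] F) →
      ∃ G : MvPolynomial (Fin 2) ℂ,
        ∀ s₁ s₂ t u₁ u₂ : ℂ,
          MvPolynomial.eval ![s₁, s₂, t, u₁, u₂] F =
            MvPolynomial.eval ![t, s₂ * u₁ + s₁ * u₂] G) ∧
    AlgebraicIndependent ℂ
      (![MvPolynomial.X 2,
         MvPolynomial.X 1 * MvPolynomial.X 3 + MvPolynomial.X 0 * MvPolynomial.X 4] :
        Fin 2 → MvPolynomial (Fin 5) ℂ) := by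
  refine ⟨?_, ?_, ?_⟩
  · intro g hg s₁ s₂ t u₁ u₂ s₁' s₂' t' u₁' u₂' h
    obtain ⟨e1, e2, e3, e4, e5⟩ := part_i g hg s₁ s₂ t u₁ u₂ s₁' s₂' t' u₁' u₂' h
    rw [Matrix.det_fin_two] at hg
    refine ⟨e3, ?_⟩
    rw [e1, e2, e4, e5]
    linear_combination (s₂ * u₁ + s₁ * u₂) * hg
  · intro F hF
    refine ⟨bind₁ ![(0 : MvPolynomial (Fin 2) ℂ), 1, X 0, X 1, 0] F, ?_⟩
    intro s₁ s₂ t u₁ u₂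
    have hG : eval ![t, s₂ * u₁ + s₁ * u₂]
        (bind₁ ![(0 : MvPolynomial (Fin 2) ℂ), 1, X 0, X 1, 0] F) =
        eval ![0, 1, t, s₂ * u₁ + s₁ * u₂, 0] F := by
      rw [eval_bind₁'']
      have hv : (fun i => eval ![t, s₂ * u₁ + s₁ * u₂]
          (![(0 : MvPolynomial (Fin 2) ℂ), 1, X 0, X 1, 0] i)) =
          ![0, 1, t, s₂ * u₁ + s₁ * u₂, 0] := by
        funext i; fin_cases i <;> simp
      rw [hv]
    rw [hG]
    conv_lhs => rw [F_eq_P2 F hF]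
    rw [eval_P2]
    norm_num
    rfl
  · have hX := MvPolynomial.algebraicIndependent_X (Fin 2) ℂ
    refine AlgebraicIndependent.of_comp
      (aeval ![(0 : MvPolynomial (Fin 2) ℂ), 1, X 0, X 1, 0]) ?_
    have hc : (aeval ![(0 : MvPolynomial (Fin 2) ℂ), 1, X 0, X 1, 0]) ∘
        (![MvPolynomial.X 2,
          MvPolynomial.X 1 * MvPolynomial.X 3 + MvPolynomial.X 0 * MvPolynomial.X 4] :
          Fin 2 → MvPolynomial (Fin 5) ℂ) = X := by
      funext i; fin_cases i <;> simp
    rw [hc]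
    exact hX
end

section
/- Let d = 2e be even and let T_i ∈ Lie^i(ℂ^d) for 1 ≤ i ≤ d. Then the full antisymmetrization of the signature tensor φ_d(T₁,…,T_d) depends only on T₂; precisely, Σ_{σ ∈ S_d} sgn(σ)·σ·φ_d(T₁,…,T_d) = Σ_{σ ∈ S_d} sgn(σ)·σ·((1/e!)·T₂^{⊗e}), where σ acts on V^{⊗d} by permuting the tensor factors. -/
namespace S14
variable {d : ℕ}

/-- word given by letters `j s, j (s+1), …, j (s+l-1)` -/
def W (j : ℕ → Fin d) (s l : ℕ) : Word d := (List.range' s l).map j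

@[simp] lemma W_length (j : ℕ → Fin d) (s l : ℕ) : (W j s l).length = l := by
  simp [W]

lemma W_append (j : ℕ → Fin d) (s a b : ℕ) : W j s (a + b) = W j s a ++ W j (s + a) b := by
  unfold W
  rw [← List.range'_append_1, List.map_append]

@[simp] lemma W_one (j : ℕ → Fin d) (s : ℕ) : W j s 1 = [j s] := by simp [W]

lemma W_take (j : ℕ → Fin d) (s a b : ℕ) : (W j s (a + b)).take a = W j s a := by
  rw [W_append]
  exact List.take_left' (by simp)

lemma W_drop (j : ℕ → Fin d) (s a b : ℕ) : (W j s (a + b)).drop a = W j (s + a) b := by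
  rw [W_append]
  exact List.drop_left' (by simp)

lemma W_congr {j j' : ℕ → Fin d} {s l : ℕ} (h : ∀ m, s ≤ m → m < s + l → j m = j' m) :
    W j s l = W j' s l := by
  unfold W
  refine List.map_congr_left ?_
  intro m hm
  rw [List.mem_range'_1] at hm
  exact h m hm.1 hm.2

/-- support predicate -/
def Supp (p : ℕ × TSeries d) : Prop := ∀ w : Word d, w.length ≠ p.1 → p.2 w = 0

lemma mulT_eval {a : ℕ} {x : TSeries d} (hx : ∀ w : Word d, w.length ≠ a → x w = 0)
    (y : TSeries d) (w : Word d) :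
    mulT x y w = if a ≤ w.length then x (w.take a) * y (w.drop a) else 0 := by
  unfold mulT
  split_ifs with h
  · refine Finset.sum_eq_single a (fun i hi hne => ?_) (fun ha => ?_)
    · rw [Finset.mem_range] at hi
      rw [hx _ (by simp; omega), zero_mul]
    · exfalso; exact ha (Finset.mem_range.2 (by omega))
  · refine Finset.sum_eq_zero (fun i hi => ?_)
    rw [Finset.mem_range] at hi
    rw [hx _ (by simp; omega), zero_mul]

lemma mulT_eval_W {a : ℕ} {x : TSeries d} (hx : ∀ w : Word d, w.length ≠ a → x w = 0)
    (y : TSeries d) (j : ℕ → Fin d) (s b : ℕ) :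
    mulT x y (W j s (a + b)) = x (W j s a) * y (W j (s + a) b) := by
  rw [mulT_eval hx, W_take, W_drop, if_pos (by simp)]

/-- degree-tagged factor list product, in "offset" form -/
noncomputable def prodF : List (ℕ × TSeries d) → ℕ → (ℕ → Fin d) → ℂ
  | [], _, _ => 1
  | (b, x) :: L, s, j => x (W j s b) * prodF L (s + b) j

def sumdeg (L : List (ℕ × TSeries d)) : ℕ := (L.map Prod.fst).sum

@[simp] lemma sumdeg_nil : sumdeg ([] : List (ℕ × TSeries d)) = 0 := rfl
@[simp] lemma sumdeg_cons (p : ℕ × TSeries d) (L : List (ℕ × TSeries d)) :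
    sumdeg (p :: L) = p.1 + sumdeg L := by simp [sumdeg]
@[simp] lemma sumdeg_append (L1 L2 : List (ℕ × TSeries d)) :
    sumdeg (L1 ++ L2) = sumdeg L1 + sumdeg L2 := by simp [sumdeg]

lemma prodF_append (L1 L2 : List (ℕ × TSeries d)) (s : ℕ) (j : ℕ → Fin d) :
    prodF (L1 ++ L2) s j = prodF L1 s j * prodF L2 (s + sumdeg L1) j := by
  induction L1 generalizing s with
  | nil => simp [prodF]
  | cons p L ih =>
    obtain ⟨b, x⟩ := p
    simp only [List.cons_append, List.append_eq, prodF, sumdeg_cons, ih, mul_assoc, add_assoc]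

lemma prodF_congr {L : List (ℕ × TSeries d)} {s : ℕ} {j j' : ℕ → Fin d}
    (h : ∀ m, s ≤ m → m < s + sumdeg L → j m = j' m) :
    prodF L s j = prodF L s j' := by
  induction L generalizing s with
  | nil => simp [prodF]
  | cons p L ih =>
    obtain ⟨b, x⟩ := p
    simp only [prodF]
    rw [W_congr (fun m h1 h2 => h m h1 (by simp at h2 ⊢; omega)),
      ih (fun m h1 h2 => h m (by omega) (by simp at h2 ⊢; omega))]

lemma prodT_eval (ps : List (ℕ × TSeries d)) (hs : ∀ p ∈ ps, Supp p) (s : ℕ) (j : ℕ → Fin d) :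
    prodT (ps.map Prod.snd) (W j s (sumdeg ps)) = prodF ps s j := by
  induction ps generalizing s with
  | nil => simp [prodT, prodF, oneT, W]
  | cons p L ih =>
    obtain ⟨b, x⟩ := p
    simp only [List.map_cons, prodT, sumdeg_cons, prodF]
    rw [mulT_eval_W (fun w hw => hs (b, x) (by simp) w hw)]
    rw [ih (fun q hq => hs q (by simp [hq]))]

lemma isLieElem_supp {k : ℕ} {x : TSeries d} (h : IsLieElem d k x) :
    ∀ w : Word d, w.length ≠ k → x w = 0 := by
  induction h with
  | base v =>
    intro w hw
    match w, hw with
    | [], hw => rfl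
    | [j], hw => exact absurd rfl hw
    | (a :: b :: t), hw => rfl
  | @bracket a b x y hx hy ihx ihy =>
    intro w hw
    have hsub : ∀ (u v : TSeries d), (∀ w', w'.length ≠ a → u w' = 0) →
        (∀ w', w'.length ≠ b → v w' = 0) → mulT u v w = 0 := by
      intro u v hu hv
      refine Finset.sum_eq_zero (fun i hi => ?_)
      rw [Finset.mem_range] at hi
      by_cases h1 : (w.take i).length = a
      · rw [hv _ (by simp at h1 ⊢; omega), mul_zero]
      · rw [hu _ h1, zero_mul]
    have h2 : ∀ (u v : TSeries d), (∀ w', w'.length ≠ b → u w' = 0) →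
        (∀ w', w'.length ≠ a → v w' = 0) → mulT u v w = 0 := by
      intro u v hu hv
      refine Finset.sum_eq_zero (fun i hi => ?_)
      rw [Finset.mem_range] at hi
      by_cases h1 : (w.take i).length = b
      · rw [hv _ (by simp at h1 ⊢; omega), mul_zero]
      · rw [hu _ h1, zero_mul]
    have := hsub x y ihx ihy
    have := h2 y x ihy ihx
    simp only [Pi.sub_apply]
    rw [hsub x y ihx ihy, h2 y x ihy ihx, sub_zero]

lemma isLieElem_deg_pos {k : ℕ} {x : TSeries d} (h : IsLieElem d k x) : 1 ≤ k := by
  induction h with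
  | base v => exact le_refl 1
  | bracket hx hy ihx ihy => omega

lemma lieGradeC_supp {k : ℕ} {x : TSeries d} (h : x ∈ lieGradeC d k) :
    ∀ w : Word d, w.length ≠ k → x w = 0 := by
  induction h using Submodule.span_induction with
  | mem z hz => exact isLieElem_supp hz
  | zero => intro w hw; rfl
  | add u v hu hv ihu ihv =>
    intro w hw
    simp only [Pi.add_apply, ihu w hw, ihv w hw, add_zero]
  | smul a u hu ihu =>
    intro w hw
    simp only [Pi.smul_apply, ihu w hw, smul_zero]

section Alt
variable (hd : 0 < d) (i : Fin d → Fin d)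

/-- extension of a `Fin d`-indexed function to `ℕ` by a junk value -/
def hat (g : Fin d → Fin d) : ℕ → Fin d := fun m => if h : m < d then g ⟨m, h⟩ else ⟨0, hd⟩

/-- the antisymmetrization of `prodF ps` evaluated at the letters `i` -/
noncomputable def Falt (ps : List (ℕ × TSeries d)) : ℂ :=
  ∑ σ : Equiv.Perm (Fin d), ((Equiv.Perm.sign σ : ℤ) : ℂ) *
    prodF ps 0 (hat hd (fun m => i (σ m)))

lemma ofFn_eq_W (g : Fin d → Fin d) : List.ofFn g = W (hat hd g) 0 d := by
  refine List.ext_getElem (by simp) (fun m h1 h2 => ?_)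
  simp only [List.getElem_ofFn, W, List.getElem_map, List.getElem_range']
  simp only [List.length_ofFn] at h1
  simp [hat, h1]

/-- The bridge from `prodT`+`ofFn` to `Falt`. -/
lemma alt_bridge (ps : List (ℕ × TSeries d)) (hs : ∀ p ∈ ps, Supp p) (htot : sumdeg ps = d) :
    ∑ σ : Equiv.Perm (Fin d), ((Equiv.Perm.sign σ : ℤ) : ℂ) *
      prodT (ps.map Prod.snd) (List.ofFn fun m => i (σ m)) = Falt hd i ps := by
  refine Finset.sum_congr rfl (fun σ _ => ?_)
  rw [ofFn_eq_W hd,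
    show W (hat hd fun m => i (σ m)) 0 d = W (hat hd fun m => i (σ m)) 0 (sumdeg ps) from by
      rw [htot],
    prodT_eval ps hs]

/-- If precomposition with a position-permutation `π` (given as `f : ℕ → ℕ`) turns
`prodF qs` into `prodF ps`, the antisymmetrizations agree up to `sign π`. -/
lemma Falt_reindex (π : Equiv.Perm (Fin d)) (f : ℕ → ℕ)
    (hf1 : ∀ (m : ℕ) (h : m < d), ((π ⟨m, h⟩ : Fin d) : ℕ) = f m)
    (hf2 : ∀ m, d ≤ m → f m = m)
    (ps qs : List (ℕ × TSeries d))
    (hK : ∀ j : ℕ → Fin d, prodF ps 0 (j ∘ f) = prodF qs 0 j) :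
    Falt hd i qs = ((Equiv.Perm.sign π : ℤ) : ℂ) * Falt hd i ps := by
  have hcomp : ∀ σ : Equiv.Perm (Fin d),
      (hat hd (fun m => i (σ (π m)))) = (hat hd (fun m => i (σ m))) ∘ f := by
    intro σ
    funext m
    by_cases h : m < d
    · have hfd : f m < d := by rw [← hf1 m h]; exact (π ⟨m, h⟩).isLt
      simp only [hat, Function.comp_apply, dif_pos h, dif_pos hfd]
      congr 1
      congr 1
      exact Fin.ext (hf1 m h)
    · have : f m = m := hf2 m (by omega)
      simp [hat, Function.comp_apply, this, h]
  calc Falt hd i qs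
      = ∑ σ : Equiv.Perm (Fin d), ((Equiv.Perm.sign σ : ℤ) : ℂ) *
          prodF ps 0 (hat hd (fun m => i (σ m)) ∘ f) := by
        refine Finset.sum_congr rfl (fun σ _ => ?_)
        rw [hK]
    _ = ∑ σ : Equiv.Perm (Fin d), ((Equiv.Perm.sign σ : ℤ) : ℂ) *
          prodF ps 0 (hat hd (fun m => i ((σ * π) m))) := by
        refine Finset.sum_congr rfl (fun σ _ => ?_)
        congr 1
        rw [← hcomp σ]
        rfl
    _ = ((Equiv.Perm.sign π : ℤ) : ℂ) * Falt hd i ps := by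
        rw [Falt, Finset.mul_sum]
        rw [← Equiv.sum_comp (Equiv.mulRight π⁻¹)
          (fun σ => ((Equiv.Perm.sign σ : ℤ) : ℂ) *
            prodF ps 0 (hat hd (fun m => i ((σ * π) m))))]
        refine Finset.sum_congr rfl (fun σ _ => ?_)
        simp only [Equiv.coe_mulRight, inv_mul_cancel_right]
        rw [Equiv.Perm.sign_mul, Equiv.Perm.sign_inv]
        rcases Int.units_eq_one_or (Equiv.Perm.sign σ) with h1 | h1 <;>
          rcases Int.units_eq_one_or (Equiv.Perm.sign π) with h2 | h2 <;>
            simp [h1, h2]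

end Alt

section Wf

/-- rotation by `t` inside the window `[s, s+n)`, as a function on `ℕ` -/
def wf (s n t x : ℕ) : ℕ := if s ≤ x ∧ x < s + n then s + ((x - s + t) % n) else x

lemma wf_npos {s n t x : ℕ} (h : s ≤ x ∧ x < s + n) : 0 < n := by omega

lemma wf_lt {s n t x : ℕ} (hsn : s + n ≤ d) (hx : x < d) : wf s n t x < d := by
  unfold wf
  split_ifs with h
  · have := wf_npos (t := t) h
    have := Nat.mod_lt (x - s + t) this
    omega
  · exact hx

lemma wf_comp (s n t t' x : ℕ) : wf s n t (wf s n t' x) = wf s n (t' + t) x := by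
  by_cases h : s ≤ x ∧ x < s + n
  · have hn : 0 < n := by omega
    have h1 : wf s n t' x = s + ((x - s + t') % n) := if_pos h
    have hm := Nat.mod_lt (x - s + t') hn
    rw [h1]
    unfold wf
    rw [if_pos ⟨by omega, by omega⟩, if_pos h, Nat.add_sub_cancel_left, Nat.mod_add_mod]
    congr 1
    congr 1
    omega
  · rw [show wf s n t' x = x from if_neg h]
    unfold wf
    rw [if_neg h, if_neg h]

lemma wf_id_of_dvd {s n t : ℕ} (h : n ∣ t) (x : ℕ) : wf s n t x = x := by
  unfold wf
  split_ifs with hx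
  · obtain ⟨c, rfl⟩ := h
    rw [show x - s + n * c = (x - s) + c * n by ring, Nat.add_mul_mod_self_right,
      Nat.mod_eq_of_lt (by omega)]
    omega
  · rfl

lemma wf_outside {s n t x : ℕ} (h : x < s ∨ s + n ≤ x) : wf s n t x = x := by
  unfold wf
  rw [if_neg (by omega)]

lemma wf_n0 (s t x : ℕ) : wf s 0 t x = x := by
  unfold wf
  rw [if_neg (by omega)]

lemma wf_cancel (s n t x : ℕ) : wf s n (t * (n - 1)) (wf s n t x) = x := by
  rw [wf_comp]
  rcases n with _ | m
  · exact wf_n0 _ _ _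
  · exact wf_id_of_dvd ⟨t, by simp only [Nat.add_sub_cancel]; ring⟩ x

lemma wf_cancel' (s n t x : ℕ) : wf s n t (wf s n (t * (n - 1)) x) = x := by
  rw [wf_comp]
  rcases n with _ | m
  · exact wf_n0 _ _ _
  · exact wf_id_of_dvd ⟨t, by simp only [Nat.add_sub_cancel]; ring⟩ x

variable {d : ℕ}

/-- rotation by `t` inside the window `[s, s+n)`, as a permutation of `Fin d` -/
def wperm (s n t : ℕ) (h : s + n ≤ d) : Equiv.Perm (Fin d) where
  toFun m := ⟨wf s n t m, wf_lt h m.isLt⟩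
  invFun m := ⟨wf s n (t * (n - 1)) m, wf_lt h m.isLt⟩
  left_inv m := Fin.ext (wf_cancel s n t m)
  right_inv m := Fin.ext (wf_cancel' s n t m)

@[simp] lemma wperm_apply_val (s n t : ℕ) (h : s + n ≤ d) (m : Fin d) :
    (wperm s n t h m : ℕ) = wf s n t m := rfl

lemma wperm_pow (s n t : ℕ) (h : s + n ≤ d) : wperm s n t h = (wperm s n 1 h) ^ t := by
  induction t with
  | zero =>
    refine Equiv.ext (fun m => Fin.ext ?_)
    simp only [pow_zero, wperm_apply_val]
    rw [wf_id_of_dvd (dvd_zero n)]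
    rfl
  | succ t iht =>
    refine Equiv.ext (fun m => Fin.ext ?_)
    rw [pow_succ, ← iht]
    show wf s n (t + 1) (m : ℕ) = (wperm s n t h ((wperm s n 1 h) m) : ℕ)
    simp only [wperm_apply_val]
    rw [wf_comp, show 1 + t = t + 1 from Nat.add_comm 1 t]

lemma wf_one_eq (s n x : ℕ) (h : s ≤ x ∧ x < s + n) :
    wf s n 1 x = if x + 1 < s + n then x + 1 else s := by
  unfold wf
  rw [if_pos h]
  split_ifs with h2
  · rw [Nat.mod_eq_of_lt (by omega)]
    omega
  · rw [show x - s + 1 = n by omega, Nat.mod_self]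
    omega

lemma sign_wperm_one : ∀ (n s : ℕ) (h : s + n ≤ d),
    Equiv.Perm.sign (wperm s n 1 h) = (-1) ^ (n - 1) := by
  intro n
  induction n with
  | zero =>
    intro s h
    have : wperm s 0 1 h = 1 := Equiv.ext (fun m => Fin.ext (by
      simp only [wperm_apply_val, wf_n0]; rfl))
    rw [this]
    simp
  | succ n ihn =>
    intro s h
    rcases n with _ | n
    · have : wperm s 1 1 h = 1 := Equiv.ext (fun m => Fin.ext (by
        simp only [wperm_apply_val]
        by_cases hm : s ≤ (m : ℕ) ∧ (m : ℕ) < s + 1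
        · rw [wf_one_eq _ _ _ hm, if_neg (by omega)]
          show s = (m : ℕ)
          omega
        · rw [wf_outside (by omega)]
          rfl))
      rw [this]
      simp
    · -- window size n+2 : decompose
      have hs : s < d := by omega
      have hs1 : s + 1 < d := by omega
      have h2 : (s + 1) + (n + 1) ≤ d := by omega
      have hdec : wperm s (n + 2) 1 h =
          Equiv.swap (⟨s, hs⟩ : Fin d) ⟨s + 1, hs1⟩ * wperm (s + 1) (n + 1) 1 h2 := by
        refine Equiv.ext (fun m => Fin.ext ?_)
        show wf s (n + 2) 1 (m : ℕ) =
          ((Equiv.swap (⟨s, hs⟩ : Fin d) ⟨s + 1, hs1⟩) (wperm (s + 1) (n + 1) 1 h2 m) : ℕ)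
        rcases Nat.lt_trichotomy (m : ℕ) s with hm | hm | hm
        · rw [wf_outside (by omega)]
          have hy : wperm (s + 1) (n + 1) 1 h2 m = m := Fin.ext (by
            simp only [wperm_apply_val]; exact wf_outside (by omega))
          rw [hy, Equiv.swap_apply_of_ne_of_ne
            (by simp [Fin.ext_iff]; omega) (by simp [Fin.ext_iff]; omega)]
        · rw [wf_one_eq _ _ _ (by omega), if_pos (by omega)]
          have hy : wperm (s + 1) (n + 1) 1 h2 m = m := Fin.ext (by
            simp only [wperm_apply_val]; exact wf_outside (by omega))
          rw [hy, show m = (⟨s, hs⟩ : Fin d) from Fin.ext (by simp; omega),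
            Equiv.swap_apply_left]
        · by_cases hm2 : (m : ℕ) < s + n + 2
          · -- inside window, above s
            have hy : (wperm (s + 1) (n + 1) 1 h2 m : ℕ) =
                if (m : ℕ) + 1 < s + n + 2 then (m : ℕ) + 1 else s + 1 := by
              simp only [wperm_apply_val]
              rw [wf_one_eq _ _ _ (by omega)]
              split_ifs with hc1 hc2 <;> omega
            rw [wf_one_eq _ _ _ (by omega)]
            by_cases hm3 : (m : ℕ) + 1 < s + n + 2
            · rw [if_pos (by omega)]
              have : wperm (s + 1) (n + 1) 1 h2 m = ⟨(m : ℕ) + 1, by omega⟩ :=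
                Fin.ext (by rw [hy, if_pos hm3])
              rw [this, Equiv.swap_apply_of_ne_of_ne
                (by simp [Fin.ext_iff]; omega) (by simp [Fin.ext_iff]; omega)]
            · rw [if_neg (by omega)]
              have : wperm (s + 1) (n + 1) 1 h2 m = ⟨s + 1, hs1⟩ :=
                Fin.ext (by rw [hy, if_neg hm3])
              rw [this, Equiv.swap_apply_right]
          · rw [wf_outside (by omega)]
            have hy : wperm (s + 1) (n + 1) 1 h2 m = m := Fin.ext (by
              simp only [wperm_apply_val]; exact wf_outside (by omega))
            rw [hy, Equiv.swap_apply_of_ne_of_ne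
              (by simp [Fin.ext_iff]; omega) (by simp [Fin.ext_iff]; omega)]
      rw [hdec, Equiv.Perm.sign_mul, Equiv.Perm.sign_swap (by simp [Fin.ext_iff]),
        ihn (s + 1) h2]
      show -1 * (-1) ^ (n + 1 - 1) = (-1) ^ (n + 2 - 1)
      rw [show n + 1 - 1 = n by omega, show n + 2 - 1 = n + 1 by omega, pow_succ]
      exact mul_comm _ _

lemma sign_wperm (s n t : ℕ) (h : s + n ≤ d) :
    Equiv.Perm.sign (wperm s n t h) = (-1) ^ ((n - 1) * t) := by
  rw [wperm_pow, map_pow, sign_wperm_one, ← pow_mul]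

end Wf

section Klemmas
variable {d : ℕ}

lemma prodF_slot (pre post : List (ℕ × TSeries d)) (b : ℕ) (z : TSeries d) (s : ℕ)
    (j : ℕ → Fin d) :
    prodF (pre ++ (b, z) :: post) s j =
      z (W j (s + sumdeg pre) b) *
        (prodF pre s j * prodF post (s + sumdeg pre + b) j) := by
  rw [prodF_append]
  show _ * ((fun L s j => prodF L s j) ((b,z) :: post) (s + sumdeg pre) j) = _
  simp only [prodF]
  ring

/-- Swapping two adjacent blocks via the window rotation. -/
lemma K1 (pre post : List (ℕ × TSeries d)) (a b : ℕ) (x y : TSeries d) (j : ℕ → Fin d) :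
    prodF (pre ++ (a, x) :: (b, y) :: post) 0 (j ∘ wf (sumdeg pre) (a + b) b) =
    prodF (pre ++ (b, y) :: (a, x) :: post) 0 j := by
  set s := sumdeg pre with hs
  set j' := j ∘ wf s (a + b) b with hj'
  have hB : W j' s a = W j (s + b) a := by
    unfold W
    rw [show s + b = b + s from Nat.add_comm s b, ← List.map_add_range', List.map_map]
    refine List.map_congr_left (fun m hm => ?_)
    rw [List.mem_range'_1] at hm
    simp only [hj', Function.comp_apply]
    congr 1
    unfold wf
    rw [if_pos (by omega), Nat.mod_eq_of_lt (by omega)]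
    omega
  have hC : W j' (s + a) b = W j s b := by
    unfold W
    rw [show s + a = a + s from Nat.add_comm s a, ← List.map_add_range', List.map_map]
    refine List.map_congr_left (fun m hm => ?_)
    rw [List.mem_range'_1] at hm
    simp only [hj', Function.comp_apply]
    congr 1
    unfold wf
    rw [if_pos (by omega), show a + m - s + b = (m - s) + (a + b) by omega,
      Nat.add_mod_right, Nat.mod_eq_of_lt (by omega)]
    omega
  have hA : prodF pre 0 j' = prodF pre 0 j :=
    prodF_congr (fun m h1 h2 => by
      simp only [hj', Function.comp_apply]
      rw [wf_outside (by omega)])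
  have hD : ∀ ofs, s + a + b ≤ ofs → prodF post ofs j' = prodF post ofs j :=
    fun ofs hofs => prodF_congr (fun m h1 h2 => by
      simp only [hj', Function.comp_apply]
      rw [wf_outside (by omega)])
  rw [prodF_slot, prodF_slot]
  show x (W j' (0 + s) a) * (prodF pre 0 j' *
      ((fun L ofs jj => prodF L ofs jj) ((b, y) :: post) (0 + s + a) j')) =
    y (W j (0 + s) b) * (prodF pre 0 j *
      ((fun L ofs jj => prodF L ofs jj) ((a, x) :: post) (0 + s + b) j))
  simp only [prodF, Nat.zero_add]
  rw [hA, hB, hC, hD _ (by omega)]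
  rw [show s + a + b = s + b + a from by omega]
  ring

def swf (p q x : ℕ) : ℕ := if x = p then q else if x = q then p else x

lemma swf_left (p q : ℕ) : swf p q p = q := by simp [swf]
lemma swf_right (p q : ℕ) : swf p q q = p := by simp [swf]
lemma swf_other {p q x : ℕ} (h1 : x ≠ p) (h2 : x ≠ q) : swf p q x = x := by
  simp [swf, h1, h2]

/-- Swapping two singleton blocks carrying the same series leaves `prodF` unchanged. -/
lemma K2 (pre mid post : List (ℕ × TSeries d)) (z : TSeries d) (j : ℕ → Fin d) :
    prodF (pre ++ (1, z) :: (mid ++ (1, z) :: post)) 0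
      (j ∘ swf (sumdeg pre) (sumdeg pre + 1 + sumdeg mid)) =
    prodF (pre ++ (1, z) :: (mid ++ (1, z) :: post)) 0 j := by
  set p := sumdeg pre with hp
  set q := sumdeg pre + 1 + sumdeg mid with hq
  set j' := j ∘ swf p q with hj'
  have expand : ∀ jj : ℕ → Fin d,
      prodF (pre ++ (1, z) :: (mid ++ (1, z) :: post)) 0 jj =
        z [jj p] * (prodF pre 0 jj *
          (z [jj q] * (prodF mid (p + 1) jj * prodF post (q + 1) jj))) := by
    intro jj
    rw [prodF_slot]
    show _ * (_ * ((fun L ofs j2 => prodF L ofs j2) (mid ++ (1,z) :: post) (0 + p + 1) jj)) = _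
    rw [show (fun L ofs j2 => prodF L ofs j2) (mid ++ (1,z) :: post) (0 + p + 1) jj =
        prodF (mid ++ (1,z) :: post) (0 + p + 1) jj from rfl, prodF_slot]
    simp only [Nat.zero_add, W_one]
    rfl
  rw [expand j', expand j]
  have h1 : prodF pre 0 j' = prodF pre 0 j :=
    prodF_congr (fun m hm1 hm2 => by
      simp only [hj', Function.comp_apply]
      rw [swf_other (by omega) (by omega)])
  have h2 : prodF mid (p + 1) j' = prodF mid (p + 1) j :=
    prodF_congr (fun m hm1 hm2 => by
      simp only [hj', Function.comp_apply]
      rw [swf_other (by omega) (by omega)])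
  have h3 : prodF post (q + 1) j' = prodF post (q + 1) j :=
    prodF_congr (fun m hm1 hm2 => by
      simp only [hj', Function.comp_apply]
      rw [swf_other (by omega) (by omega)])
  have h4 : j' p = j q := by simp [hj', swf_left]
  have h5 : j' q = j p := by simp [hj', swf_right]
  rw [h1, h2, h3, h4, h5]
  ring

end Klemmas

section Vanish
variable {d : ℕ} (hd : 0 < d) (i : Fin d → Fin d)

lemma Falt_two_ones (pre mid post : List (ℕ × TSeries d)) (z : TSeries d)
    (htot : sumdeg pre + (1 + (sumdeg mid + (1 + sumdeg post))) = d) :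
    Falt hd i (pre ++ (1, z) :: (mid ++ (1, z) :: post)) = 0 := by
  set p := sumdeg pre with hp
  set q := sumdeg pre + 1 + sumdeg mid with hq
  have hpd : p < d := by omega
  have hqd : q < d := by omega
  have hpq : p ≠ q := by omega
  have hf1 : ∀ (m : ℕ) (h : m < d),
      ((Equiv.swap (⟨p, hpd⟩ : Fin d) ⟨q, hqd⟩ ⟨m, h⟩ : Fin d) : ℕ) = swf p q m := by
    intro m h
    by_cases h1 : m = p
    · rw [show (⟨m, h⟩ : Fin d) = ⟨p, hpd⟩ from Fin.ext h1, Equiv.swap_apply_left, h1, swf_left]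
    · by_cases h2 : m = q
      · rw [show (⟨m, h⟩ : Fin d) = ⟨q, hqd⟩ from Fin.ext h2, Equiv.swap_apply_right, h2,
          swf_right]
      · rw [Equiv.swap_apply_of_ne_of_ne (by simp [Fin.ext_iff]; omega)
          (by simp [Fin.ext_iff]; omega), swf_other h1 h2]
  have key := Falt_reindex hd i (Equiv.swap (⟨p, hpd⟩ : Fin d) ⟨q, hqd⟩) (swf p q)
    hf1 (fun m h => swf_other (by omega) (by omega))
    (pre ++ (1, z) :: (mid ++ (1, z) :: post)) (pre ++ (1, z) :: (mid ++ (1, z) :: post))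
    (fun j => K2 pre mid post z j)
  rw [Equiv.Perm.sign_swap (by simp [Fin.ext_iff]; omega)] at key
  have h2 : (2 : ℂ) * Falt hd i (pre ++ (1, z) :: (mid ++ (1, z) :: post)) = 0 := by
    push_cast at key
    linear_combination key
  exact (mul_eq_zero.mp h2).resolve_left two_ne_zero

lemma Falt_lie_vanish {k : ℕ} {z : TSeries d} (hz : IsLieElem d k z) :
    3 ≤ k → ∀ pre post : List (ℕ × TSeries d),
      (∀ p ∈ pre, Supp p) → (∀ p ∈ post, Supp p) →
      sumdeg pre + (k + sumdeg post) = d →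
      Falt hd i (pre ++ (k, z) :: post) = 0 := by
  induction hz with
  | base v => intro h3; omega
  | @bracket a b x y hx hy ihx ihy =>
    intro h3 pre post hpre hpost htot
    have hsx := isLieElem_supp hx
    have hsy := isLieElem_supp hy
    have ha1 := isLieElem_deg_pos hx
    have hb1 := isLieElem_deg_pos hy
    have hsplit : Falt hd i (pre ++ (a + b, mulT x y - mulT y x) :: post)
        = Falt hd i (pre ++ (a, x) :: (b, y) :: post)
          - Falt hd i (pre ++ (b, y) :: (a, x) :: post) := by
      unfold Falt
      rw [← Finset.sum_sub_distrib]
      refine Finset.sum_congr rfl (fun σ _ => ?_)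
      rw [← mul_sub]
      congr 1
      set j := hat hd (fun m => i (σ m)) with hj
      set s := sumdeg pre with hs
      have e1 : prodF (pre ++ (a, x) :: (b, y) :: post) 0 j =
          (x (W j s a) * y (W j (s + a) b)) * (prodF pre 0 j * prodF post (s + a + b) j) := by
        rw [prodF_slot]
        show _ * (_ * ((fun L ofs j2 => prodF L ofs j2) ((b, y) :: post) (0 + s + a) j)) = _
        simp only [prodF, Nat.zero_add]
        ring
      have e2 : prodF (pre ++ (b, y) :: (a, x) :: post) 0 j =
          (y (W j s b) * x (W j (s + b) a)) * (prodF pre 0 j * prodF post (s + b + a) j) := by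
        rw [prodF_slot]
        show _ * (_ * ((fun L ofs j2 => prodF L ofs j2) ((a, x) :: post) (0 + s + b) j)) = _
        simp only [prodF, Nat.zero_add]
        ring
      have e0 : prodF (pre ++ (a + b, mulT x y - mulT y x) :: post) 0 j =
          ((mulT x y) (W j s (a + b)) - (mulT y x) (W j s (a + b))) *
            (prodF pre 0 j * prodF post (s + (a + b)) j) := by
        rw [prodF_slot]
        simp only [Nat.zero_add, Pi.sub_apply]
        rfl
      rw [e0, e1, e2, mulT_eval_W (fun w hw => hsx w hw),
        show W j s (a + b) = W j s (b + a) from by rw [Nat.add_comm a b],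
        mulT_eval_W (fun w hw => hsy w hw),
        show s + (a + b) = s + a + b from by omega,
        show s + b + a = s + a + b from by omega]
      ring
    rw [hsplit]
    by_cases hab : Even (a * b)
    · -- block swap has sign +1
      have hw : sumdeg pre + (a + b) ≤ d := by omega
      have key := Falt_reindex hd i (wperm (sumdeg pre) (a + b) b hw) (wf (sumdeg pre) (a + b) b)
        (fun m h => rfl) (fun m h => wf_outside (by omega))
        (pre ++ (a, x) :: (b, y) :: post) (pre ++ (b, y) :: (a, x) :: post)
        (fun j => K1 pre post a b x y j)
      rw [sign_wperm] at key
      have hev : Even ((a + b - 1) * b) := by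
        rw [show a + b - 1 = a + (b - 1) from by omega, add_mul]
        refine hab.add ?_
        rcases Nat.even_or_odd b with hb | hb
        · exact hb.mul_left _
        · have : Even (b - 1) := by
            rcases hb with ⟨c, hc⟩
            exact ⟨c, by omega⟩
          exact this.mul_right _
      rw [hev.neg_one_pow] at key
      simp only [Units.val_one, Int.cast_one, one_mul] at key
      rw [key, sub_self]
    · -- both degrees odd, so one of them is ≥ 3
      have hodd := Nat.odd_mul.mp (Nat.not_even_iff_odd.mp hab)
      obtain ⟨⟨ka, hka⟩, ⟨kb, hkb⟩⟩ := hodd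
      have hsupy : Supp ((b, y) : ℕ × TSeries d) := fun w hw => hsy w hw
      have hsupx : Supp ((a, x) : ℕ × TSeries d) := fun w hw => hsx w hw
      rcases (show 3 ≤ a ∨ 3 ≤ b from by omega) with h3a | h3b
      · have v1 := ihx h3a pre ((b, y) :: post) hpre
          (fun p hp => by
            rcases List.mem_cons.mp hp with h | h
            · subst h; exact hsupy
            · exact hpost p h)
          (by simp only [sumdeg_cons]; omega)
        have v2 := ihx h3a (pre ++ [(b, y)]) post
          (fun p hp => by
            rcases List.mem_append.mp hp with h | h
            · exact hpre p h
            · simp only [List.mem_singleton] at h; subst h; exact hsupy)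
          hpost (by simp only [sumdeg_append, sumdeg_cons, sumdeg_nil]; omega)
        rw [show pre ++ (b, y) :: (a, x) :: post = (pre ++ [(b, y)]) ++ (a, x) :: post from by
          simp [List.append_assoc], v2, v1, sub_self]
      · have v1 := ihy h3b (pre ++ [(a, x)]) post
          (fun p hp => by
            rcases List.mem_append.mp hp with h | h
            · exact hpre p h
            · simp only [List.mem_singleton] at h; subst h; exact hsupx)
          hpost (by simp only [sumdeg_append, sumdeg_cons, sumdeg_nil]; omega)
        have v2 := ihy h3b pre ((a, x) :: post) hpre
          (fun p hp => by
            rcases List.mem_cons.mp hp with h | h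
            · subst h; exact hsupx
            · exact hpost p h)
          (by simp only [sumdeg_cons]; omega)
        rw [show pre ++ (a, x) :: (b, y) :: post = (pre ++ [(a, x)]) ++ (b, y) :: post from by
          simp [List.append_assoc], v1, v2, sub_self]

end Vanish

section SlotLinear
variable {d : ℕ} (hd : 0 < d) (i : Fin d → Fin d)

lemma Falt_slot_zero (pre post : List (ℕ × TSeries d)) (b : ℕ) :
    Falt hd i (pre ++ (b, (0 : TSeries d)) :: post) = 0 := by
  unfold Falt
  refine Finset.sum_eq_zero (fun σ _ => ?_)
  rw [prodF_slot]
  simp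

lemma Falt_slot_add (pre post : List (ℕ × TSeries d)) (b : ℕ) (u v : TSeries d) :
    Falt hd i (pre ++ (b, u + v) :: post) =
      Falt hd i (pre ++ (b, u) :: post) + Falt hd i (pre ++ (b, v) :: post) := by
  unfold Falt
  rw [← Finset.sum_add_distrib]
  refine Finset.sum_congr rfl (fun σ _ => ?_)
  rw [prodF_slot, prodF_slot, prodF_slot]
  simp only [Pi.add_apply]
  ring

lemma Falt_slot_smul (pre post : List (ℕ × TSeries d)) (b : ℕ) (a : ℂ) (u : TSeries d) :
    Falt hd i (pre ++ (b, a • u) :: post) = a * Falt hd i (pre ++ (b, u) :: post) := by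
  unfold Falt
  rw [Finset.mul_sum]
  refine Finset.sum_congr rfl (fun σ _ => ?_)
  rw [prodF_slot, prodF_slot]
  simp only [Pi.smul_apply, smul_eq_mul]
  ring

end SlotLinear

lemma count_one_parity : ∀ l : List ℕ, (∀ b ∈ l, b = 1 ∨ b = 2) → (l.sum + l.count 1) % 2 = 0 := by
  intro l
  induction l with
  | nil => simp
  | cons a l ih =>
    intro h
    have hl := ih (fun b hb => h b (List.mem_cons_of_mem a hb))
    rcases h a List.mem_cons_self with rfl | rfl
    · rw [List.sum_cons, List.count_cons_self]
      omega
    · rw [List.sum_cons, List.count_cons_of_ne (by omega)]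
      omega

section Main
variable {e : ℕ}

lemma blocks_vanish (he : 1 ≤ e) (T : ℕ → TSeries (2 * e))
    (hT : ∀ i, 1 ≤ i → i ≤ 2 * e → T i ∈ lieGradeC (2 * e) i)
    (i : Fin (2 * e) → Fin (2 * e)) (hd : 0 < 2 * e)
    (bl : List ℕ) (hpos : ∀ b ∈ bl, 0 < b) (hsum : bl.sum = 2 * e)
    (hne : bl ≠ List.replicate e 2) :
    Falt hd i (bl.map (fun b => (b, T b))) = 0 := by
  set pairT : ℕ → ℕ × TSeries (2 * e) := fun b => (b, T b) with hpairT
  have sumdeg_map : ∀ l : List ℕ, sumdeg (l.map pairT) = l.sum := by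
    intro l
    unfold sumdeg
    rw [List.map_map]
    congr 1
    rw [show Prod.fst ∘ pairT = id from rfl, List.map_id]
  have hsupp : ∀ b ∈ bl, Supp (pairT b) := by
    intro b hb w hw
    exact lieGradeC_supp (hT b (hpos b hb) (by
      have := List.single_le_sum (l := bl) (fun x _ => Nat.zero_le x) b hb
      omega)) w hw
  by_cases hbig : ∃ b ∈ bl, 3 ≤ b
  · obtain ⟨b, hbmem, h3⟩ := hbig
    obtain ⟨l1, l2, rfl⟩ := List.append_of_mem hbmem
    have hmem := hT b (by omega) (by
      have := List.single_le_sum (l := l1 ++ b :: l2) (fun x _ => Nat.zero_le x) b hbmem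
      omega)
    have key : ∀ z, z ∈ lieGradeC (2 * e) b →
        Falt hd i (l1.map pairT ++ (b, z) :: l2.map pairT) = 0 := by
      intro z hz
      induction hz using Submodule.span_induction with
      | mem z hz =>
        refine Falt_lie_vanish hd i hz h3 _ _ ?_ ?_ ?_
        · intro p hp
          obtain ⟨b', hb', rfl⟩ := List.mem_map.mp hp
          exact hsupp b' (by simp [hb'])
        · intro p hp
          obtain ⟨b', hb', rfl⟩ := List.mem_map.mp hp
          exact hsupp b' (by simp [hb'])
        · rw [sumdeg_map, sumdeg_map]
          simp only [List.sum_append, List.sum_cons] at hsum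
          omega
      | zero => exact Falt_slot_zero hd i _ _ _
      | add u v hu hv ihu ihv => rw [Falt_slot_add, ihu, ihv, add_zero]
      | smul a u hu ihu => rw [Falt_slot_smul, ihu, mul_zero]
    rw [List.map_append, List.map_cons]
    exact key (T b) hmem
  · push_neg at hbig
    by_cases hone : 1 ∈ bl
    · have hcount := count_one_parity bl (fun b hb => by
        have := hpos b hb; have := hbig b hb; omega)
      have hc2 : 2 ≤ bl.count 1 := by
        have hc1 : 0 < bl.count 1 := List.count_pos_iff.mpr hone
        rw [hsum] at hcount
        omega
      obtain ⟨u, v, huv⟩ := List.append_of_mem hone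
      have hcuv : 1 ∈ u ∨ 1 ∈ v := by
        by_contra hcon
        push_neg at hcon
        rw [huv, List.count_append, List.count_cons,
          List.count_eq_zero.mpr hcon.1, List.count_eq_zero.mpr hcon.2] at hc2
        simp at hc2
      rcases hcuv with h1u | h1v
      · obtain ⟨u1, u2, hu12⟩ := List.append_of_mem h1u
        rw [huv, hu12]
        have htot : sumdeg (u1.map pairT) +
            (1 + (sumdeg (u2.map pairT) + (1 + sumdeg (v.map pairT)))) = 2 * e := by
          rw [sumdeg_map, sumdeg_map, sumdeg_map]
          rw [huv, hu12] at hsum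
          simp only [List.sum_append, List.sum_cons] at hsum
          omega
        have := Falt_two_ones hd i (u1.map pairT) (u2.map pairT) (v.map pairT) (T 1) htot
        simp only [List.map_append, List.map_cons, List.append_assoc, List.cons_append] at this ⊢
        exact this
      · obtain ⟨v1, v2, hv12⟩ := List.append_of_mem h1v
        rw [huv, hv12]
        have htot : sumdeg (u.map pairT) +
            (1 + (sumdeg (v1.map pairT) + (1 + sumdeg (v2.map pairT)))) = 2 * e := by
          rw [sumdeg_map, sumdeg_map, sumdeg_map]
          rw [huv, hv12] at hsum
          simp only [List.sum_append, List.sum_cons] at hsum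
          omega
        have := Falt_two_ones hd i (u.map pairT) (v1.map pairT) (v2.map pairT) (T 1) htot
        simp only [List.map_append, List.map_cons, List.append_assoc, List.cons_append] at this ⊢
        exact this
    · exfalso
      have hall : ∀ b ∈ bl, b = 2 := by
        intro b hb
        have := hpos b hb
        have := hbig b hb
        have : b ≠ 1 := fun h => hone (h ▸ hb)
        omega
      have hrep : bl = List.replicate bl.length 2 := List.eq_replicate_length.mpr hall
      have hlen : bl.length = e := by
        have h2 : bl.sum = bl.length * 2 := by
          conv_lhs => rw [hrep]
          rw [List.sum_replicate, smul_eq_mul]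
        omega
      exact hne (by rw [hrep, hlen])

end Main

end S14

open S14

/-- For `d = 2e` even and `T_i ∈ Lie^i(ℂ^d)` for
`1 ≤ i ≤ d`, the full antisymmetrization of the level-`d` signature tensor
`φ_d(T₁,…,T_d)` depends only on `T₂`:
`Σ_{σ ∈ S_d} sgn(σ)·σ·φ_d(T₁,…,T_d) = Σ_{σ ∈ S_d} sgn(σ)·σ·((1/e!)·T₂^{⊗e})`,
where `σ` permutes the tensor factors (in coordinates, it permutes the letters
of the indexing word). -/
theorem antisymmetrization_depends_only_on_T2_even (e : ℕ) (he : 1 ≤ e)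
    (T : ℕ → TSeries (2 * e))
    (hT : ∀ i, 1 ≤ i → i ≤ 2 * e → T i ∈ lieGradeC (2 * e) i) :
    ∀ i : Fin (2 * e) → Fin (2 * e),
      (∑ σ : Equiv.Perm (Fin (2 * e)), ((Equiv.Perm.sign σ : ℤ) : ℂ) *
          phiC (2 * e) (2 * e) T (List.ofFn fun m => i (σ m))) =
      ∑ σ : Equiv.Perm (Fin (2 * e)), ((Equiv.Perm.sign σ : ℤ) : ℂ) *
          (((e.factorial : ℂ))⁻¹ • prodT (List.replicate e (T 2)))
            (List.ofFn fun m => i (σ m)) := by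
  intro i
  have hd : 0 < 2 * e := by omega
  set pairT : ℕ → ℕ × TSeries (2 * e) := fun b => (b, T b) with hpairT
  have sumdeg_map : ∀ l : List ℕ, sumdeg (l.map pairT) = l.sum := by
    intro l
    unfold sumdeg
    rw [List.map_map]
    congr 1
    rw [show Prod.fst ∘ pairT = id from rfl, List.map_id]
  -- the bridge for any list of positive blocks summing to 2e
  have hbr : ∀ bl : List ℕ, (∀ b ∈ bl, 0 < b) → bl.sum = 2 * e →
      (∑ σ : Equiv.Perm (Fin (2 * e)), ((Equiv.Perm.sign σ : ℤ) : ℂ) *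
        prodT (bl.map T) (List.ofFn fun m => i (σ m))) = Falt hd i (bl.map pairT) := by
    intro bl hpos hsum
    have := alt_bridge hd i (bl.map pairT) (fun p hp => by
        obtain ⟨b, hb, rfl⟩ := List.mem_map.mp hp
        intro w hw
        exact lieGradeC_supp (hT b (hpos b hb) (by
          have := List.single_le_sum (l := bl) (fun x _ => Nat.zero_le x) b hb
          omega)) w hw)
      (by rw [sumdeg_map]; exact hsum)
    rw [List.map_map, show Prod.snd ∘ pairT = T from rfl] at this
    exact this
  -- the special composition
  have hc0pos : ∀ {b : ℕ}, b ∈ List.replicate e 2 → 0 < b := fun hb => by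
    rw [List.eq_of_mem_replicate hb]; omega
  have hc0sum : (List.replicate e 2).sum = 2 * e := by
    rw [List.sum_replicate, smul_eq_mul]; omega
  set c₀ : Composition (2 * e) := ⟨List.replicate e 2, hc0pos, hc0sum⟩ with hc₀
  have step1 : (∑ σ : Equiv.Perm (Fin (2 * e)), ((Equiv.Perm.sign σ : ℤ) : ℂ) *
      phiC (2 * e) (2 * e) T (List.ofFn fun m => i (σ m))) =
      ∑ c : Composition (2 * e), ((c.length).factorial : ℂ)⁻¹ *
        Falt hd i (c.blocks.map pairT) := by
    unfold phiC
    simp only [Finset.sum_apply, Pi.smul_apply, smul_eq_mul, Finset.mul_sum]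
    rw [Finset.sum_comm]
    refine Finset.sum_congr rfl (fun c _ => ?_)
    rw [← hbr c.blocks (fun b hb => c.blocks_pos hb) c.blocks_sum, Finset.mul_sum]
    refine Finset.sum_congr rfl (fun σ _ => by ring)
  rw [step1]
  rw [Finset.sum_eq_single c₀ (fun c _ hcne => ?_) (fun h => absurd (Finset.mem_univ c₀) h)]
  · -- the surviving term equals the RHS
    have hlen : c₀.length = e := by
      simp [hc₀, Composition.length]
    rw [hlen, ← hbr (List.replicate e 2) (fun b hb => hc0pos hb) hc0sum]
    show _ = ∑ σ : Equiv.Perm (Fin (2 * e)), _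
    rw [Finset.mul_sum]
    refine Finset.sum_congr rfl (fun σ _ => ?_)
    simp only [Pi.smul_apply, smul_eq_mul, List.map_replicate]
    show ((e.factorial : ℂ))⁻¹ * (_ * prodT (List.replicate e (T 2)) _) = _
    ring
  · -- other compositions vanish
    have hblne : c.blocks ≠ List.replicate e 2 := by
      intro hcon
      exact hcne (by
        cases c
        cases c₀
        simp_all)
    rw [blocks_vanish he T hT i hd c.blocks (fun b hb => c.blocks_pos hb) c.blocks_sum hblne,
      mul_zero]
end

section
/- Let d = 2e + 1 be odd and let T_i ∈ Lie^i(ℂ^d) for 1 ≤ i ≤ d. Then the full antisymmetrization of the signature tensor φ_d(T₁,…,T_d) depends only on T₁ and T₂; precisely, Σ_{σ ∈ S_d} sgn(σ)·σ·φ_d(T₁,T₂,T₃,…,T_d) = Σ_{σ ∈ S_d} sgn(σ)·σ·φ_d(T₁,T₂,0,…,0), where σ acts on V^{⊗d} by permuting the tensor factors. -/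
namespace Aux
variable {d : ℕ}

lemma mulT_zero_right (x : TSeries d) : mulT x 0 = 0 := by
  funext w; simp [mulT]

lemma mulT_zero_left (x : TSeries d) : mulT 0 x = 0 := by
  funext w; simp [mulT]

lemma oneT_mulT (x : TSeries d) : mulT oneT x = x := by
  funext w
  rw [mulT, Finset.sum_eq_single 0]
  · simp [oneT]
  · intro i hi hne
    simp only [oneT, List.take_eq_nil_iff]
    rw [if_neg]; · ring
    push_neg; exact ⟨hne, by rintro rfl; simp at hi; omega⟩
  · simp

lemma mulT_oneT (x : TSeries d) : mulT x oneT = x := by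
  funext w
  rw [mulT, Finset.sum_eq_single w.length]
  · simp [oneT]
  · intro i hi hne
    simp only [Finset.mem_range] at hi
    simp only [oneT, List.drop_eq_nil_iff]
    rw [if_neg (by omega)]; ring
  · simp

lemma mulT_assoc (x y z : TSeries d) : mulT (mulT x y) z = mulT x (mulT y z) := by
  funext w
  simp only [mulT]
  have hL : ∀ i ∈ Finset.range (w.length + 1),
      (∑ k ∈ Finset.range ((w.take i).length + 1), x ((w.take i).take k) * y ((w.take i).drop k)) * z (w.drop i)
      = ∑ k ∈ Finset.range (i + 1), x (w.take k) * (y (List.take (i - k) (w.drop k)) * z (w.drop i)) := by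
    intro i hi
    simp only [Finset.mem_range] at hi
    rw [List.length_take, min_eq_left (by omega), Finset.sum_mul]
    refine Finset.sum_congr rfl fun k hk => ?_
    simp only [Finset.mem_range] at hk
    rw [List.take_take, min_eq_left (by omega), List.drop_take]
    ring
  rw [Finset.sum_congr rfl hL]
  have hR : ∀ k ∈ Finset.range (w.length + 1),
      x (w.take k) * (∑ j ∈ Finset.range ((w.drop k).length + 1), y ((w.drop k).take j) * z ((w.drop k).drop j))
      = ∑ j ∈ Finset.range (w.length - k + 1), x (w.take k) * (y ((w.drop k).take j) * z (w.drop (k + j))) := by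
    intro k hk
    rw [List.length_drop, Finset.mul_sum]
    refine Finset.sum_congr rfl fun j hj => ?_
    rw [List.drop_drop]
  rw [Finset.sum_congr rfl hR]
  rw [Finset.sum_sigma', Finset.sum_sigma']
  refine Finset.sum_nbij' (fun p => ⟨p.2, p.1 - p.2⟩) (fun p => ⟨p.1 + p.2, p.1⟩) ?_ ?_ ?_ ?_ ?_
  · rintro ⟨i, k⟩ hp
    dsimp only
    simp only [Finset.mem_sigma, Finset.mem_range] at hp ⊢
    omega
  · rintro ⟨k, j⟩ hp
    dsimp only
    simp only [Finset.mem_sigma, Finset.mem_range] at hp ⊢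
    omega
  · rintro ⟨i, k⟩ hp
    dsimp only
    simp only [Finset.mem_sigma, Finset.mem_range] at hp
    simp only [Sigma.mk.inj_iff, heq_eq_eq]
    constructor <;> first | trivial | omega
  · rintro ⟨k, j⟩ hp
    dsimp only
    simp only [Finset.mem_sigma, Finset.mem_range] at hp
    simp only [Sigma.mk.inj_iff, heq_eq_eq]
    constructor <;> first | trivial | omega
  · rintro ⟨i, k⟩ hp
    dsimp only
    simp only [Finset.mem_sigma, Finset.mem_range] at hp
    have h1 : k + (i - k) = i := by omega
    rw [h1]

lemma prodT_append (L₁ L₂ : List (TSeries d)) :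
    prodT (L₁ ++ L₂) = mulT (prodT L₁) (prodT L₂) := by
  induction L₁ with
  | nil => simp [prodT, oneT_mulT]
  | cons a A ih => simp [prodT, ih, mulT_assoc]

lemma prodT_zero {L : List (TSeries d)} (h : (0 : TSeries d) ∈ L) : prodT L = 0 := by
  induction L with
  | nil => simp at h
  | cons a A ih =>
    rcases List.mem_cons.mp h with h | h
    · rw [prodT, ← h, mulT_zero_left]
    · rw [prodT, ih h, mulT_zero_right]

def Hom (d j : ℕ) (x : TSeries d) : Prop := ∀ w : Word d, w.length ≠ j → x w = 0

lemma mulT_apply_of_hom {a : ℕ} {x : TSeries d} (hx : Hom d a x) (y : TSeries d) (w : Word d) :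
    mulT x y w = if a ≤ w.length then x (w.take a) * y (w.drop a) else 0 := by
  rw [mulT]
  by_cases h : a ≤ w.length
  · rw [if_pos h, Finset.sum_eq_single a]
    · intro i hi hne
      rw [hx (w.take i) ?_, zero_mul]
      rw [List.length_take]
      simp only [Finset.mem_range] at hi
      omega
    · intro h'
      simp only [Finset.mem_range] at h'
      omega
  · rw [if_neg h]
    apply Finset.sum_eq_zero
    intro i hi
    rw [hx, zero_mul]
    rw [List.length_take]
    simp only [Finset.mem_range] at hi
    omega

lemma hom_mulT {a b : ℕ} {x y : TSeries d} (hx : Hom d a x) (hy : Hom d b y) :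
    Hom d (a + b) (mulT x y) := by
  intro w hw
  apply Finset.sum_eq_zero
  intro i hi
  simp only [Finset.mem_range] at hi
  by_cases h1 : (w.take i).length = a
  · by_cases h2 : (w.drop i).length = b
    · exfalso
      rw [List.length_take] at h1
      rw [List.length_drop] at h2
      omega
    · rw [hy _ h2, mul_zero]
  · rw [hx _ h1, zero_mul]

lemma IsLieElem.pos {j : ℕ} {x : TSeries d} (h : IsLieElem d j x) : 1 ≤ j := by
  induction h with
  | base v => omega
  | bracket hx hy ihx ihy => omega

lemma IsLieElem.hom {j : ℕ} {x : TSeries d} (h : IsLieElem d j x) : Hom d j x := by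
  induction h with
  | base v =>
    intro w hw
    match w with
    | [] => rfl
    | [a] => simp at hw
    | a :: b :: t => rfl
  | @bracket a b x y hx hy ihx ihy =>
    intro w hw
    have h1 := hom_mulT ihx ihy w hw
    have h2 := hom_mulT ihy ihx w (by omega)
    simp only [Pi.sub_apply, h1, h2, sub_zero]

lemma hom_span {j : ℕ} {x : TSeries d} (hx : x ∈ lieGradeC d j) : Hom d j x := by
  refine Submodule.span_induction ?_ ?_ ?_ ?_ hx
  · intro y hy; exact IsLieElem.hom hy
  · intro w hw; rfl
  · intro y z _ _ hy hz w hw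
    simp only [Pi.add_apply, hy w hw, hz w hw, add_zero]
  · intro c y _ hy w hw
    simp only [Pi.smul_apply, hy w hw, smul_zero]

noncomputable def altW {d n : ℕ} (x : TSeries d) (v : Fin n → Fin d) : ℂ :=
  ∑ τ : Equiv.Perm (Fin n), ((Equiv.Perm.sign τ : ℤ) : ℂ) * x (List.ofFn fun m => v (τ m))

lemma altW_zero {n : ℕ} (v : Fin n → Fin d) : altW (0 : TSeries d) v = 0 := by
  simp [altW]

lemma altW_add {n : ℕ} (x y : TSeries d) (v : Fin n → Fin d) :
    altW (x + y) v = altW x v + altW y v := by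
  simp [altW, mul_add, Finset.sum_add_distrib]

lemma altW_sub {n : ℕ} (x y : TSeries d) (v : Fin n → Fin d) :
    altW (x - y) v = altW x v - altW y v := by
  simp [altW, mul_sub, Finset.sum_sub_distrib]

lemma altW_smul {n : ℕ} (c : ℂ) (x : TSeries d) (v : Fin n → Fin d) :
    altW (c • x) v = c * altW x v := by
  simp only [altW, Pi.smul_apply, smul_eq_mul, Finset.mul_sum]
  exact Finset.sum_congr rfl fun τ _ => by ring

lemma take_ofFn {α : Type*} {n : ℕ} (g : Fin n → α) {k : ℕ} (h : k ≤ n) :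
    (List.ofFn g).take k = List.ofFn (fun s : Fin k => g (Fin.castLE h s)) := by
  apply List.ext_getElem
  · simp [h]
  · intro m h1 h2
    simp only [List.getElem_take, List.getElem_ofFn]
    rfl

lemma drop_ofFn {α : Type*} {n : ℕ} (g : Fin n → α) {k : ℕ} (h : k ≤ n) :
    (List.ofFn g).drop k = List.ofFn (fun s : Fin (n - k) => g ⟨k + s.1, by have := s.2; omega⟩) := by
  apply List.ext_getElem
  · simp
  · intro m h1 h2
    simp only [List.getElem_drop, List.getElem_ofFn]
lemma rot_pow_apply {n : ℕ} (hn : n ≠ 0) (t : ℕ) (i : Fin n) :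
    ((finRotate n)^t) i = ⟨(i.1 + t) % n, Nat.mod_lt _ (by omega)⟩ := by
  obtain ⟨m, rfl⟩ := Nat.exists_eq_succ_of_ne_zero hn
  induction t generalizing i with
  | zero =>
    simp only [pow_zero, Equiv.Perm.coe_one, id_eq, Nat.add_zero]
    exact Fin.ext (by simp [Nat.mod_eq_of_lt i.2])
  | succ t ih =>
    apply Fin.ext
    rw [pow_succ', Equiv.Perm.mul_apply, ih, finRotate_succ_apply]
    rw [Fin.val_add, Fin.val_one', Nat.add_mod_mod, Nat.mod_add_mod]
    rfl

lemma sign_rot_pow {n : ℕ} (hn : n ≠ 0) (t : ℕ) :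
    Equiv.Perm.sign ((finRotate n)^t) = (-1 : ℤˣ)^((n-1)*t) := by
  obtain ⟨m, rfl⟩ := Nat.exists_eq_succ_of_ne_zero hn
  rw [map_pow, sign_finRotate, ← pow_mul, Nat.succ_sub_one]

lemma altW_mulT_comm {a b : ℕ} {x y : TSeries d} (ha : 0 < a) (hb : 0 < b)
    (hx : Hom d a x) (hy : Hom d b y) (hab : Even (a * b)) (v : Fin (a+b) → Fin d) :
    altW (mulT y x) v = altW (mulT x y) v := by
  have hne : a + b ≠ 0 := by omega
  set ρ₀ : Equiv.Perm (Fin (a+b)) := (finRotate (a+b))^a with hρ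
  have hsgn : Equiv.Perm.sign ρ₀ = 1 := by
    rw [hρ, sign_rot_pow hne]
    apply Even.neg_one_pow
    rcases Nat.even_mul.mp hab with h | h
    · exact h.mul_left _
    · have h1 : b % 2 = 0 := Nat.even_iff.mp h
      rcases Nat.even_or_odd a with h2 | h2
      · exact h2.mul_left _
      · have h3 : a % 2 = 1 := Nat.odd_iff.mp h2
        refine (Nat.even_iff.mpr ?_).mul_right _
        omega
  rw [altW, altW]
  refine (Fintype.sum_equiv (Equiv.mulRight ρ₀)
    (fun τ => ((Equiv.Perm.sign τ : ℤ) : ℂ) * mulT x y (List.ofFn fun m => v (τ m)))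
    (fun τ => ((Equiv.Perm.sign τ : ℤ) : ℂ) * mulT y x (List.ofFn fun m => v (τ m))) ?_).symm
  intro τ
  have hsg : Equiv.Perm.sign (τ * ρ₀) = Equiv.Perm.sign τ := by
    rw [map_mul, hsgn, mul_one]
  dsimp only [Equiv.coe_mulRight]
  rw [hsg]
  congr 1
  rw [mulT_apply_of_hom hx y, mulT_apply_of_hom hy x]
  rw [List.length_ofFn, List.length_ofFn, if_pos (by omega), if_pos (by omega)]
  have hval1 : ∀ (p : ℕ) (hp : p < a), ρ₀ ⟨b + p, by omega⟩ = ⟨p, by omega⟩ := by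
    intro p hp
    rw [hρ, rot_pow_apply hne]
    apply Fin.ext
    show (b + p + a) % (a + b) = p
    have hq : b + p + a = (a + b) + p := by omega
    rw [hq, Nat.add_mod_left, Nat.mod_eq_of_lt (by omega)]
  have hval2 : ∀ (p : ℕ) (hp : p < b), ρ₀ ⟨p, by omega⟩ = ⟨a + p, by omega⟩ := by
    intro p hp
    rw [hρ, rot_pow_apply hne]
    apply Fin.ext
    show (p + a) % (a + b) = a + p
    rw [Nat.mod_eq_of_lt (by omega)]
    omega
  have e1 : (List.ofFn fun m => v (τ m)).take a = (List.ofFn fun m => v ((τ * ρ₀) m)).drop b := by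
    apply List.ext_getElem
    · simp only [List.length_take, List.length_drop, List.length_ofFn]
      omega
    · intro p h1 h2
      have hp : p < a := by simp only [List.length_take, List.length_ofFn] at h1; omega
      simp only [List.getElem_take, List.getElem_drop, List.getElem_ofFn,
        Equiv.Perm.mul_apply]
      rw [hval1 p hp]
  have e2 : (List.ofFn fun m => v (τ m)).drop a = (List.ofFn fun m => v ((τ * ρ₀) m)).take b := by
    apply List.ext_getElem
    · simp only [List.length_take, List.length_drop, List.length_ofFn]
      omega
    · intro p h1 h2
      have hp : p < b := by simp only [List.length_take, List.length_ofFn] at h2; omega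
      simp only [List.getElem_take, List.getElem_drop, List.getElem_ofFn,
        Equiv.Perm.mul_apply]
      rw [hval2 p hp]
  rw [e1, e2]
  ring
def segEquiv (k j n : ℕ) (h : k + j ≤ n) :
    Fin j ≃ {m : Fin n // k ≤ m.1 ∧ m.1 < k + j} where
  toFun s := ⟨⟨k + s.1, by have := s.2; omega⟩, ⟨Nat.le_add_right k s.1, Nat.add_lt_add_left s.2 k⟩⟩
  invFun m := ⟨m.1.1 - k, by have := m.2; omega⟩
  left_inv s := by apply Fin.ext; simp
  right_inv m := by
    apply Subtype.ext; apply Fin.ext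
    have := m.2
    simp only
    omega

lemma midKill {n j : ℕ} {x : TSeries d} (hx : Hom d j x)
    (halt : ∀ u : Fin j → Fin d, altW x u = 0)
    (P Q : TSeries d) (v : Fin n → Fin d) :
    altW (mulT P (mulT x Q)) v = 0 := by
  rw [altW]
  have expand : ∀ τ : Equiv.Perm (Fin n),
      ((Equiv.Perm.sign τ : ℤ) : ℂ) * mulT P (mulT x Q) (List.ofFn fun m => v (τ m))
      = ∑ k ∈ Finset.range (n + 1),
          ((Equiv.Perm.sign τ : ℤ) : ℂ) * (P ((List.ofFn fun m => v (τ m)).take k) *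
            (if j ≤ n - k then
              x (((List.ofFn fun m => v (τ m)).drop k).take j) *
              Q (((List.ofFn fun m => v (τ m)).drop k).drop j) else 0)) := by
    intro τ
    rw [mulT, Finset.mul_sum, List.length_ofFn]
    refine Finset.sum_congr rfl fun k hk => ?_
    congr 2
    rw [mulT_apply_of_hom hx, List.length_drop, List.length_ofFn]
  rw [Finset.sum_congr rfl fun τ _ => expand τ, Finset.sum_comm]
  apply Finset.sum_eq_zero
  intro k hk
  simp only [Finset.mem_range] at hk
  by_cases hjk : j ≤ n - k
  swap
  · simp [hjk]
  have hkj : k + j ≤ n := by omega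
  simp only [if_pos hjk]
  set F : Equiv.Perm (Fin n) → ℂ := fun τ =>
    ((Equiv.Perm.sign τ : ℤ) : ℂ) * (P ((List.ofFn fun m => v (τ m)).take k) *
      (x (((List.ofFn fun m => v (τ m)).drop k).take j) *
       Q (((List.ofFn fun m => v (τ m)).drop k).drop j))) with hF
  show (∑ τ, F τ) = 0
  have hfac : ((j.factorial : ℕ) : ℂ) ≠ 0 := Nat.cast_ne_zero.mpr (Nat.factorial_ne_zero j)
  set ι : Equiv.Perm (Fin j) → Equiv.Perm (Fin n) :=
    fun ρ => ρ.extendDomain (segEquiv k j n hkj) with hι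
  set u : Equiv.Perm (Fin n) → Fin j → Fin d :=
    fun τ s => v (τ ⟨k + s.1, by have := s.2; omega⟩) with hu
  have key : ((j.factorial : ℕ) : ℂ) * (∑ τ, F τ) = 0 := by
    have card : ((j.factorial : ℕ) : ℂ) * (∑ τ, F τ) = ∑ _ρ : Equiv.Perm (Fin j), ∑ τ, F τ := by
      rw [Finset.sum_const, nsmul_eq_mul]
      congr 1
      simp [Fintype.card_perm]
    rw [card]
    have reidx : ∀ ρ : Equiv.Perm (Fin j), (∑ τ, F τ) = ∑ τ, F (τ * ι ρ) :=
      fun ρ => (Equiv.sum_comp (Equiv.mulRight (ι ρ)) F).symm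
    rw [Finset.sum_congr rfl fun ρ _ => reidx ρ, Finset.sum_comm]
    apply Finset.sum_eq_zero
    intro τ _
    have hterm : ∀ ρ : Equiv.Perm (Fin j), F (τ * ι ρ) =
        (((Equiv.Perm.sign τ : ℤ) : ℂ) * (P ((List.ofFn fun m => v (τ m)).take k) *
          Q ((List.ofFn fun m => v (τ m)).drop (k + j)))) *
        (((Equiv.Perm.sign ρ : ℤ) : ℂ) * x (List.ofFn fun s => u τ (ρ s))) := by
      intro ρ
      have hsg : ((Equiv.Perm.sign (τ * ι ρ) : ℤ) : ℂ)
          = ((Equiv.Perm.sign τ : ℤ) : ℂ) * ((Equiv.Perm.sign ρ : ℤ) : ℂ) := by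
        rw [hι, map_mul, Equiv.Perm.sign_extendDomain]
        push_cast
        ring
      have hfix : ∀ (m : Fin n), m.1 < k ∨ k + j ≤ m.1 → (ι ρ) m = m := by
        intro m hm
        exact Equiv.Perm.extendDomain_apply_not_subtype ρ (segEquiv k j n hkj) (by omega)
      have e1 : (List.ofFn fun m => v ((τ * ι ρ) m)).take k
          = (List.ofFn fun m => v (τ m)).take k := by
        apply List.ext_getElem
        · simp
        · intro p h1 h2
          have hp : p < k := by simp only [List.length_take, List.length_ofFn] at h1; omega
          simp only [List.getElem_take, List.getElem_ofFn, Equiv.Perm.mul_apply]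
          rw [hfix _ (Or.inl hp)]
      have e2 : ((List.ofFn fun m => v ((τ * ι ρ) m)).drop k).drop j
          = (List.ofFn fun m => v (τ m)).drop (k + j) := by
        rw [List.drop_drop]
        apply List.ext_getElem
        · simp
        · intro p h1 h2
          simp only [List.getElem_drop, List.getElem_ofFn, Equiv.Perm.mul_apply]
          rw [hfix _ (Or.inr (by simp))]
      have e3 : ((List.ofFn fun m => v ((τ * ι ρ) m)).drop k).take j
          = List.ofFn fun s => u τ (ρ s) := by
        apply List.ext_getElem
        · simp only [List.length_take, List.length_drop, List.length_ofFn]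
          omega
        · intro p h1 h2
          have hp : p < j := by simp only [List.length_ofFn] at h2; omega
          simp only [List.getElem_take, List.getElem_drop, List.getElem_ofFn,
            Equiv.Perm.mul_apply]
          have himg := Equiv.Perm.extendDomain_apply_image ρ (segEquiv k j n hkj) ⟨p, hp⟩
          have harg : (ι ρ) ⟨k + p, by omega⟩ = ⟨k + (ρ ⟨p, hp⟩).1, by have := (ρ ⟨p, hp⟩).2; omega⟩ := by
            rw [hι]
            exact himg
          rw [harg]
      rw [hF]
      simp only [hsg, e1, e2, e3]
      ring
    rw [Finset.sum_congr rfl fun ρ _ => hterm ρ, ← Finset.mul_sum]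
    have hzero := halt (u τ)
    rw [altW] at hzero
    rw [hzero, mul_zero]
  exact (mul_eq_zero.mp key).resolve_left hfac
lemma leftKill {n j : ℕ} {x : TSeries d} (hx : Hom d j x)
    (halt : ∀ u : Fin j → Fin d, altW x u = 0) (y : TSeries d) (v : Fin n → Fin d) :
    altW (mulT x y) v = 0 := by
  have h := midKill hx halt oneT y v
  rwa [oneT_mulT] at h

lemma rightKill {n j : ℕ} {x : TSeries d} (hx : Hom d j x)
    (halt : ∀ u : Fin j → Fin d, altW x u = 0) (y : TSeries d) (v : Fin n → Fin d) :
    altW (mulT y x) v = 0 := by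
  have h := midKill hx halt y oneT v
  rwa [mulT_oneT] at h

lemma lie_alt {j : ℕ} {x : TSeries d} (h : IsLieElem d j x) (hj : 3 ≤ j) :
    ∀ u : Fin j → Fin d, altW x u = 0 := by
  induction h with
  | base v => exact absurd hj (by omega)
  | @bracket a b x y hx hy ihx ihy =>
    intro u
    have hxh := IsLieElem.hom hx
    have hyh := IsLieElem.hom hy
    have ha := IsLieElem.pos hx
    have hb := IsLieElem.pos hy
    rw [altW_sub]
    by_cases hpar : Even (a * b)
    · rw [altW_mulT_comm (by omega) (by omega) hxh hyh hpar u, sub_self]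
    · rw [Nat.even_mul, not_or] at hpar
      have ha2 : a % 2 = 1 := Nat.odd_iff.mp (Nat.not_even_iff_odd.mp hpar.1)
      have hb2 : b % 2 = 1 := Nat.odd_iff.mp (Nat.not_even_iff_odd.mp hpar.2)
      have h3 : 3 ≤ a ∨ 3 ≤ b := by omega
      rcases h3 with h3 | h3
      · rw [leftKill hxh (ihx h3) y u, rightKill hxh (ihx h3) y u, sub_self]
      · rw [rightKill hyh (ihy h3) x u, leftKill hyh (ihy h3) x u, sub_self]

lemma span_alt {j : ℕ} (hj : 3 ≤ j) {x : TSeries d} (hx : x ∈ lieGradeC d j) :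
    ∀ u : Fin j → Fin d, altW x u = 0 := by
  refine Submodule.span_induction ?_ ?_ ?_ ?_ hx
  · intro y hy u; exact lie_alt hy hj u
  · intro u; exact altW_zero u
  · intro y z _ _ hy hz u; rw [altW_add, hy u, hz u, add_zero]
  · intro c y _ hy u; rw [altW_smul, hy u, mul_zero]

end Aux

/-- For `d = 2e + 1` odd and `T_i ∈ Lie^i(ℂ^d)` for
`1 ≤ i ≤ d`, the full antisymmetrization of the level-`d` signature tensor
`φ_d(T₁,…,T_d)` depends only on `T₁` and `T₂`:
`Σ_{σ ∈ S_d} sgn(σ)·σ·φ_d(T₁,T₂,T₃,…,T_d) = Σ_{σ ∈ S_d} sgn(σ)·σ·φ_d(T₁,T₂,0,…,0)`,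
where `σ` permutes the tensor factors (in coordinates, it permutes the letters
of the indexing word). -/
theorem antisymmetrization_depends_only_on_T1_T2_odd (e : ℕ)
    (T : ℕ → TSeries (2 * e + 1))
    (hT : ∀ i, 1 ≤ i → i ≤ 2 * e + 1 → T i ∈ lieGradeC (2 * e + 1) i) :
    ∀ i : Fin (2 * e + 1) → Fin (2 * e + 1),
      (∑ σ : Equiv.Perm (Fin (2 * e + 1)), ((Equiv.Perm.sign σ : ℤ) : ℂ) *
          phiC (2 * e + 1) (2 * e + 1) T (List.ofFn fun m => i (σ m))) =
      ∑ σ : Equiv.Perm (Fin (2 * e + 1)), ((Equiv.Perm.sign σ : ℤ) : ℂ) *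
          phiC (2 * e + 1) (2 * e + 1) (fun j => if j ≤ 2 then T j else 0)
            (List.ofFn fun m => i (σ m)) := by
  intro i
  have main : ∀ S : ℕ → TSeries (2 * e + 1),
      (∑ σ : Equiv.Perm (Fin (2 * e + 1)), ((Equiv.Perm.sign σ : ℤ) : ℂ) *
          phiC (2 * e + 1) (2 * e + 1) S (List.ofFn fun m => i (σ m)))
      = ∑ c : Composition (2 * e + 1), ((c.length).factorial : ℂ)⁻¹ *
          Aux.altW (prodT (c.blocks.map S)) i := by
    intro S
    simp only [phiC, Finset.sum_apply, Pi.smul_apply, smul_eq_mul, Finset.mul_sum]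
    rw [Finset.sum_comm]
    refine Finset.sum_congr rfl fun c _ => ?_
    rw [Aux.altW, Finset.mul_sum]
    refine Finset.sum_congr rfl fun σ _ => by ring
  rw [main T, main (fun j => if j ≤ 2 then T j else 0)]
  refine Finset.sum_congr rfl fun c _ => ?_
  congr 1
  by_cases hbig : ∃ b ∈ c.blocks, 3 ≤ b
  · obtain ⟨b, hbmem, hb3⟩ := hbig
    have hb1 : 1 ≤ b := c.blocks_pos hbmem
    have hbd : b ≤ 2 * e + 1 := by
      have h := List.single_le_sum (fun x _ => Nat.zero_le x) b hbmem
      rwa [c.blocks_sum] at h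
    have hmem := hT b hb1 hbd
    obtain ⟨s, t, hst⟩ := List.append_of_mem hbmem
    have hL : Aux.altW (prodT (c.blocks.map T)) i = 0 := by
      rw [hst, List.map_append, List.map_cons, Aux.prodT_append]
      show Aux.altW (mulT _ (mulT (T b) (prodT (t.map T)))) i = 0
      exact Aux.midKill (Aux.hom_span hmem) (Aux.span_alt hb3 hmem) _ _ i
    have hR : Aux.altW (prodT (c.blocks.map fun j => if j ≤ 2 then T j else 0)) i = 0 := by
      have hz : (0 : TSeries (2 * e + 1)) ∈ c.blocks.map (fun j => if j ≤ 2 then T j else 0) :=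
        List.mem_map.mpr ⟨b, hbmem, by rw [if_neg (by omega)]⟩
      rw [Aux.prodT_zero hz]
      exact Aux.altW_zero i
    rw [hL, hR]
  · push_neg at hbig
    have hmaps : c.blocks.map T = c.blocks.map (fun j => if j ≤ 2 then T j else 0) := by
      refine List.map_congr_left fun b hb => ?_
      rw [if_pos (by have := hbig b hb; omega)]
    rw [hmaps]
end

section
/- Let V be a complex vector space. The linear map g : Λ²V ⊗ V → V^{⊗3} determined by g((u∧w) ⊗ v) = (u⊗w − w⊗u)⊗v + v⊗(u⊗w − w⊗u) is injective. -/
open TensorAlgebra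

open scoped TensorProduct

set_option maxHeartbeats 1000000
set_option synthInstance.maxHeartbeats 1000000

namespace ThrallAux
noncomputable section

variable {V : Type*} [AddCommGroup V] [Module ℂ V]

lemma iM2 (u w : V) : (ExteriorAlgebra.ιMulti ℂ 2 ![u, w] : ExteriorAlgebra ℂ V) =
    ExteriorAlgebra.ι ℂ u * ExteriorAlgebra.ι ℂ w := by
  rw [ExteriorAlgebra.ιMulti_apply]
  simp [List.ofFn_succ]

/-- wedge as a bilinear map into the second exterior power -/
def w2 : V →ₗ[ℂ] V →ₗ[ℂ] (⋀[ℂ]^2 V) := LinearMap.mk₂ ℂ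
  (fun u w => ⟨ExteriorAlgebra.ιMulti ℂ 2 ![u, w],
      ExteriorAlgebra.ιMulti_range ℂ 2 ⟨![u, w], rfl⟩⟩)
  (fun m₁ m₂ n => by ext; simp [iM2, add_mul])
  (fun c m n => by ext; simp [iM2, smul_mul_assoc])
  (fun m n₁ n₂ => by ext; simp [iM2, mul_add])
  (fun c m n => by ext; simp [iM2, mul_smul_comm])

lemma w2_swap (u w : V) : w2 w u = - w2 u w := by
  ext
  simp only [w2, LinearMap.mk₂_apply, iM2]
  have := ExteriorAlgebra.ι_add_mul_swap (R := ℂ) w u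
  push_cast [Submodule.coe_neg]
  exact eq_neg_of_add_eq_zero_left this

def f3 : V →ₗ[ℂ] V →ₗ[ℂ] V →ₗ[ℂ] ((⋀[ℂ]^2 V) ⊗[ℂ] V) :=
  w2.compr₂ (TensorProduct.mk ℂ (⋀[ℂ]^2 V) V)

lemma f3_apply (u w v : V) : f3 u w v = (w2 u w) ⊗ₜ[ℂ] v := rfl

lemma f3_swap (u w v : V) : f3 w u v = - f3 u w v := by
  rw [f3_apply, f3_apply, w2_swap, TensorProduct.neg_tmul]

def M3 : (V ⊗[ℂ] V) →ₗ[ℂ] V →ₗ[ℂ] ((⋀[ℂ]^2 V) ⊗[ℂ] V) := TensorProduct.lift f3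

def N3 : V →ₗ[ℂ] (V ⊗[ℂ] V) →ₗ[ℂ] ((⋀[ℂ]^2 V) ⊗[ℂ] V) :=
  (TensorProduct.lift.equiv (RingHom.id ℂ) V V _).toLinearMap.comp f3

@[simp] lemma M3_tmul (x y z : V) : M3 (x ⊗ₜ[ℂ] y) z = f3 x y z := rfl

@[simp] lemma N3_tmul (x y z : V) : N3 x (y ⊗ₜ[ℂ] z) = f3 x y z := rfl

lemma span_w2 : Submodule.span ℂ (Set.range fun p : V × V => w2 p.1 p.2) = ⊤ := by
  apply Submodule.map_injective_of_injective (Submodule.injective_subtype (⋀[ℂ]^2 V))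
  rw [Submodule.map_span, Submodule.map_top, Submodule.range_subtype]
  have himg : ((⋀[ℂ]^2 V).subtype '' Set.range fun p : V × V => w2 p.1 p.2)
      = Set.range (ExteriorAlgebra.ιMulti ℂ 2 (M := V)) := by
    ext x
    constructor
    · rintro ⟨-, ⟨⟨u, w⟩, rfl⟩, rfl⟩
      exact ⟨![u, w], rfl⟩
    · rintro ⟨y, rfl⟩
      refine ⟨w2 (y 0) (y 1), ⟨(y 0, y 1), rfl⟩, ?_⟩
      have : y = ![y 0, y 1] := by
        funext i; fin_cases i <;> rfl
      rw [this]
      rfl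
  rw [himg, ExteriorAlgebra.ιMulti_span_fixedDegree]

variable (V) in
/-- The truncated algebra `ℂ ⊕ V ⊕ V⊗V ⊕ Λ²V⊗V`. -/
abbrev A := ℂ × V × (V ⊗[ℂ] V) × ((⋀[ℂ]^2 V) ⊗[ℂ] V)

instance : Mul (A V) := ⟨fun p q =>
  (p.1 * q.1,
   p.1 • q.2.1 + q.1 • p.2.1,
   p.1 • q.2.2.1 + q.1 • p.2.2.1 + p.2.1 ⊗ₜ[ℂ] q.2.1,
   p.1 • q.2.2.2 + q.1 • p.2.2.2 + M3 p.2.2.1 q.2.1 + N3 p.2.1 q.2.2.1)⟩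

lemma mul_def (a b : ℂ) (x x' : V) (y y' : V ⊗[ℂ] V) (t t' : (⋀[ℂ]^2 V) ⊗[ℂ] V) :
    ((a, x, y, t) * (b, x', y', t') : A V) =
    (a * b, a • x' + b • x, a • y' + b • y + x ⊗ₜ[ℂ] x',
      a • t' + b • t + M3 y x' + N3 x y') := rfl

lemma mul_def' (p q : A V) : p * q =
  (p.1 * q.1,
   p.1 • q.2.1 + q.1 • p.2.1,
   p.1 • q.2.2.1 + q.1 • p.2.2.1 + p.2.1 ⊗ₜ[ℂ] q.2.1,
   p.1 • q.2.2.2 + q.1 • p.2.2.2 + M3 p.2.2.1 q.2.1 + N3 p.2.1 q.2.2.1) := rfl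

instance : One (A V) := ⟨(1, 0, 0, 0)⟩

lemma one_def : (1 : A V) = (1, 0, 0, 0) := rfl

instance : Ring (A V) :=
  { (inferInstance : AddCommGroup (A V)) with
    mul := (· * ·)
    one := 1
    left_distrib := fun ⟨a, x, y, t⟩ ⟨b, x', y', t'⟩ ⟨c, x'', y'', t''⟩ => by
      show ((a, x, y, t) : A V) * ((b, x', y', t') + (c, x'', y'', t''))
        = (a, x, y, t) * (b, x', y', t') + (a, x, y, t) * (c, x'', y'', t'')
      simp only [Prod.mk_add_mk, mul_def, map_add, LinearMap.add_apply,
        TensorProduct.tmul_add, smul_add, mul_add]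
      refine Prod.ext ?_ (Prod.ext ?_ (Prod.ext ?_ ?_)) <;> dsimp only <;>
        first | ring1 | module
    right_distrib := fun ⟨a, x, y, t⟩ ⟨b, x', y', t'⟩ ⟨c, x'', y'', t''⟩ => by
      show (((a, x, y, t) : A V) + (b, x', y', t')) * (c, x'', y'', t'')
        = (a, x, y, t) * (c, x'', y'', t'') + (b, x', y', t') * (c, x'', y'', t'')
      simp only [Prod.mk_add_mk, mul_def, map_add, LinearMap.add_apply,
        TensorProduct.add_tmul, smul_add, add_mul]
      refine Prod.ext ?_ (Prod.ext ?_ (Prod.ext ?_ ?_)) <;> dsimp only <;>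
        first | ring1 | module
    zero_mul := fun p => by simp [mul_def', Prod.ext_iff]
    mul_zero := fun p => by simp [mul_def', Prod.ext_iff]
    one_mul := fun p => by simp [mul_def', one_def, Prod.ext_iff]
    mul_one := fun p => by simp [mul_def', one_def, Prod.ext_iff]
    mul_assoc := fun ⟨a, x, y, t⟩ ⟨b, x', y', t'⟩ ⟨c, x'', y'', t''⟩ => by
      show (((a, x, y, t) : A V) * (b, x', y', t')) * (c, x'', y'', t'')
        = (a, x, y, t) * ((b, x', y', t') * (c, x'', y'', t''))
      simp only [mul_def, map_add, map_smul, LinearMap.add_apply, LinearMap.smul_apply,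
        TensorProduct.add_tmul, TensorProduct.tmul_add, TensorProduct.smul_tmul',
        TensorProduct.tmul_smul, smul_add, smul_smul, M3_tmul, N3_tmul]
      refine Prod.ext ?_ (Prod.ext ?_ (Prod.ext ?_ ?_)) <;> dsimp only <;>
        first | ring1 | module }

instance : Algebra ℂ (A V) := Algebra.ofModule
  (fun r ⟨a, x, y, t⟩ ⟨b, x', y', t'⟩ => by
    show (r • ((a, x, y, t) : A V)) * (b, x', y', t')
      = r • ((a, x, y, t) * ((b, x', y', t') : A V))
    simp only [Prod.smul_mk, mul_def, smul_add, smul_smul, map_smul,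
      LinearMap.smul_apply, TensorProduct.smul_tmul', smul_eq_mul]
    refine Prod.ext ?_ (Prod.ext ?_ (Prod.ext ?_ ?_)) <;> dsimp only <;>
      first | ring1 | module)
  (fun r ⟨a, x, y, t⟩ ⟨b, x', y', t'⟩ => by
    show ((a, x, y, t) : A V) * (r • ((b, x', y', t') : A V))
      = r • ((a, x, y, t) * ((b, x', y', t') : A V))
    simp only [Prod.smul_mk, mul_def, smul_add, smul_smul, map_smul,
      LinearMap.smul_apply, TensorProduct.smul_tmul', TensorProduct.tmul_smul,
      smul_eq_mul]
    refine Prod.ext ?_ (Prod.ext ?_ (Prod.ext ?_ ?_)) <;> dsimp only <;>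
      first | ring1 | module)

variable (V) in
/-- Embedding of `V` into `A V`. -/
def eV : V →ₗ[ℂ] A V where
  toFun x := (0, x, 0, 0)
  map_add' x y := by simp [Prod.ext_iff]
  map_smul' c x := by simp [Prod.ext_iff]

variable (V) in
/-- Projection onto the top component of `A V`. -/
def projA : A V →ₗ[ℂ] ((⋀[ℂ]^2 V) ⊗[ℂ] V) where
  toFun p := p.2.2.2
  map_add' p q := rfl
  map_smul' c p := rfl

lemma triple1 (x y z : V) :
    ((eV V x * eV V y) * eV V z : A V) = (0, 0, 0, f3 x y z) := by
  simp [eV, mul_def', Prod.ext_iff]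

lemma triple2 (z x y : V) :
    (eV V z * (eV V x * eV V y) : A V) = (0, 0, 0, f3 z x y) := by
  simp [eV, mul_def', Prod.ext_iff]

lemma h0_apply (u w v : V) :
    projA V (TensorAlgebra.lift ℂ (eV V)
      ((ι ℂ u * ι ℂ w - ι ℂ w * ι ℂ u) * ι ℂ v +
        ι ℂ v * (ι ℂ u * ι ℂ w - ι ℂ w * ι ℂ u)))
    = f3 u w v - f3 w u v + (f3 v u w - f3 v w u) := by
  have expand : ((ι ℂ u * ι ℂ w - ι ℂ w * ι ℂ u) * ι ℂ v +
        ι ℂ v * (ι ℂ u * ι ℂ w - ι ℂ w * ι ℂ u) : TensorAlgebra ℂ V)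
      = ((ι ℂ u * ι ℂ w) * ι ℂ v - (ι ℂ w * ι ℂ u) * ι ℂ v)
        + (ι ℂ v * (ι ℂ u * ι ℂ w) - ι ℂ v * (ι ℂ w * ι ℂ u)) := by
    rw [sub_mul, mul_sub]
  rw [expand]
  simp only [map_add, map_sub, map_mul, TensorAlgebra.lift_ι_apply]
  rw [triple1, triple1, triple2, triple2]
  rfl

end
end ThrallAux

open ThrallAux in
/-- The linear map `g : Λ²V ⊗ V → V^{⊗3}` determined by
`g((u∧w) ⊗ v) = (u⊗w − w⊗u)⊗v + v⊗(u⊗w − w⊗u)` is injective.  (It is twice the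
embedding of the Thrall module `W_{(2,1)}(V)` into `V^{⊗3}`.) -/
theorem thrall_embedding_injective (V : Type*) [AddCommGroup V] [Module ℂ V]
    (g : (⋀[ℂ]^2 V) ⊗[ℂ] V →ₗ[ℂ] TensorAlgebra ℂ V)
    (hg : ∀ u w v : V,
      g ((⟨ExteriorAlgebra.ιMulti ℂ 2 ![u, w],
            ExteriorAlgebra.ιMulti_range ℂ 2 ⟨![u, w], rfl⟩⟩ : ⋀[ℂ]^2 V) ⊗ₜ[ℂ] v) =
        (ι ℂ u * ι ℂ w - ι ℂ w * ι ℂ u) * ι ℂ v +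
          ι ℂ v * (ι ℂ u * ι ℂ w - ι ℂ w * ι ℂ u)) :
    Function.Injective g := by
  classical
  set h0 : TensorAlgebra ℂ V →ₗ[ℂ] ((⋀[ℂ]^2 V) ⊗[ℂ] V) :=
    (projA V).comp (TensorAlgebra.lift ℂ (eV V)).toLinearMap with hh0
  set L : ((⋀[ℂ]^2 V) ⊗[ℂ] V) →ₗ[ℂ] ((⋀[ℂ]^2 V) ⊗[ℂ] V) := h0.comp g with hL
  have hgf : ∀ u w v : V, g (f3 u w v) =
      (ι ℂ u * ι ℂ w - ι ℂ w * ι ℂ u) * ι ℂ v +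
        ι ℂ v * (ι ℂ u * ι ℂ w - ι ℂ w * ι ℂ u) := fun u w v => hg u w v
  have hL3 : ∀ u w v : V,
      L (f3 u w v) = (2 : ℂ) • f3 u w v + f3 v u w + f3 w v u := by
    intro u w v
    have : L (f3 u w v) = h0 (g (f3 u w v)) := rfl
    rw [this, hgf u w v, hh0]
    simp only [LinearMap.comp_apply, AlgHom.toLinearMap_apply]
    rw [h0_apply u w v, f3_swap w u v, f3_swap v w u]
    module
  have Phi : ∀ z : ((⋀[ℂ]^2 V) ⊗[ℂ] V),
      L (L z) + (4 : ℂ) • z = (5 : ℂ) • L z := by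
    intro z
    induction z using TensorProduct.induction_on with
    | zero => simp
    | tmul a v =>
      have ha : a ∈ Submodule.span ℂ (Set.range fun p : V × V => w2 p.1 p.2) := by
        rw [span_w2]; trivial
      induction ha using Submodule.span_induction with
      | mem x hx =>
        obtain ⟨⟨u, w⟩, rfl⟩ := hx
        have hx1 : (w2 u w) ⊗ₜ[ℂ] v = f3 u w v := rfl
        rw [hx1, hL3 u w v, map_add, map_add, map_smul,
          hL3 u w v, hL3 v u w, hL3 w v u]
        module
      | zero => simp
      | add x y hx hy ihx ihy =>
        rw [TensorProduct.add_tmul, map_add, map_add, smul_add, smul_add,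
          ← ihx, ← ihy]
        abel
      | smul c x hx ihx =>
        have h1 : (c • x) ⊗ₜ[ℂ] v = c • (x ⊗ₜ[ℂ] v) :=
          (TensorProduct.smul_tmul' c x v).symm
        rw [h1, map_smul, map_smul, smul_comm (4 : ℂ) c, smul_comm (5 : ℂ) c,
          ← smul_add, ihx]
    | add x y ihx ihy =>
      rw [map_add, map_add, smul_add, smul_add, ← ihx, ← ihy]
      abel
  intro p q hpq
  have hd : g (p - q) = 0 := by rw [map_sub, hpq, sub_self]
  have hLd : L (p - q) = 0 := by
    rw [hL]; simp [hd]
  have h4 := Phi (p - q)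
  rw [hLd, map_zero, smul_zero, zero_add] at h4
  have hd0 : p - q = 0 := by
    have := smul_eq_zero.mp h4
    rcases this with h | h
    · exact absurd h (by norm_num)
    · exact h
  exact sub_eq_zero.mp hd0
end
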